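/- arXiv:2205.05635 — 9 statements merged into one kernel-verified Lean document; each statement's English description precedes it below -/
import Mathlib

section
/- Let X and Θ be Polish spaces. Suppose π_i : X → [0,∞) (i ∈ ℕ) are continuous functions with ∑_{i=1}^∞ π_i(x) = 1 for every x ∈ X, and let θ_i ∈ Θ (i ∈ ℕ) be fixed points (not depending on x). Define G_x = ∑_{i=1}^∞ π_i(x) · δ_{θ_i}, a Borel probability measure on Θ for each x ∈ X. Then for every bounded Borel-measurable f : Θ → ℝ and every x₀ ∈ X, lim_{x→x₀} ∫_Θ f dG_x = ∫_Θ f dG_{x₀}; that is, x ↦ G_x is continuous from X into the probability measures on Θ with the strong (setwise) topology. -/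
open MeasureTheory Filter Topology

set_option maxHeartbeats 1000000

/-- **Strong (setwise) continuity of the sample paths of a continuous parameter θDDP.**
If the weights `π i : X → [0,∞)` are continuous with `∑' i, π i x = 1` and the atoms
`θ i ∈ Θ` are fixed, then `x ↦ G x = ∑' i, π i x • δ_{θ i}` is strongly continuous:
for every bounded Borel-measurable `f : Θ → ℝ` and every `x₀`,
`∫ f dG_x → ∫ f dG_{x₀}` as `x → x₀`. -/
theorem thetaDDP_strong_continuity
    {X Θ : Type*} [TopologicalSpace X] [PolishSpace X]
    [TopologicalSpace Θ] [PolishSpace Θ] [MeasurableSpace Θ] [BorelSpace Θ]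
    (π : ℕ → X → ℝ) (θ : ℕ → Θ)
    (hπcont : ∀ i, Continuous (π i)) (hπ0 : ∀ i x, 0 ≤ π i x)
    (hπ1 : ∀ x, ∑' i, π i x = 1)
    (G : X → Measure Θ)
    (hG : ∀ x, G x = Measure.sum (fun i => ENNReal.ofReal (π i x) • Measure.dirac (θ i)))
    (f : Θ → ℝ) (hf : Measurable f) (hfb : ∃ C, ∀ t, |f t| ≤ C) (x₀ : X) :
    Tendsto (fun x => ∫ t, f t ∂(G x)) (𝓝 x₀) (𝓝 (∫ t, f t ∂(G x₀))) := by
  obtain ⟨C, hC⟩ := hfb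
  have hC0 : 0 ≤ C := (abs_nonneg _).trans (hC (θ 0))
  -- summability of the weights
  have hsum : ∀ x, Summable fun i => π i x := by
    intro x
    by_contra h
    have h0 := tsum_eq_zero_of_not_summable h
    rw [hπ1 x] at h0
    norm_num at h0
  -- summability of the integrand series
  have hgsum : ∀ x, Summable fun i => π i x * f (θ i) := by
    intro x
    refine Summable.of_norm_bounded ((hsum x).mul_left C) ?_
    intro i
    rw [norm_mul, Real.norm_eq_abs, Real.norm_eq_abs, abs_of_nonneg (hπ0 i x), mul_comm]
    exact mul_le_mul_of_nonneg_right (hC _) (hπ0 i x)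
  -- the measures are finite
  have hfin : ∀ x, IsFiniteMeasure (G x) := by
    intro x
    constructor
    rw [hG]
    rw [Measure.sum_apply _ MeasurableSet.univ]
    have : ∀ i, (ENNReal.ofReal (π i x) • Measure.dirac (θ i)) Set.univ
        = ENNReal.ofReal (π i x) := by
      intro i
      simp
    rw [tsum_congr this, ← ENNReal.ofReal_tsum_of_nonneg (fun i => hπ0 i x) (hsum x), hπ1 x]
    simp
  -- the integral formula
  have hint : ∀ x, ∫ t, f t ∂(G x) = ∑' i, π i x * f (θ i) := by
    intro x
    have := hfin x
    have hInt : Integrable f (G x) := by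
      refine ⟨hf.aestronglyMeasurable, HasFiniteIntegral.of_bounded (C := C) ?_⟩
      exact ae_of_all _ fun t => by rw [Real.norm_eq_abs]; exact hC t
    rw [hG] at hInt ⊢
    rw [integral_sum_measure hInt]
    refine tsum_congr fun i => ?_
    rw [integral_smul_measure, integral_dirac f (θ i), ENNReal.toReal_ofReal (hπ0 i x),
      smul_eq_mul]
  simp only [hint]
  -- now the series continuity
  rw [Metric.tendsto_nhds]
  intro ε hε
  set ε' := ε / (4 * (C + 1)) with hε'def
  have hε' : 0 < ε' := by positivity
  -- choose a finite set capturing most of the mass at x₀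
  have hHS : HasSum (fun i => π i x₀) 1 := by
    have := (hsum x₀).hasSum
    rwa [hπ1 x₀] at this
  have hHS' := Metric.tendsto_nhds.1 hHS ε' hε'
  obtain ⟨s, hs⟩ := hHS'.exists
  have htail₀ : 1 - ∑ i ∈ s, π i x₀ < ε' := by
    have := hs
    rw [Real.dist_eq, abs_sub_lt_iff] at this
    linarith [this.2]
  have hsumle : ∀ x, ∑ i ∈ s, π i x ≤ 1 := by
    intro x
    rw [← hπ1 x]
    exact Summable.sum_le_tsum s (fun i _ => hπ0 i x) (hsum x)
  -- tail bound: the tsum over the complement of s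
  have htailbound : ∀ x, |∑' i : ((s : Set ℕ)ᶜ : Set ℕ), π i.1 x * f (θ i.1)|
      ≤ C * (1 - ∑ i ∈ s, π i x) := by
    intro x
    have hsub : Summable fun i : ((s : Set ℕ)ᶜ : Set ℕ) => π i.1 x * f (θ i.1) :=
      (hgsum x).subtype _
    have hsubπ : Summable fun i : ((s : Set ℕ)ᶜ : Set ℕ) => π i.1 x :=
      (hsum x).subtype _
    have h1 : |∑' i : ((s : Set ℕ)ᶜ : Set ℕ), π i.1 x * f (θ i.1)|
        ≤ ∑' i : ((s : Set ℕ)ᶜ : Set ℕ), |π i.1 x * f (θ i.1)| := by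
      have hn : Summable fun i : ((s : Set ℕ)ᶜ : Set ℕ) => ‖π i.1 x * f (θ i.1)‖ := by
        simp only [Real.norm_eq_abs]; exact hsub.abs
      simpa only [Real.norm_eq_abs] using norm_tsum_le_tsum_norm hn
    have h2 : ∑' i : ((s : Set ℕ)ᶜ : Set ℕ), |π i.1 x * f (θ i.1)|
        ≤ ∑' i : ((s : Set ℕ)ᶜ : Set ℕ), C * π i.1 x := by
      refine Summable.tsum_le_tsum (fun i => ?_) hsub.abs (hsubπ.mul_left C)
      rw [abs_mul, abs_of_nonneg (hπ0 i.1 x), mul_comm]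
      exact mul_le_mul_of_nonneg_right (hC _) (hπ0 i.1 x)
    have h3 : ∑' i : ((s : Set ℕ)ᶜ : Set ℕ), C * π i.1 x
        = C * (1 - ∑ i ∈ s, π i x) := by
      rw [tsum_mul_left]
      congr 1
      have := Summable.sum_add_tsum_compl (s := s) (hsum x)
      rw [hπ1 x] at this
      linarith
    linarith
  -- continuity of the finite sums
  have hc1 : Tendsto (fun x => ∑ i ∈ s, π i x) (𝓝 x₀) (𝓝 (∑ i ∈ s, π i x₀)) := by
    exact tendsto_finset_sum s fun i _ => (hπcont i).tendsto x₀
  have hc2 : Tendsto (fun x => ∑ i ∈ s, π i x * f (θ i)) (𝓝 x₀)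
      (𝓝 (∑ i ∈ s, π i x₀ * f (θ i))) := by
    exact tendsto_finset_sum s fun i _ => ((hπcont i).tendsto x₀).mul tendsto_const_nhds
  have h1 := Metric.tendsto_nhds.1 hc1 ε' hε'
  have h2 := Metric.tendsto_nhds.1 hc2 ε' hε'
  filter_upwards [h1, h2] with x hx1 hx2
  rw [Real.dist_eq]
  -- decompose the tsums
  have hdx := Summable.sum_add_tsum_compl (s := s) (hgsum x)
  have hdx₀ := Summable.sum_add_tsum_compl (s := s) (hgsum x₀)
  rw [Real.dist_eq] at hx1 hx2
  have htx : 1 - ∑ i ∈ s, π i x < 2 * ε' := by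
    have := abs_sub_lt_iff.1 hx1
    linarith [this.2]
  have hb1 := htailbound x
  have hb2 := htailbound x₀
  have hnn1 : 0 ≤ 1 - ∑ i ∈ s, π i x := by linarith [hsumle x]
  have hnn2 : 0 ≤ 1 - ∑ i ∈ s, π i x₀ := by linarith [hsumle x₀]
  have key : |∑' i, π i x * f (θ i) - ∑' i, π i x₀ * f (θ i)|
      ≤ |∑ i ∈ s, π i x * f (θ i) - ∑ i ∈ s, π i x₀ * f (θ i)|
        + |∑' i : ((s : Set ℕ)ᶜ : Set ℕ), π i.1 x * f (θ i.1)|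
        + |∑' i : ((s : Set ℕ)ᶜ : Set ℕ), π i.1 x₀ * f (θ i.1)| := by
    rw [← hdx, ← hdx₀]
    have := abs_sub_abs_le_abs_sub (∑ i ∈ s, π i x * f (θ i))
      (∑ i ∈ s, π i x₀ * f (θ i))
    calc |(∑ i ∈ s, π i x * f (θ i) + ∑' i : ((s : Set ℕ)ᶜ : Set ℕ), π i.1 x * f (θ i.1))
          - (∑ i ∈ s, π i x₀ * f (θ i) + ∑' i : ((s : Set ℕ)ᶜ : Set ℕ), π i.1 x₀ * f (θ i.1))|
        ≤ |∑ i ∈ s, π i x * f (θ i) - ∑ i ∈ s, π i x₀ * f (θ i)|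
          + |∑' i : ((s : Set ℕ)ᶜ : Set ℕ), π i.1 x * f (θ i.1)
            - ∑' i : ((s : Set ℕ)ᶜ : Set ℕ), π i.1 x₀ * f (θ i.1)| := by
          have := abs_add_le (∑ i ∈ s, π i x * f (θ i) - ∑ i ∈ s, π i x₀ * f (θ i))
            (∑' i : ((s : Set ℕ)ᶜ : Set ℕ), π i.1 x * f (θ i.1)
              - ∑' i : ((s : Set ℕ)ᶜ : Set ℕ), π i.1 x₀ * f (θ i.1))
          calc _ = |(∑ i ∈ s, π i x * f (θ i) - ∑ i ∈ s, π i x₀ * f (θ i))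
              + (∑' i : ((s : Set ℕ)ᶜ : Set ℕ), π i.1 x * f (θ i.1)
                - ∑' i : ((s : Set ℕ)ᶜ : Set ℕ), π i.1 x₀ * f (θ i.1))| := by ring_nf
            _ ≤ _ := this
      _ ≤ _ := by
          have := abs_sub (∑' i : ((s : Set ℕ)ᶜ : Set ℕ), π i.1 x * f (θ i.1))
            (∑' i : ((s : Set ℕ)ᶜ : Set ℕ), π i.1 x₀ * f (θ i.1))
          linarith [abs_sub_abs_le_abs_sub
            (∑' i : ((s : Set ℕ)ᶜ : Set ℕ), π i.1 x * f (θ i.1))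
            (∑' i : ((s : Set ℕ)ᶜ : Set ℕ), π i.1 x₀ * f (θ i.1)),
            abs_sub_le_iff.1 (le_refl |(∑' i : ((s : Set ℕ)ᶜ : Set ℕ), π i.1 x * f (θ i.1))
              - ∑' i : ((s : Set ℕ)ᶜ : Set ℕ), π i.1 x₀ * f (θ i.1)|)]
  have hCtx : C * (1 - ∑ i ∈ s, π i x) ≤ C * (2 * ε') :=
    mul_le_mul_of_nonneg_left htx.le hC0
  have hCt0 : C * (1 - ∑ i ∈ s, π i x₀) ≤ C * ε' :=
    mul_le_mul_of_nonneg_left htail₀.le hC0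
  have hfinal : |∑' i, π i x * f (θ i) - ∑' i, π i x₀ * f (θ i)|
      < ε' + C * (2 * ε') + C * ε' := by
    have := key
    linarith
  have : ε' + C * (2 * ε') + C * ε' ≤ ε' * (4 * (C + 1)) := by nlinarith
  have hεeq : ε' * (4 * (C + 1)) = ε := by
    rw [hε'def]
    field_simp
  linarith
end

section
/- Let X and Θ be Polish spaces. Suppose π_i : X → [0,∞) (i ∈ ℕ) are continuous functions with ∑_{i=1}^∞ π_i(x) = 1 for every x ∈ X, and θ_i : X → Θ (i ∈ ℕ) are continuous functions. Define G_x = ∑_{i=1}^∞ π_i(x) · δ_{θ_i(x)}. Let x₀ ∈ X and suppose that for every bounded Borel-measurable f : Θ → ℝ, lim_{x→x₀} ∫_Θ f dG_x = ∫_Θ f dG_{x₀} (i.e., x ↦ G_x is strongly continuous at x₀). Then there exist an open neighborhood U ⊂ X of x₀ and an index i ∈ ℕ such that θ_i is constant on U. -/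
open MeasureTheory Filter Topology

/-- **Strong continuity of a DDP at a point forces an atom process to be locally constant.**
If `G x = ∑' i, π i x • δ_{θ i x}` with continuous weights and atoms, and `x ↦ G x` is
strongly continuous at `x₀` (the integral of every bounded Borel-measurable `f` converges),
then there exist an open neighborhood `U` of `x₀` and an index `i` such that `θ i` is
constant on `U`. -/
theorem ddp_strong_continuity_forces_constant_atom
    {X Θ : Type*} [TopologicalSpace X] [PolishSpace X]
    [TopologicalSpace Θ] [PolishSpace Θ] [MeasurableSpace Θ] [BorelSpace Θ]
    (π : ℕ → X → ℝ) (θ : ℕ → X → Θ)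
    (hπcont : ∀ i, Continuous (π i)) (hπ0 : ∀ i x, 0 ≤ π i x)
    (hπ1 : ∀ x, ∑' i, π i x = 1)
    (hθcont : ∀ i, Continuous (θ i))
    (G : X → Measure Θ)
    (hG : ∀ x, G x = Measure.sum (fun i => ENNReal.ofReal (π i x) • Measure.dirac (θ i x)))
    (x₀ : X)
    (hstrong : ∀ f : Θ → ℝ, Measurable f → (∃ C, ∀ t, |f t| ≤ C) →
      Tendsto (fun x => ∫ t, f t ∂(G x)) (𝓝 x₀) (𝓝 (∫ t, f t ∂(G x₀)))) :
    ∃ U : Set X, IsOpen U ∧ x₀ ∈ U ∧ ∃ i : ℕ, ∃ c : Θ, ∀ x ∈ U, θ i x = c := by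
  classical
  letI := TopologicalSpace.upgradeIsCompletelyMetrizable Θ
  -- summability of the weights
  have hsum : ∀ x, Summable fun i => π i x := by
    intro x
    by_contra h
    have h1 := hπ1 x
    rw [tsum_eq_zero_of_not_summable h] at h1
    norm_num at h1
  -- an index with positive weight at x₀
  have hex : ∃ i, 0 < π i x₀ := by
    by_contra h
    push_neg at h
    have hz : ∀ i, π i x₀ = 0 := fun i => le_antisymm (h i) (hπ0 i x₀)
    have h1 := hπ1 x₀
    simp [hz] at h1
  obtain ⟨i₀, hp⟩ := hex
  set t₀ : Θ := θ i₀ x₀ with ht₀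
  set p : ℝ := π i₀ x₀ with hpdef
  -- the weight function for the mass at t₀
  set w : X → ℕ → ℝ := fun x i => if θ i x = t₀ then π i x else 0 with hw
  have hwnn : ∀ x i, 0 ≤ w x i := by
    intro x i; simp only [hw]; split
    · exact hπ0 i x
    · exact le_refl _
  have hwle : ∀ x i, w x i ≤ π i x := by
    intro x i; simp only [hw]; split
    · exact le_refl _
    · exact hπ0 i x
  have hwsum : ∀ x, Summable (w x) :=
    fun x => Summable.of_nonneg_of_le (hwnn x) (hwle x) (hsum x)
  set m : X → ℝ := fun x => ∑' i, w x i with hm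
  -- the integral of the indicator of {t₀} equals m
  have hms : MeasurableSet ({t₀} : Set Θ) := measurableSet_singleton _
  have hmval : ∀ x, ∫ t, Set.indicator {t₀} (1 : Θ → ℝ) t ∂(G x) = m x := by
    intro x
    rw [MeasureTheory.integral_indicator_one hms]
    have hGx : G x {t₀} = ENNReal.ofReal (m x) := by
      rw [hG x, Measure.sum_apply _ hms, hm]
      rw [ENNReal.ofReal_tsum_of_nonneg (hwnn x) (hwsum x)]
      refine tsum_congr fun i => ?_
      rw [Measure.smul_apply, Measure.dirac_apply' _ hms, smul_eq_mul]
      simp only [hw, Set.indicator_apply, Set.mem_singleton_iff]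
      by_cases hi : θ i x = t₀ <;> simp [hi]
    rw [measureReal_def, hGx, ENNReal.toReal_ofReal (tsum_nonneg (hwnn x))]
  -- strong continuity gives continuity of m at x₀
  have htendsto : Tendsto m (𝓝 x₀) (𝓝 (m x₀)) := by
    have hb : ∃ C, ∀ t, |Set.indicator {t₀} (1 : Θ → ℝ) t| ≤ C := by
      refine ⟨1, fun t => ?_⟩
      by_cases ht : t ∈ ({t₀} : Set Θ) <;> simp [Set.indicator_apply, ht]
    have := hstrong (Set.indicator {t₀} (1 : Θ → ℝ))
      ((measurable_const (a := (1:ℝ))).indicator hms) hb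
    simpa only [hmval] using this
  -- choose N
  obtain ⟨N, hNi₀, hN2⟩ : ∃ N, i₀ < N ∧ 1 - p/8 < ∑ i ∈ Finset.range N, π i x₀ := by
    have h1 := (hsum x₀).hasSum.tendsto_sum_nat
    rw [hπ1 x₀] at h1
    have h2 : ∀ᶠ n in atTop, 1 - p/8 < ∑ i ∈ Finset.range n, π i x₀ :=
      h1.eventually (eventually_gt_nhds (by linarith))
    obtain ⟨N, hN⟩ := (h2.and (eventually_gt_atTop i₀)).exists
    exact ⟨N, hN.2, hN.1⟩
  have hN0 : 0 < N := lt_of_le_of_lt (Nat.zero_le _) hNi₀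
  -- the four eventual conditions
  have E1 : ∀ᶠ x in 𝓝 x₀, m x₀ - p/8 < m x :=
    htendsto.eventually (eventually_gt_nhds (by linarith))
  have E2 : ∀ᶠ x in 𝓝 x₀, (∑ i ∈ Finset.range N, π i x₀) - p/8 <
      ∑ i ∈ Finset.range N, π i x := by
    have hc : Continuous fun x => ∑ i ∈ Finset.range N, π i x :=
      continuous_finset_sum _ fun i _ => hπcont i
    exact (hc.tendsto x₀).eventually (eventually_gt_nhds (by linarith))
  have E3 : ∀ᶠ x in 𝓝 x₀, ∀ i ∈ Finset.range N, θ i x₀ ≠ t₀ → θ i x ≠ t₀ := by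
    rw [eventually_all_finset]
    intro i _
    by_cases hi : θ i x₀ = t₀
    · exact Eventually.of_forall fun x h => absurd hi h
    · exact ((hθcont i).continuousAt.eventually_ne hi).mono fun x h _ => h
  have E4 : ∀ᶠ x in 𝓝 x₀, ∀ i ∈ Finset.range N, π i x < π i x₀ + p/(8*N) := by
    rw [eventually_all_finset]
    intro i _
    refine ((hπcont i).tendsto x₀).eventually (eventually_lt_nhds ?_)
    have : (0:ℝ) < p/(8*N) := by positivity
    linarith
  have E := (E1.and (E2.and (E3.and E4)))
  rw [eventually_nhds_iff] at E
  obtain ⟨U, hU, hUopen, hx₀U⟩ := E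
  refine ⟨U, hUopen, hx₀U, ?_⟩
  by_contra hcon
  push_neg at hcon
  obtain ⟨x₁, hx₁U, hx₁⟩ := hcon i₀ t₀
  obtain ⟨h1, h2, h3, h4⟩ := hU x₁ hx₁U
  -- bound the finite part of m x₁
  have hi₀mem : i₀ ∈ Finset.range N := Finset.mem_range.mpr hNi₀
  have hA : (∑ i ∈ Finset.range N, w x₀ i) ≤ m x₀ :=
    Summable.sum_le_tsum _ (fun i _ => hwnn x₀ i) (hwsum x₀)
  have hF : (∑ i ∈ Finset.range N, w x₁ i) ≤
      (∑ i ∈ Finset.range N, w x₀ i) + p/8 - p := by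
    have hstep : ∀ i ∈ Finset.range N,
        w x₁ i ≤ w x₀ i + p/(8*N) - (if i = i₀ then p else 0) := by
      intro i hiN
      by_cases hii : i = i₀
      · subst hii
        have hz : w x₁ i = 0 := by simp only [hw]; rw [if_neg hx₁]
        have hw0 : w x₀ i = p := by
          simp [hw, ← hpdef, ht₀]
        rw [hz, hw0, if_pos rfl]
        have hpos : (0:ℝ) < p/(8*N) := by positivity
        linarith
      · rw [if_neg hii]
        by_cases hi : θ i x₀ = t₀
        · have hw0 : w x₀ i = π i x₀ := by simp only [hw]; rw [if_pos hi]
          have : w x₁ i ≤ π i x₁ := hwle x₁ i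
          have h4i := h4 i hiN
          rw [hw0]; linarith
        · have : θ i x₁ ≠ t₀ := h3 i hiN hi
          have hw1 : w x₁ i = 0 := by simp only [hw]; rw [if_neg this]
          have hw0 : w x₀ i = 0 := by simp only [hw]; rw [if_neg hi]
          rw [hw1, hw0]
          have : (0:ℝ) < p/(8*N) := by positivity
          linarith
    have := Finset.sum_le_sum hstep
    have hconst : (∑ _i ∈ Finset.range N, p/(8*N)) = p/8 := by
      rw [Finset.sum_const, Finset.card_range, nsmul_eq_mul]
      field_simp
    have hite : (∑ i ∈ Finset.range N, if i = i₀ then p else 0) = p := by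
      rw [Finset.sum_ite_eq' (Finset.range N) i₀ (fun _ => p), if_pos hi₀mem]
    calc (∑ i ∈ Finset.range N, w x₁ i)
        ≤ ∑ i ∈ Finset.range N, (w x₀ i + p/(8*N) - (if i = i₀ then p else 0)) := this
      _ = (∑ i ∈ Finset.range N, w x₀ i) + (∑ _i ∈ Finset.range N, p/(8*N))
            - (∑ i ∈ Finset.range N, if i = i₀ then p else 0) := by
          rw [Finset.sum_sub_distrib, Finset.sum_add_distrib]
      _ = (∑ i ∈ Finset.range N, w x₀ i) + p/8 - p := by rw [hconst, hite]
  -- bound the tail of m x₁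
  have hπsplit : (∑ i ∈ Finset.range N, π i x₁) + ∑' i, π (i + N) x₁ = 1 := by
    rw [Summable.sum_add_tsum_nat_add N (hsum x₁), hπ1 x₁]
  have hwsplit : (∑ i ∈ Finset.range N, w x₁ i) + ∑' i, w x₁ (i + N) = m x₁ := by
    rw [Summable.sum_add_tsum_nat_add N (hwsum x₁)]
  have hT : (∑' i, w x₁ (i + N)) ≤ ∑' i, π (i + N) x₁ := by
    refine Summable.tsum_le_tsum (fun i => hwle x₁ (i + N)) ?_ ?_
    · exact (summable_nat_add_iff N).mpr (hwsum x₁)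
    · exact (summable_nat_add_iff N).mpr (hsum x₁)
  -- conclude
  have htail : (∑' i, π (i + N) x₁) < p/4 := by
    have : (∑ i ∈ Finset.range N, π i x₀) - p/8 < ∑ i ∈ Finset.range N, π i x₁ := h2
    linarith
  linarith
end

section
/- Let (Ω, F, ℙ) be a probability space and X, Θ Polish spaces. For each i ∈ ℕ let V_i : X × Ω → [0,1] be a stochastic process and θ_i : Ω → Θ a random variable; define stick-breaking weights π_i(x,ω) = V_i(x,ω)·∏_{j<i}(1 − V_j(x,ω)), and assume that for ℙ-a.e. ω and every x ∈ X, ∑_{i=1}^∞ π_i(x,ω) = 1 and G_x^ω = ∑_{i=1}^∞ π_i(x,ω) δ_{θ_i(ω)} is a Borel probability measure on Θ. Assume: (1) for each i, the sample paths x ↦ V_i(x,ω) are ℙ-a.s. continuous; (2) for every ε > 0, every continuous h : X → [0,1] and every compact K ⊂ X, ℙ({ ω : sup_{x∈K} |V_1(x,ω) − h(x)| < ε }) > 0, and the analogous events for distinct indices i are independent with the same law; (3) the θ_i are i.i.d. with common law G⁰ having full support on Θ, and (θ_i)_i is independent of the V-processes. Then for every weakly continuous P⁰ : X → P(Θ),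 every n ∈ ℕ, all ε_1,…,ε_n > 0, all bounded continuous f_1,…,f_n : Θ → ℝ and every compact K ⊂ X, the event { ω ∈ Ω : sup_{x∈K} |∫_Θ f_i dG_x^ω − ∫_Θ f_i dP⁰_x| < ε_i for all i ∈ {1,…,n} } has positive probability. -/
open MeasureTheory ProbabilityTheory Filter Topology

lemma thetaDDP_aux_prod_sub (m : ℕ) (a b : ℕ → ℝ)
    (ha : ∀ k, k < m → a k ∈ Set.Icc (0:ℝ) 1) (hb : ∀ k, k < m → b k ∈ Set.Icc (0:ℝ) 1) :
    |∏ k ∈ Finset.range m, a k - ∏ k ∈ Finset.range m, b k|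
      ≤ ∑ k ∈ Finset.range m, |a k - b k| := by
  induction m with
  | zero => simp
  | succ m ih =>
    have ham := ha m (Nat.lt_succ_self m)
    have hbm := hb m (Nat.lt_succ_self m)
    have ha' : ∀ k, k < m → a k ∈ Set.Icc (0:ℝ) 1 := fun k hk => ha k (hk.trans (Nat.lt_succ_self m))
    have hb' : ∀ k, k < m → b k ∈ Set.Icc (0:ℝ) 1 := fun k hk => hb k (hk.trans (Nat.lt_succ_self m))
    have hpa : ∏ k ∈ Finset.range m, a k ∈ Set.Icc (0:ℝ) 1 := by
      constructor
      · exact Finset.prod_nonneg fun k hk => (ha' k (Finset.mem_range.1 hk)).1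
      · exact Finset.prod_le_one (fun k hk => (ha' k (Finset.mem_range.1 hk)).1)
          (fun k hk => (ha' k (Finset.mem_range.1 hk)).2)
    have hpb : ∏ k ∈ Finset.range m, b k ∈ Set.Icc (0:ℝ) 1 := by
      constructor
      · exact Finset.prod_nonneg fun k hk => (hb' k (Finset.mem_range.1 hk)).1
      · exact Finset.prod_le_one (fun k hk => (hb' k (Finset.mem_range.1 hk)).1)
          (fun k hk => (hb' k (Finset.mem_range.1 hk)).2)
    rw [Finset.prod_range_succ, Finset.prod_range_succ, Finset.sum_range_succ]
    have key : (∏ k ∈ Finset.range m, a k) * a m - (∏ k ∈ Finset.range m, b k) * b m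
        = ((∏ k ∈ Finset.range m, a k) - (∏ k ∈ Finset.range m, b k)) * a m
          + (∏ k ∈ Finset.range m, b k) * (a m - b m) := by ring
    rw [key]
    calc |((∏ k ∈ Finset.range m, a k) - (∏ k ∈ Finset.range m, b k)) * a m
          + (∏ k ∈ Finset.range m, b k) * (a m - b m)|
        ≤ |((∏ k ∈ Finset.range m, a k) - (∏ k ∈ Finset.range m, b k)) * a m|
          + |(∏ k ∈ Finset.range m, b k) * (a m - b m)| := abs_add_le _ _
      _ ≤ |(∏ k ∈ Finset.range m, a k) - (∏ k ∈ Finset.range m, b k)| * 1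
          + 1 * |a m - b m| := by
          rw [abs_mul, abs_mul]
          gcongr
          · rw [abs_of_nonneg ham.1]; exact ham.2
          · rw [abs_of_nonneg hpb.1]; exact hpb.2
      _ ≤ (∑ k ∈ Finset.range m, |a k - b k|) + |a m - b m| := by
          rw [mul_one, one_mul]
          gcongr
          exact ih ha' hb'

lemma thetaDDP_aux_sum_stick (m : ℕ) (V : ℕ → ℝ) :
    ∑ k ∈ Finset.range m, V k * ∏ l ∈ Finset.range k, (1 - V l)
      = 1 - ∏ k ∈ Finset.range m, (1 - V k) := by
  induction m with
  | zero => simp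
  | succ m ih =>
    rw [Finset.sum_range_succ, Finset.prod_range_succ, ih]
    ring

lemma thetaDDP_aux_sum_div_mod (N M : ℕ) (F : ℕ → ℕ → ℝ) :
    ∑ k ∈ Finset.range (N * M), F (k / M) (k % M)
      = ∑ r ∈ Finset.range N, ∑ j ∈ Finset.range M, F r j := by
  rcases Nat.eq_zero_or_pos M with hM | hM
  · subst hM; simp
  induction N with
  | zero => simp
  | succ N ih =>
    have h1 : (N + 1) * M = N * M + M := by ring
    rw [h1, Finset.sum_range_succ, ← ih]
    rw [Finset.range_eq_Ico, ← Finset.sum_Ico_consecutive _ (Nat.zero_le (N * M))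
      (Nat.le_add_right (N * M) M), ← Finset.range_eq_Ico]
    congr 1
    rw [Finset.sum_Ico_eq_sum_range]
    have h2 : N * M + M - N * M = M := by omega
    rw [h2]
    apply Finset.sum_congr rfl
    intro j hj
    have hjM : j < M := Finset.mem_range.1 hj
    have hdiv : (N * M + j) / M = N := by
      rw [Nat.add_comm, Nat.mul_comm, Nat.add_mul_div_left _ _ hM, Nat.div_eq_of_lt hjM]
      omega
    have hmod : (N * M + j) % M = j := by
      rw [Nat.add_comm, Nat.mul_comm, Nat.add_mul_mod_self_left, Nat.mod_eq_of_lt hjM]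
    rw [hdiv, hmod]

lemma thetaDDP_aux_sum_list {α : Type*} (l : List α) (g : α → ℝ) (d : α) :
    ∑ j ∈ Finset.range l.length, g (l.getD j d) = (l.map g).sum := by
  induction l with
  | nil => simp
  | cons a l ih =>
    rw [List.length_cons, Finset.sum_range_succ']
    simp only [List.getD_cons_succ, List.getD_cons_zero, List.map_cons, List.sum_cons]
    rw [ih]; ring
lemma thetaDDP_discrete_approx {Θ : Type*} [TopologicalSpace Θ] [MeasurableSpace Θ]
    [BorelSpace Θ] [Nonempty Θ]
    (μ : Measure Θ) [IsProbabilityMeasure μ] (n : ℕ) (f : Fin n → Θ → ℝ)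
    (hfc : ∀ i, Continuous (f i)) (C : ℝ) (hfb : ∀ i t, |f i t| ≤ C)
    (δ : ℝ) (hδ : 0 < δ) :
    ∃ (M : ℕ) (a : ℕ → ℝ) (t : ℕ → Θ), 0 < M ∧ (∀ j, 0 ≤ a j) ∧
      (∑ j ∈ Finset.range M, a j) = 1 ∧
      ∀ i, |∑ j ∈ Finset.range M, a j * f i (t j) - ∫ s, f i s ∂μ| ≤ δ := by
  classical
  set F : Θ → (Fin n → ℝ) := fun s i => f i s with hF
  have hFc : Continuous F := continuous_pi fun i => hfc i
  have hFm : AEStronglyMeasurable F μ := hFc.aestronglyMeasurable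
  have hFb : ∀ s, ‖F s‖ ≤ |C| := by
    intro s
    rw [pi_norm_le_iff_of_nonneg (abs_nonneg C)]
    intro i
    exact (Real.norm_eq_abs _).le.trans ((hfb i s).trans (le_abs_self C))
  have hInt : Integrable F μ := by
    refine Integrable.mono' (integrable_const |C|) hFm ?_
    exact ae_of_all _ hFb
  set sHull : Set (Fin n → ℝ) := closure (convexHull ℝ (Set.range F)) with hsHull
  have hmean : (∫ s, F s ∂μ) ∈ sHull := by
    refine Convex.integral_mem ((convex_convexHull ℝ _).closure) isClosed_closure ?_ hInt
    exact ae_of_all _ fun s => subset_closure (subset_convexHull ℝ _ (Set.mem_range_self s))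
  obtain ⟨y, hy, hdist⟩ := Metric.mem_closure_iff.1 hmean δ hδ
  rw [convexHull_eq] at hy
  obtain ⟨ι, tF, w, z, hw0, hw1, hz, hcm⟩ := hy
  have htFne : tF.Nonempty := by
    rcases Finset.eq_empty_or_nonempty tF with h | h
    · exfalso; rw [h] at hw1; simp at hw1
    · exact h
  set l : List ι := tF.toList with hl
  have hlne : l ≠ [] := by
    rw [hl, Ne, Finset.toList_eq_nil]
    exact Finset.nonempty_iff_ne_empty.1 htFne
  set d : ι := l.head hlne with hd
  have hdtF : d ∈ tF := by
    rw [← Finset.mem_toList, ← hl, hd]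
    exact List.head_mem hlne
  have hmemtF : ∀ j : ℕ, l.getD j d ∈ tF := by
    intro j
    rcases Nat.lt_or_ge j l.length with hj | hj
    · rw [← Finset.mem_toList, ← hl]
      rw [List.getD_eq_getElem l d hj]
      exact List.getElem_mem _
    · rw [List.getD_eq_default l d hj]
      exact hdtF
  -- atoms
  have hatom : ∀ e : ι, e ∈ tF → ∃ s : Θ, F s = z e := fun e he => hz e he
  set σat : ι → Θ := fun e => if h : ∃ s : Θ, F s = z e then h.choose else Classical.arbitrary Θ
    with hσ
  have hσat : ∀ e ∈ tF, F (σat e) = z e := by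
    intro e he
    have h : ∃ s : Θ, F s = z e := hatom e he
    simp only [hσ, dif_pos h]
    exact h.choose_spec
  set M : ℕ := l.length with hM
  refine ⟨M, fun j => w (l.getD j d), fun j => σat (l.getD j d), ?_, ?_, ?_, ?_⟩
  · -- 0 < M
    rw [hM]
    rcases htFne with ⟨e, he⟩
    have : e ∈ l := by rw [hl, Finset.mem_toList]; exact he
    exact List.length_pos_iff.2 hlne
  · intro j; exact hw0 _ (hmemtF j)
  · rw [hM, thetaDDP_aux_sum_list l w d]
    rw [hl, Finset.sum_map_toList]
    exact hw1
  · intro i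
    have hyeq : y i = ∑ e ∈ tF, w e * z e i := by
      rw [← hcm, Finset.centerMass_eq_of_sum_1 _ _ hw1, Finset.sum_apply]
      simp [smul_eq_mul]
    have hsum : ∑ j ∈ Finset.range M, w (l.getD j d) * f i (σat (l.getD j d)) = y i := by
      rw [hM, thetaDDP_aux_sum_list l (fun e => w e * f i (σat e)) d]
      have hcong : ∀ e ∈ l, w e * f i (σat e) = w e * (z e) i := by
        intro e he
        have hetF : e ∈ tF := by rwa [hl, Finset.mem_toList] at he
        rw [← hσat e hetF]
      rw [List.map_congr_left hcong, hl, Finset.sum_map_toList, hyeq]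
    rw [hsum]
    have hmeani : (∫ s, F s ∂μ) i = ∫ s, f i s ∂μ := by
      have := (ContinuousLinearMap.proj (R := ℝ) (φ := fun _ : Fin n => ℝ) i).integral_comp_comm hInt
      simpa using this.symm
    rw [← hmeani]
    have : |y i - (∫ s, F s ∂μ) i| ≤ ‖y - ∫ s, F s ∂μ‖ := by
      have := norm_le_pi_norm (y - ∫ s, F s ∂μ) i
      simpa [Real.norm_eq_abs] using this
    refine this.trans ?_
    rw [← dist_eq_norm]
    exact (dist_comm y _ ▸ hdist).le
lemma thetaDDP_cover {X : Type*} [MetricSpace X] {K : Set X} (hK : IsCompact K)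
    (hKne : K.Nonempty) (n : ℕ) (g : Fin n → X → ℝ) (hg : ∀ i, Continuous (g i))
    (δ : ℝ) (hδ : 0 < δ) :
    ∃ (N : ℕ) (xs : ℕ → X) (ρ : ℕ → ℝ), 0 < N ∧
      (∀ x ∈ K, ∃ r, r < N ∧ x ∈ Metric.ball (xs r) (ρ r)) ∧
      (∀ r, ∀ y ∈ Metric.ball (xs r) (ρ r), ∀ i, |g i y - g i (xs r)| < δ) := by
  classical
  have hball : ∀ x : X, ∃ ρx : ℝ, 0 < ρx ∧
      ∀ y ∈ Metric.ball x ρx, ∀ i, |g i y - g i (x)| < δ := by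
    intro x
    have hW : IsOpen {y : X | ∀ i, |g i y - g i x| < δ} := by
      have : {y : X | ∀ i, |g i y - g i x| < δ}
          = ⋂ i : Fin n, (fun y => |g i y - g i x|) ⁻¹' Set.Iio δ := by
        ext y; simp [Set.mem_iInter]
      rw [this]
      exact isOpen_iInter_of_finite fun i =>
        (((hg i).sub continuous_const).abs.isOpen_preimage _ isOpen_Iio)
    have hxW : x ∈ {y : X | ∀ i, |g i y - g i x| < δ} := by simp [hδ]
    rcases Metric.isOpen_iff.1 hW x hxW with ⟨ρx, hρx, hsub⟩
    exact ⟨ρx, hρx, fun y hy i => hsub hy i⟩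
  choose ρf hρf hρball using hball
  obtain ⟨tF, htFK, hcov⟩ := hK.elim_nhds_subcover (fun x => Metric.ball x (ρf x))
    (fun x _ => Metric.ball_mem_nhds x (hρf x))
  set l : List X := tF.toList with hl
  have hlne : l ≠ [] := by
    rw [hl, Ne, Finset.toList_eq_nil]
    intro h
    rcases hKne with ⟨x, hx⟩
    have := hcov hx
    rw [h] at this
    simp at this
  set d : X := l.head hlne with hd
  refine ⟨l.length, fun r => l.getD r d, fun r => ρf (l.getD r d), ?_, ?_, ?_⟩
  · exact List.length_pos_iff.2 hlne
  · intro x hx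
    have := hcov hx
    rw [Set.mem_iUnion₂] at this
    obtain ⟨e, he, hxe⟩ := this
    have hel : e ∈ l := by rw [hl, Finset.mem_toList]; exact he
    obtain ⟨r, hr, hrget⟩ := List.getElem_of_mem hel
    refine ⟨r, hr, ?_⟩
    show x ∈ Metric.ball (l.getD r d) (ρf (l.getD r d))
    rw [List.getD_eq_getElem l d hr, hrget]
    exact hxe
  · intro r y hy i
    exact hρball _ y hy i

lemma thetaDDP_construct {X : Type*} [MetricSpace X]
    {Θ : Type*} [TopologicalSpace Θ] [MeasurableSpace Θ] [BorelSpace Θ] [Nonempty Θ]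
    {K : Set X} (hK : IsCompact K) (hKne : K.Nonempty)
    (n : ℕ) (f : Fin n → Θ → ℝ) (hfc : ∀ i, Continuous (f i))
    (C : ℝ) (hC : 1 ≤ C) (hfb : ∀ i t, |f i t| ≤ C)
    (P0 : X → Measure Θ) (hP0prob : ∀ x, IsProbabilityMeasure (P0 x))
    (hP0w : ∀ i, Continuous fun x => ∫ t, f i t ∂(P0 x))
    (ε₀ : ℝ) (hε₀ : 0 < ε₀) (hε₁ : ε₀ ≤ 1) :
    ∃ (m : ℕ) (v : ℕ → X → ℝ) (t : ℕ → Θ), 0 < m ∧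
      (∀ k, Continuous (v k)) ∧ (∀ k x, v k x ∈ Set.Icc (0:ℝ) 1) ∧
      (∀ x ∈ K, ∀ i, |(∑ k ∈ Finset.range m,
          (v k x * ∏ l ∈ Finset.range k, (1 - v l x)) * f i (t k))
            - ∫ s, f i s ∂(P0 x)| ≤ ε₀ / 2) ∧
      (∀ x ∈ K, ∏ k ∈ Finset.range m, (1 - v k x) ≤ ε₀ / (8 * C)) := by
  classical
  have hC0 : (0:ℝ) < C := lt_of_lt_of_le one_pos hC
  set g : Fin n → X → ℝ := fun i x => ∫ s, f i s ∂(P0 x) with hg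
  have hgb : ∀ i x, |g i x| ≤ C := by
    intro i x
    have h1 : ‖∫ s, f i s ∂(P0 x)‖ ≤ C * ((P0 x) Set.univ).toReal := by
      apply norm_integral_le_of_norm_le_const
      exact ae_of_all _ fun s => (Real.norm_eq_abs _).le.trans (hfb i s)
    rw [measure_univ] at h1
    simpa [Real.norm_eq_abs] using h1
  set δ₁ : ℝ := ε₀ / 16 with hδ₁
  have hδ₁pos : 0 < δ₁ := by positivity
  set η : ℝ := ε₀ / (8 * C) with hη
  have hηpos : 0 < η := by positivity
  have hηle : η ≤ 1 / 8 := by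
    rw [hη, div_le_div_iff₀ (by positivity) (by norm_num)]
    nlinarith
  -- cover
  obtain ⟨N, xs, ρ, hN, hcovmem, hballprop⟩ :=
    thetaDDP_cover hK hKne n g (fun i => hP0w i) δ₁ hδ₁pos
  -- discrete approximations
  have hdisc : ∀ r : ℕ, ∃ (M : ℕ) (a : ℕ → ℝ) (t : ℕ → Θ), 0 < M ∧ (∀ j, 0 ≤ a j) ∧
      (∑ j ∈ Finset.range M, a j) = 1 ∧
      ∀ i, |∑ j ∈ Finset.range M, a j * f i (t j) - ∫ s, f i s ∂(P0 (xs r))| ≤ δ₁ := by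
    intro r
    haveI := hP0prob (xs r)
    exact thetaDDP_discrete_approx (P0 (xs r)) n f hfc C hfb δ₁ hδ₁pos
  choose Ms as ts hMs0 has0 hassum hasapprox using hdisc
  set M : ℕ := (Finset.range N).sup Ms + 1 with hM
  have hM0 : 0 < M := Nat.succ_pos _
  have hMsle : ∀ r, r < N → Ms r ≤ M := by
    intro r hr
    exact le_trans (Finset.le_sup (Finset.mem_range.2 hr)) (Nat.le_succ _)
  set a' : ℕ → ℕ → ℝ := fun r j => if j < Ms r then as r j else 0 with ha'
  have ha'0 : ∀ r j, 0 ≤ a' r j := by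
    intro r j
    by_cases h : j < Ms r <;> simp [ha', h, has0 r j]
  have ha'restrict : ∀ (r : ℕ) (u : ℕ → ℝ), r < N →
      ∑ j ∈ Finset.range M, a' r j * u j = ∑ j ∈ Finset.range (Ms r), as r j * u j := by
    intro r u hr
    rw [← Finset.sum_subset (Finset.range_subset_range.2 (hMsle r hr))]
    · apply Finset.sum_congr rfl
      intro j hj
      rw [ha']
      simp [Finset.mem_range.1 hj]
    · intro j _ hj
      rw [Finset.mem_range, not_lt] at hj
      simp [ha', Nat.not_lt.2 hj]
  have ha'sum : ∀ r, r < N → ∑ j ∈ Finset.range M, a' r j = 1 := by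
    intro r hr
    have := ha'restrict r (fun _ => 1) hr
    simpa [hassum r] using this
  have ha'approx : ∀ r, r < N → ∀ i,
      |∑ j ∈ Finset.range M, a' r j * f i (ts r j) - g i (xs r)| ≤ δ₁ := by
    intro r hr i
    rw [ha'restrict r (fun j => f i (ts r j)) hr]
    exact hasapprox r i
  -- partition-of-unity style weights
  set φ : ℕ → X → ℝ := fun r x => max (ρ r - dist x (xs r)) 0 with hφ
  have hφc : ∀ r, Continuous (φ r) := fun r =>
    (continuous_const.sub (continuous_id.dist continuous_const)).max continuous_const
  have hφ0 : ∀ r x, 0 ≤ φ r x := fun r x => le_max_right _ _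
  have hφpos : ∀ r x, dist x (xs r) < ρ r → 0 < φ r x := by
    intro r x h
    rw [hφ]
    simp only [lt_max_iff]
    left; linarith
  have hφball : ∀ r x, φ r x ≠ 0 → dist x (xs r) < ρ r := by
    intro r x h
    by_contra hcon
    push_neg at hcon
    apply h
    rw [hφ]
    simp only [max_eq_right_iff]
    linarith
  set den : X → ℝ := fun x => (∑ r ∈ Finset.range N, φ r x) + Metric.infDist x K with hden
  have hdenc : Continuous den :=
    (continuous_finset_sum _ fun r _ => hφc r).add (Metric.continuous_infDist_pt K)
  have hden0 : ∀ x, 0 < den x := by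
    intro x
    by_cases hx : x ∈ K
    · obtain ⟨r, hr, hxr⟩ := hcovmem x hx
      rw [Metric.mem_ball] at hxr
      have h1 : φ r x ≤ ∑ r ∈ Finset.range N, φ r x :=
        Finset.single_le_sum (fun r _ => hφ0 r x) (Finset.mem_range.2 hr)
      have h2 := hφpos r x hxr
      have h3 := Metric.infDist_nonneg (s := K) (x := x)
      rw [hden]; dsimp only; linarith
    · have h1 : 0 < Metric.infDist x K := ((hK.isClosed).notMem_iff_infDist_pos hKne).1 hx
      have h2 : 0 ≤ ∑ r ∈ Finset.range N, φ r x := Finset.sum_nonneg fun r _ => hφ0 r x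
      rw [hden]; dsimp only; linarith
  set W : ℕ → X → ℝ := fun r x => φ r x / den x with hW
  have hWc : ∀ r, Continuous (W r) := fun r => (hφc r).div hdenc fun x => (hden0 x).ne'
  have hW0 : ∀ r x, 0 ≤ W r x := fun r x => div_nonneg (hφ0 r x) (hden0 x).le
  have hWsum_le : ∀ x, ∑ r ∈ Finset.range N, W r x ≤ 1 := by
    intro x
    rw [hW]
    dsimp only
    rw [← Finset.sum_div]
    rw [div_le_one (hden0 x)]
    rw [hden]
    dsimp only
    exact le_add_of_nonneg_right Metric.infDist_nonneg
  have hWsum_eq : ∀ x ∈ K, ∑ r ∈ Finset.range N, W r x = 1 := by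
    intro x hx
    have h1 : Metric.infDist x K = 0 := Metric.infDist_zero_of_mem hx
    have h2 : den x = ∑ r ∈ Finset.range N, φ r x := by
      rw [hden]; dsimp only; rw [h1, add_zero]
    rw [hW]
    dsimp only
    rw [← Finset.sum_div, ← h2, div_self (hden0 x).ne']
  have hWball : ∀ r x, W r x ≠ 0 → dist x (xs r) < ρ r := by
    intro r x h
    apply hφball r x
    intro hcon
    apply h
    rw [hW]; dsimp only; rw [hcon, zero_div]
  -- final weights
  set m : ℕ := N * M with hm
  have hm0 : 0 < m := Nat.mul_pos hN hM0
  set c : ℕ → X → ℝ := fun k x => (1 - η) * (W (k / M) x * a' (k / M) (k % M)) with hc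
  have hη1 : η < 1 := lt_of_le_of_lt hηle (by norm_num)
  have hc0 : ∀ k x, 0 ≤ c k x := fun k x =>
    mul_nonneg (by linarith) (mul_nonneg (hW0 _ x) (ha'0 _ _))
  have hcc : ∀ k, Continuous (fun x => c k x) := fun k =>
    continuous_const.mul ((hWc _).mul continuous_const)
  set S : ℕ → X → ℝ := fun k x => ∑ l ∈ Finset.range k, c l x with hS
  have hSm : ∀ x, S m x = (1 - η) * ∑ r ∈ Finset.range N, W r x *
      (∑ j ∈ Finset.range M, a' r j) := by
    intro x
    rw [hS]
    dsimp only
    rw [hm]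
    rw [thetaDDP_aux_sum_div_mod N M (fun r j => (1 - η) * (W r x * a' r j))]
    simp only [Finset.mul_sum]
    all_goals exact Finset.sum_congr rfl fun r _ => Finset.sum_congr rfl fun j _ => by ring
  have hSmle : ∀ x, S m x ≤ 1 - η := by
    intro x
    rw [hSm x]
    have h1 : ∑ r ∈ Finset.range N, W r x * (∑ j ∈ Finset.range M, a' r j)
        ≤ ∑ r ∈ Finset.range N, W r x * 1 := by
      apply Finset.sum_le_sum
      intro r hr
      have := ha'sum r (Finset.mem_range.1 hr)
      rw [this]
    have h2 : ∑ r ∈ Finset.range N, W r x * 1 ≤ 1 := by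
      simpa using hWsum_le x
    have h3 := mul_le_mul_of_nonneg_left (h1.trans h2) (show (0:ℝ) ≤ 1 - η by linarith)
    linarith
  have hSmK : ∀ x ∈ K, S m x = 1 - η := by
    intro x hx
    rw [hSm x]
    have h1 : ∑ r ∈ Finset.range N, W r x * (∑ j ∈ Finset.range M, a' r j)
        = ∑ r ∈ Finset.range N, W r x := by
      apply Finset.sum_congr rfl
      intro r hr
      rw [ha'sum r (Finset.mem_range.1 hr), mul_one]
    rw [h1, hWsum_eq x hx, mul_one]
  have hSle : ∀ x, ∀ k, k ≤ m → S k x ≤ 1 - η := by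
    intro x k hk
    have h1 : S k x ≤ S m x := by
      rw [hS]
      exact Finset.sum_le_sum_of_subset_of_nonneg (Finset.range_subset_range.2 hk)
        (fun l _ _ => hc0 l x)
    exact h1.trans (hSmle x)
  have hSden : ∀ x, ∀ k, k ≤ m → η ≤ 1 - S k x := by
    intro x k hk
    have := hSle x k hk
    linarith
  set v : ℕ → X → ℝ := fun k => if k < m then (fun x => c k x / (1 - S k x)) else (fun _ => 0)
    with hv
  have hvfun : ∀ k, k < m → v k = fun x => c k x / (1 - S k x) := by
    intro k hk; rw [hv]; simp [hk]
  have hvfun0 : ∀ k, ¬ k < m → v k = fun _ => 0 := by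
    intro k hk; rw [hv]; simp [hk]
  have hvapp : ∀ k x, k < m → v k x = c k x / (1 - S k x) := by
    intro k x hk; rw [hvfun k hk]
  have hvc : ∀ k, Continuous (v k) := by
    intro k
    by_cases h : k < m
    · rw [hvfun k h]
      apply (hcc k).div
      · exact continuous_const.sub (continuous_finset_sum _ fun l _ => hcc l)
      · intro x
        have := hSden x k h.le
        intro hcon
        rw [hcon] at this
        linarith
    · rw [hvfun0 k h]
      exact continuous_const
  have hv01 : ∀ k x, v k x ∈ Set.Icc (0:ℝ) 1 := by
    intro k x
    by_cases h : k < m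
    · rw [hvapp k x h]
      have hd : 0 < 1 - S k x := lt_of_lt_of_le hηpos (hSden x k h.le)
      constructor
      · exact div_nonneg (hc0 k x) hd.le
      · rw [div_le_one hd]
        have h1 : S (k+1) x ≤ 1 - η := hSle x (k+1) h
        have h2 : S (k+1) x = S k x + c k x := by
          rw [hS]; exact Finset.sum_range_succ _ k
        linarith
    · rw [hv]; simp [h]
  have hprodid : ∀ x, ∀ k, k ≤ m →
      ∏ l ∈ Finset.range k, (1 - v l x) = 1 - S k x := by
    intro x k
    induction k with
    | zero => intro _; simp [hS]
    | succ k ih =>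
      intro hk
      have hkm : k < m := hk
      have hk' : k ≤ m := hkm.le
      rw [Finset.prod_range_succ, ih hk']
      have hd : 0 < 1 - S k x := lt_of_lt_of_le hηpos (hSden x k hk')
      have h2 : S (k+1) x = S k x + c k x := by
        rw [hS]; exact Finset.sum_range_succ _ k
      rw [hvapp k x hkm]
      field_simp
      linarith
  have hweight : ∀ x, ∀ k, k < m → v k x * ∏ l ∈ Finset.range k, (1 - v l x) = c k x := by
    intro x k hk
    rw [hprodid x k hk.le, hvapp k x hk]
    have hd : 0 < 1 - S k x := lt_of_lt_of_le hηpos (hSden x k hk.le)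
    field_simp
  refine ⟨m, v, fun k => ts (k / M) (k % M), hm0, hvc, hv01, ?_, ?_⟩
  · -- approximation bound
    intro x hx i
    have hstep1 : ∑ k ∈ Finset.range m,
        (v k x * ∏ l ∈ Finset.range k, (1 - v l x)) * f i (ts (k / M) (k % M))
        = ∑ k ∈ Finset.range m, c k x * f i (ts (k / M) (k % M)) := by
      apply Finset.sum_congr rfl
      intro k hk
      rw [hweight x k (Finset.mem_range.1 hk)]
    set A : ℕ → ℝ := fun r => ∑ j ∈ Finset.range M, a' r j * f i (ts r j) with hA
    have hstep2 : ∑ k ∈ Finset.range m, c k x * f i (ts (k / M) (k % M))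
        = (1 - η) * ∑ r ∈ Finset.range N, W r x * A r := by
      rw [hm]
      rw [thetaDDP_aux_sum_div_mod N M (fun r j => (1 - η) * (W r x * a' r j) * f i (ts r j))]
      simp only [hA, Finset.mul_sum]
      all_goals exact Finset.sum_congr rfl fun r _ => Finset.sum_congr rfl fun j _ => by ring
    set T : ℝ := ∑ r ∈ Finset.range N, W r x * A r with hT
    have hAbound : ∀ r, r < N → |A r - g i (xs r)| ≤ δ₁ := fun r hr => ha'approx r hr i
    have hTsub : |T - g i x| ≤ 2 * δ₁ := by
      have hgx : g i x = ∑ r ∈ Finset.range N, W r x * g i x := by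
        rw [← Finset.sum_mul, hWsum_eq x hx, one_mul]
      rw [hT, hgx, ← Finset.sum_sub_distrib]
      refine (Finset.abs_sum_le_sum_abs _ _).trans ?_
      have : ∀ r ∈ Finset.range N, |W r x * A r - W r x * g i x| ≤ W r x * (2 * δ₁) := by
        intro r hr
        rw [← mul_sub, abs_mul, abs_of_nonneg (hW0 r x)]
        by_cases hWr : W r x = 0
        · rw [hWr]; simp
        · apply mul_le_mul_of_nonneg_left _ (hW0 r x)
          have hball := hWball r x hWr
          have h1 : |g i x - g i (xs r)| < δ₁ :=
            hballprop r x (Metric.mem_ball.2 hball) i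
          have h2 := hAbound r (Finset.mem_range.1 hr)
          calc |A r - g i x| = |(A r - g i (xs r)) + (g i (xs r) - g i x)| := by ring_nf
            _ ≤ |A r - g i (xs r)| + |g i (xs r) - g i x| := abs_add_le _ _
            _ ≤ δ₁ + δ₁ := by
                refine add_le_add h2 ?_
                rw [abs_sub_comm]
                exact h1.le
            _ = 2 * δ₁ := by ring
      refine (Finset.sum_le_sum this).trans ?_
      rw [← Finset.sum_mul]
      have := hWsum_le x
      nlinarith [hWsum_le x]
    have hTabs : |T| ≤ 2 * C := by
      rw [hT]
      refine (Finset.abs_sum_le_sum_abs _ _).trans ?_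
      have : ∀ r ∈ Finset.range N, |W r x * A r| ≤ W r x * (2 * C) := by
        intro r hr
        rw [abs_mul, abs_of_nonneg (hW0 r x)]
        apply mul_le_mul_of_nonneg_left _ (hW0 r x)
        have h1 := hAbound r (Finset.mem_range.1 hr)
        have h2 := hgb i (xs r)
        have hδ₁C : δ₁ ≤ C := by
          rw [hδ₁]
          nlinarith
        calc |A r| ≤ |A r - g i (xs r)| + |g i (xs r)| := by
              have := abs_add_le (A r - g i (xs r)) (g i (xs r))
              simpa using this
          _ ≤ δ₁ + C := add_le_add h1 h2
          _ ≤ 2 * C := by linarith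
      refine (Finset.sum_le_sum this).trans ?_
      rw [← Finset.sum_mul]
      nlinarith [hWsum_le x, Finset.sum_nonneg (fun r (_ : r ∈ Finset.range N) => hW0 r x)]
    rw [hstep1, hstep2]
    have hfinal : |(1 - η) * T - g i x| ≤ |T - g i x| + η * |T| := by
      have h1 : (1 - η) * T - g i x = (T - g i x) - η * T := by ring
      rw [h1]
      refine (abs_sub _ _).trans ?_
      rw [abs_mul, abs_of_nonneg hηpos.le]
    refine hfinal.trans ?_
    have h2 : η * |T| ≤ η * (2 * C) := mul_le_mul_of_nonneg_left hTabs hηpos.le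
    have h3 : η * (2 * C) = ε₀ / 4 := by
      rw [hη]
      field_simp
      ring
    have h4 : 2 * δ₁ = ε₀ / 8 := by rw [hδ₁]; ring
    calc |T - g i x| + η * |T| ≤ 2 * δ₁ + η * (2 * C) := add_le_add hTsub h2
      _ = ε₀ / 8 + ε₀ / 4 := by rw [h4, h3]
      _ ≤ ε₀ / 2 := by linarith
  · -- tail bound
    intro x hx
    rw [hprodid x m le_rfl, hSmK x hx]
    rw [hη]
    ring_nf
    linarith

lemma thetaDDP_integral_G {Θ : Type*} [TopologicalSpace Θ] [MeasurableSpace Θ]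
    [BorelSpace Θ] [T2Space Θ]
    (p : ℕ → ℝ) (hp0 : ∀ k, 0 ≤ p k) (hp1 : (∑' k, p k) = 1) (θat : ℕ → Θ)
    (f : Θ → ℝ) (hfc : Continuous f) (C : ℝ) (hfb : ∀ t, |f t| ≤ C) :
    ∫ t, f t ∂(Measure.sum (fun k => ENNReal.ofReal (p k) • Measure.dirac (θat k)))
      = ∑' k, p k * f (θat k) := by
  have hsummable : Summable p := by
    by_contra hcon
    rw [tsum_eq_zero_of_not_summable hcon] at hp1
    norm_num at hp1
  set μ : Measure Θ := Measure.sum (fun k => ENNReal.ofReal (p k) • Measure.dirac (θat k)) with hμ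
  haveI : IsProbabilityMeasure μ := by
    constructor
    rw [hμ, Measure.sum_apply _ MeasurableSet.univ]
    simp only [Measure.smul_apply, measure_univ, smul_eq_mul, mul_one]
    rw [← ENNReal.ofReal_tsum_of_nonneg hp0 hsummable, hp1, ENNReal.ofReal_one]
  have hInt : Integrable f μ := by
    refine Integrable.mono' (integrable_const |C|) hfc.aestronglyMeasurable ?_
    exact ae_of_all _ fun t => (Real.norm_eq_abs _).le.trans ((hfb t).trans (le_abs_self C))
  rw [hμ, integral_sum_measure hInt]
  apply tsum_congr
  intro k
  rw [integral_smul_measure, integral_dirac f (θat k), ENNReal.toReal_ofReal (hp0 k),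
    smul_eq_mul]

set_option maxHeartbeats 2000000

/-- **Compact-weak support of the single-atoms DDP (Theorem 6 for the θDDP).**
Assume the weight processes have a.s. continuous sample paths, can uniformly approximate
any continuous function `h : X → [0,1]` on compacts with positive probability (these
approximation events being independent across distinct indices and identically
distributed), and the atoms are i.i.d. with common law `G⁰` of full support, independent
of the weights.  Then for every weakly continuous `P⁰ : X → P(Θ)`, every compact `K`,
bounded continuous `f₁,…,f_n` and tolerances `ε₁,…,ε_n`, the event
`sup_{x∈K} |∫ f_i dG_x − ∫ f_i dP⁰_x| < ε_i` for all `i` has positive probability. -/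
theorem thetaDDP_compact_weak_support
    {Ω : Type*} [MeasurableSpace Ω] (P : Measure Ω) [IsProbabilityMeasure P]
    {X Θ : Type*} [TopologicalSpace X] [PolishSpace X]
    [TopologicalSpace Θ] [PolishSpace Θ] [MeasurableSpace Θ] [BorelSpace Θ]
    (V : ℕ → X → Ω → ℝ) (θ : ℕ → Ω → Θ) (hθmeas : ∀ i, Measurable (θ i))
    (hV01 : ∀ i x ω, V i x ω ∈ Set.Icc (0:ℝ) 1)
    (π : ℕ → X → Ω → ℝ)
    (hπ : ∀ i x ω, π i x ω = V i x ω * ∏ j ∈ Finset.range i, (1 - V j x ω))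
    (G : X → Ω → Measure Θ)
    (hG : ∀ᵐ ω ∂P, ∀ x, (∑' i, π i x ω) = 1 ∧
      G x ω = Measure.sum (fun i => ENNReal.ofReal (π i x ω) • Measure.dirac (θ i ω)))
    -- (1) a.s. continuous sample paths of the weight processes
    (hVcont : ∀ i, ∀ᵐ ω ∂P, Continuous (fun x => V i x ω))
    -- (2) uniform approximation events have positive probability, ...
    (hVpos : ∀ ε : ℝ, 0 < ε → ∀ h : X → ℝ, Continuous h →
      (∀ x, h x ∈ Set.Icc (0:ℝ) 1) → ∀ K : Set X, IsCompact K →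
      0 < P {ω | ∀ x ∈ K, |V 0 x ω - h x| < ε})
    -- ... are identically distributed across indices, ...
    (hVsame : ∀ (i : ℕ) (ε : ℝ) (h : X → ℝ) (K : Set X),
      P {ω | ∀ x ∈ K, |V i x ω - h x| < ε} = P {ω | ∀ x ∈ K, |V 0 x ω - h x| < ε})
    -- ... and are mutually independent for distinct indices
    (hVindep : ∀ (εs : ℕ → ℝ) (hs : ℕ → X → ℝ) (Ks : ℕ → Set X),
      iIndepSet (fun i => {ω | ∀ x ∈ Ks i, |V i x ω - hs i x| < εs i}) P)
    -- (3) the atoms are i.i.d. with common law `G0` of full support, independent of `V`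
    (G0 : Measure Θ) [IsProbabilityMeasure G0]
    (hθiid : iIndepFun (m := fun _ : ℕ => (inferInstance : MeasurableSpace Θ)) θ P)
    (hθlaw : ∀ i, Measure.map (θ i) P = G0)
    (hG0supp : ∀ U : Set Θ, IsOpen U → U.Nonempty → 0 < G0 U)
    (hVθindep : IndepFun (fun ω => fun p : ℕ × X => V p.1 p.2 ω)
      (fun ω => fun i : ℕ => θ i ω) P)
    -- weakly continuous target
    (P0 : X → Measure Θ) (hP0prob : ∀ x, IsProbabilityMeasure (P0 x))
    (hP0w : ∀ f : Θ → ℝ, Continuous f → (∃ C, ∀ t, |f t| ≤ C) →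
      Continuous fun x => ∫ t, f t ∂(P0 x))
    (n : ℕ) (ε : Fin n → ℝ) (hε : ∀ i, 0 < ε i)
    (f : Fin n → Θ → ℝ) (hfc : ∀ i, Continuous (f i)) (hfb : ∀ i, ∃ C, ∀ t, |f i t| ≤ C)
    (K : Set X) (hK : IsCompact K) :
    0 < P {ω | ∀ i, ∀ x ∈ K, |∫ t, f i t ∂(G x ω) - ∫ t, f i t ∂(P0 x)| < ε i} := by
  classical
  rcases Nat.eq_zero_or_pos n with hn | hn
  · subst hn
    have huniv : {ω | ∀ i : Fin 0, ∀ x ∈ K,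
        |∫ t, f i t ∂(G x ω) - ∫ t, f i t ∂(P0 x)| < ε i} = Set.univ :=
      Set.eq_univ_of_forall fun ω i => i.elim0
    rw [huniv, measure_univ]
    exact zero_lt_one
  rcases Set.eq_empty_or_nonempty K with hKe | hKne
  · subst hKe
    have huniv : {ω | ∀ i : Fin n, ∀ x ∈ (∅ : Set X),
        |∫ t, f i t ∂(G x ω) - ∫ t, f i t ∂(P0 x)| < ε i} = Set.univ :=
      Set.eq_univ_of_forall fun ω i x hx => absurd hx (Set.notMem_empty x)
    rw [huniv, measure_univ]
    exact zero_lt_one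
  have hΘne : Nonempty Θ := by
    by_contra hcon
    rw [not_nonempty_iff] at hcon
    have h1 := measure_univ (μ := G0)
    rw [Set.univ_eq_empty_iff.2 hcon, measure_empty] at h1
    norm_num at h1
  letI := TopologicalSpace.upgradeIsCompletelyMetrizable X
  haveI : T2Space Θ := inferInstance
  -- a common bound for the fᵢ
  choose Cb hCb using hfb
  set C : ℝ := 1 + ∑ i : Fin n, |Cb i| with hCdef
  have hC1 : 1 ≤ C :=
    le_add_of_nonneg_right (Finset.sum_nonneg fun i _ => abs_nonneg _)
  have hC0 : (0:ℝ) < C := lt_of_lt_of_le one_pos hC1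
  have hfbC : ∀ i t, |f i t| ≤ C := by
    intro i t
    refine (hCb i t).trans ((le_abs_self _).trans ?_)
    have h1 : |Cb i| ≤ ∑ j : Fin n, |Cb j| :=
      Finset.single_le_sum (fun j _ => abs_nonneg (Cb j)) (Finset.mem_univ i)
    linarith
  -- a common tolerance
  haveI hFinNe : Nonempty (Fin n) := ⟨⟨0, hn⟩⟩
  set ε₀ : ℝ := min 1 (Finset.univ.inf' Finset.univ_nonempty ε) with hε₀def
  have hε₀pos : 0 < ε₀ :=
    lt_min one_pos ((Finset.lt_inf'_iff _).2 fun i _ => hε i)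
  have hε₀le1 : ε₀ ≤ 1 := min_le_left _ _
  have hε₀lei : ∀ i, ε₀ ≤ ε i := fun i =>
    (min_le_right _ _).trans (Finset.inf'_le _ (Finset.mem_univ i))
  -- deterministic construction
  obtain ⟨m, v, tt, hm0, hvc, hv01, happrox, htail⟩ :=
    thetaDDP_construct hK hKne n f hfc C hC1 hfbC P0 hP0prob
      (fun i => hP0w (f i) (hfc i) ⟨C, fun t => hfbC i t⟩) ε₀ hε₀pos hε₀le1
  -- neighborhoods of atoms
  set ρ : ℝ := ε₀ / 8 with hρdef
  have hρpos : 0 < ρ := by positivity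
  set U : ℕ → Set Θ := fun k => {s | ∀ i, |f i s - f i (tt k)| < ρ} with hU
  have hUopen : ∀ k, IsOpen (U k) := by
    intro k
    have hrw : U k = ⋂ i : Fin n, (fun s => |f i s - f i (tt k)|) ⁻¹' Set.Iio ρ := by
      ext s; simp [hU, Set.mem_iInter]
    rw [hrw]
    exact isOpen_iInter_of_finite fun i =>
      (((hfc i).sub continuous_const).abs.isOpen_preimage _ isOpen_Iio)
  have hUmem : ∀ k, tt k ∈ U k := by intro k; simp [hU, hρpos]
  have hUpos : ∀ k, 0 < G0 (U k) := fun k => hG0supp (U k) (hUopen k) ⟨tt k, hUmem k⟩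
  -- tolerance for the weights
  set δ₂ : ℝ := ε₀ / (8 * C * (m * (m+1) + m + 1)) with hδ₂def
  have hδ₂pos : 0 < δ₂ := by positivity
  -- countable dense subset of K
  obtain ⟨cD, hcDK, hcDcount, hcDdense⟩ := hK.isSeparable.exists_countable_dense_subset
  -- events
  set A : ℕ → Set Ω := fun j => {ω | ∀ x ∈ K, |V j x ω - v j x| < δ₂} with hA
  set Sset : Set ((ℕ × X) → ℝ) := ⋂ j ∈ Finset.range m, ⋃ kk : ℕ, ⋂ y ∈ cD,
      (fun u => u (j, y)) ⁻¹' (Metric.closedBall (v j y) (δ₂ - 1/(kk+1))) with hSset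
  have hSmeas : MeasurableSet Sset := by
    rw [hSset]
    refine MeasurableSet.biInter (Finset.range m).countable_toSet fun j _ => ?_
    refine MeasurableSet.iUnion fun kk => ?_
    refine MeasurableSet.biInter hcDcount fun y _ => ?_
    exact (measurable_pi_apply (j, y)) measurableSet_closedBall
  set Tset : Set (ℕ → Θ) := ⋂ j ∈ Finset.range m, (fun u => u j) ⁻¹' (U j) with hTset
  have hTmeas : MeasurableSet Tset := by
    rw [hTset]
    refine MeasurableSet.biInter (Finset.range m).countable_toSet fun j _ => ?_
    exact (measurable_pi_apply j) (hUopen j).measurableSet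
  set Φ : Ω → (ℕ × X) → ℝ := fun ω => fun p : ℕ × X => V p.1 p.2 ω with hΦ
  set Ψ : Ω → ℕ → Θ := fun ω => fun i : ℕ => θ i ω with hΨ
  -- membership translation for Sset
  have hSmem : ∀ ω, ω ∈ Φ ⁻¹' Sset ↔ ∀ j, j < m →
      ∃ kk : ℕ, ∀ y ∈ cD, |V j y ω - v j y| ≤ δ₂ - 1/(kk+1) := by
    intro ω
    rw [Set.mem_preimage, hSset]
    simp only [Set.mem_iInter, Set.mem_iUnion, Set.mem_preimage, Metric.mem_closedBall,
      Finset.mem_range, Real.dist_eq, hΦ]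
  -- direction: A-events imply Sset (given continuity)
  have hStoA : ∀ ω, (∀ j : ℕ, Continuous fun x => V j x ω) → ω ∈ Φ ⁻¹' Sset →
      ∀ j, j < m → ∀ x ∈ K, |V j x ω - v j x| < δ₂ := by
    intro ω hcont hS j hj x hx
    obtain ⟨kk, hkk⟩ := (hSmem ω).1 hS j hj
    have hFc : Continuous fun y => |V j y ω - v j y| := ((hcont j).sub (hvc j)).abs
    have hclosed : IsClosed {y | |V j y ω - v j y| ≤ δ₂ - 1/(kk+1)} :=
      isClosed_le hFc continuous_const
    have hsub : cD ⊆ {y | |V j y ω - v j y| ≤ δ₂ - 1/(kk+1)} := fun y hy => hkk y hy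
    have hxcl : x ∈ closure cD := hcDdense hx
    have hxin : x ∈ {y | |V j y ω - v j y| ≤ δ₂ - 1/(kk+1)} :=
      (hclosed.closure_subset_iff.2 hsub) hxcl
    have hkkpos : (0:ℝ) < 1/(kk+1) := by positivity
    have := hxin
    simp only [Set.mem_setOf_eq] at this
    linarith
  have hAtoS : ∀ ω, (∀ j : ℕ, Continuous fun x => V j x ω) →
      (∀ j, j < m → ∀ x ∈ K, |V j x ω - v j x| < δ₂) → ω ∈ Φ ⁻¹' Sset := by
    intro ω hcont hAll
    rw [hSmem]
    intro j hj
    have hFc : Continuous fun y => |V j y ω - v j y| := ((hcont j).sub (hvc j)).abs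
    obtain ⟨xstar, hxstarK, hmax⟩ := hK.exists_isMaxOn hKne hFc.continuousOn
    have hlt : |V j xstar ω - v j xstar| < δ₂ := hAll j hj xstar hxstarK
    obtain ⟨kk, hkk⟩ := exists_nat_one_div_lt (show 0 < δ₂ - |V j xstar ω - v j xstar| by linarith)
    refine ⟨kk, fun y hy => ?_⟩
    have h1 : |V j y ω - v j y| ≤ |V j xstar ω - v j xstar| := hmax (hcDK hy)
    have h2 : (1:ℝ)/(kk+1) < δ₂ - |V j xstar ω - v j xstar| := by
      simpa using hkk
    linarith
  -- membership translation for Tset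
  have hTmem : ∀ ω, ω ∈ Ψ ⁻¹' Tset ↔ ∀ j, j < m → θ j ω ∈ U j := by
    intro ω
    rw [Set.mem_preimage, hTset]
    simp only [Set.mem_iInter, Set.mem_preimage, Finset.mem_range, hΨ]
  -- positivity of the A-block
  set hs : ℕ → X → ℝ := fun j => if j < m then v j else fun _ => 0 with hhs
  set Ks : ℕ → Set X := fun j => if j < m then K else ∅ with hKs
  set B : ℕ → Set Ω := fun j => {ω | ∀ x ∈ Ks j, |V j x ω - hs j x| < (fun _ : ℕ => δ₂) j}
    with hB
  have hBA : ∀ j, j < m → B j = A j := by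
    intro j hj
    rw [hB, hA]
    simp only [hKs, hhs, if_pos hj]
  have hPA : P (⋂ j ∈ Finset.range m, A j) = ∏ j ∈ Finset.range m, P (A j) := by
    have hind := hVindep (fun _ => δ₂) hs Ks
    rw [iIndepSet_iff] at hind
    have hmeasgen : ∀ j, j ∈ Finset.range m →
        MeasurableSet[MeasurableSpace.generateFrom {B j}] (B j) :=
      fun j _ => MeasurableSpace.measurableSet_generateFrom rfl
    have h1 := hind (Finset.range m) hmeasgen
    have h2 : (⋂ j ∈ Finset.range m, B j) = ⋂ j ∈ Finset.range m, A j :=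
      Set.iInter₂_congr fun j hj => hBA j (Finset.mem_range.1 hj)
    have h3 : ∏ j ∈ Finset.range m, P (B j) = ∏ j ∈ Finset.range m, P (A j) :=
      Finset.prod_congr rfl fun j hj => by rw [hBA j (Finset.mem_range.1 hj)]
    rw [h2, h3] at h1
    exact h1
  have hPAj : ∀ j, j < m → 0 < P (A j) := by
    intro j hj
    rw [hA]
    have h1 := hVsame j δ₂ (v j) K
    rw [h1]
    exact hVpos δ₂ hδ₂pos (v j) (hvc j) (fun x => hv01 j x) K hK
  have hPApos : 0 < P (⋂ j ∈ Finset.range m, A j) := by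
    rw [hPA]
    exact CanonicallyOrderedAdd.prod_pos.2 fun j hj => hPAj j (Finset.mem_range.1 hj)
  -- null sets
  have hVcontall : ∀ᵐ ω ∂P, ∀ j : ℕ, Continuous fun x => V j x ω := ae_all_iff.2 hVcont
  have hGood := hG.and hVcontall
  set Z : Set Ω := {ω | ¬ ((∀ x, (∑' i, π i x ω) = 1 ∧
      G x ω = Measure.sum (fun i => ENNReal.ofReal (π i x ω) • Measure.dirac (θ i ω))) ∧
      (∀ j : ℕ, Continuous fun x => V j x ω))} with hZ
  have hZ0 : P Z = 0 := by
    rw [hZ]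
    exact ae_iff.1 hGood
  -- positivity of P (Φ⁻¹ Sset)
  have hPS : 0 < P (Φ ⁻¹' Sset) := by
    have hsub : (⋂ j ∈ Finset.range m, A j) ⊆ (Φ ⁻¹' Sset) ∪ Z := by
      intro ω hω
      by_cases hcont : ∀ j : ℕ, Continuous fun x => V j x ω
      · left
        refine hAtoS ω hcont fun j hj x hx => ?_
        have := Set.mem_iInter₂.1 hω j (Finset.mem_range.2 hj)
        exact this x hx
      · right
        rw [hZ]
        intro hcon
        exact hcont hcon.2
    calc (0 : ENNReal) < P (⋂ j ∈ Finset.range m, A j) := hPApos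
      _ ≤ P ((Φ ⁻¹' Sset) ∪ Z) := measure_mono hsub
      _ ≤ P (Φ ⁻¹' Sset) + P Z := measure_union_le _ _
      _ = P (Φ ⁻¹' Sset) := by rw [hZ0, add_zero]
  -- positivity of P (Ψ⁻¹ Tset)
  have hTeq : Ψ ⁻¹' Tset = ⋂ j ∈ Finset.range m, θ j ⁻¹' U j := by
    ext ω
    rw [hTmem ω]
    simp [Set.mem_iInter]
  have hPT : 0 < P (Ψ ⁻¹' Tset) := by
    rw [hTeq]
    have h1 := hθiid.measure_inter_preimage_eq_mul (Finset.range m)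
      (sets := U) (fun j _ => (hUopen j).measurableSet)
    rw [h1]
    refine CanonicallyOrderedAdd.prod_pos.2 fun j _ => ?_
    have h2 : P (θ j ⁻¹' U j) = G0 (U j) := by
      rw [← hθlaw j, Measure.map_apply (hθmeas j) (hUopen j).measurableSet]
    rw [h2]
    exact hUpos j
  -- cross independence
  have hcross : P ((Φ ⁻¹' Sset) ∩ (Ψ ⁻¹' Tset)) = P (Φ ⁻¹' Sset) * P (Ψ ⁻¹' Tset) :=
    hVθindep.measure_inter_preimage_eq_mul Sset Tset hSmeas hTmeas
  -- inclusion into the target event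
  have hsubE : ((Φ ⁻¹' Sset) ∩ (Ψ ⁻¹' Tset)) \ Z ⊆
      {ω | ∀ i, ∀ x ∈ K, |∫ t, f i t ∂(G x ω) - ∫ t, f i t ∂(P0 x)| < ε i} := by
    intro ω hω
    obtain ⟨⟨hωS, hωT⟩, hωZ⟩ := hω
    rw [hZ, Set.mem_setOf_eq, not_not] at hωZ
    obtain ⟨hGω, hcont⟩ := hωZ
    have hVclose : ∀ j, j < m → ∀ x ∈ K, |V j x ω - v j x| < δ₂ := hStoA ω hcont hωS
    have hθU : ∀ j, j < m → θ j ω ∈ U j := (hTmem ω).1 hωT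
    intro i x hx
    -- notation
    have hp0 : ∀ k, 0 ≤ π k x ω := by
      intro k
      rw [hπ]
      refine mul_nonneg (hV01 k x ω).1 (Finset.prod_nonneg fun l _ => ?_)
      have := (hV01 l x ω).2
      linarith
    have hp1 : (∑' k, π k x ω) = 1 := (hGω x).1
    have hint : ∫ t, f i t ∂(G x ω) = ∑' k, π k x ω * f i (θ k ω) := by
      rw [(hGω x).2]
      exact thetaDDP_integral_G (fun k => π k x ω) hp0 hp1 (fun k => θ k ω)
        (f i) (hfc i) C (hfbC i)
    rw [hint]
    -- ideal weights
    set c : ℕ → ℝ := fun k => v k x * ∏ l ∈ Finset.range k, (1 - v l x) with hc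
    have hc0 : ∀ k, 0 ≤ c k := by
      intro k
      rw [hc]
      refine mul_nonneg (hv01 k x).1 (Finset.prod_nonneg fun l _ => ?_)
      have := (hv01 l x).2
      linarith
    have hcsum : ∑ k ∈ Finset.range m, c k = 1 - ∏ k ∈ Finset.range m, (1 - v k x) :=
      thetaDDP_aux_sum_stick m (fun k => v k x)
    have hcsumle : ∑ k ∈ Finset.range m, c k ≤ 1 := by
      rw [hcsum]
      have : (0:ℝ) ≤ ∏ k ∈ Finset.range m, (1 - v k x) :=
        Finset.prod_nonneg fun l _ => by have := (hv01 l x).2; linarith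
      linarith
    -- |π_k - c_k| bound
    have hpc : ∀ k, k < m → |π k x ω - c k| ≤ m * δ₂ := by
      intro k hk
      have key := thetaDDP_aux_prod_sub (k+1)
        (fun l => if l < k then 1 - V l x ω else V k x ω)
        (fun l => if l < k then 1 - v l x else v k x)
        (fun l _ => by
          by_cases h : l < k <;> simp only [h, if_true, if_false, if_pos, if_neg]
          · constructor
            · have := (hV01 l x ω).2; linarith
            · have := (hV01 l x ω).1; linarith
          · exact hV01 k x ω)
        (fun l _ => by
          by_cases h : l < k <;> simp only [h, if_true, if_false, if_pos, if_neg]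
          · constructor
            · have := (hv01 l x).2; linarith
            · have := (hv01 l x).1; linarith
          · exact hv01 k x)
      have hprodV : ∏ l ∈ Finset.range (k+1), (if l < k then 1 - V l x ω else V k x ω)
          = π k x ω := by
        rw [Finset.prod_range_succ, if_neg (lt_irrefl k), hπ]
        rw [Finset.prod_congr rfl fun l hl => if_pos (Finset.mem_range.1 hl)]
        ring
      have hprodv : ∏ l ∈ Finset.range (k+1), (if l < k then 1 - v l x else v k x)
          = c k := by
        rw [Finset.prod_range_succ, if_neg (lt_irrefl k), hc]
        rw [Finset.prod_congr rfl fun l hl => if_pos (Finset.mem_range.1 hl)]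
        ring
      rw [hprodV, hprodv] at key
      refine key.trans ?_
      have hterm : ∀ l ∈ Finset.range (k+1),
          |(if l < k then 1 - V l x ω else V k x ω) - (if l < k then 1 - v l x else v k x)|
            ≤ δ₂ := by
        intro l hl
        by_cases h : l < k
        · rw [if_pos h, if_pos h]
          have h1 := hVclose l (h.trans hk) x hx
          rw [show (1 - V l x ω) - (1 - v l x) = -(V l x ω - v l x) by ring, abs_neg]
          exact h1.le
        · rw [if_neg h, if_neg h]
          exact (hVclose k hk x hx).le
      refine (Finset.sum_le_sum hterm).trans ?_
      rw [Finset.sum_const, Finset.card_range, nsmul_eq_mul]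
      have : (k:ℝ) + 1 ≤ m := by exact_mod_cast hk
      push_cast
      nlinarith [hδ₂pos]
    -- summability
    have hsummable : Summable (fun k => π k x ω) := by
      by_contra hcon
      rw [tsum_eq_zero_of_not_summable hcon] at hp1
      norm_num at hp1
    have habs_le : ∀ k, |π k x ω * f i (θ k ω)| ≤ C * π k x ω := by
      intro k
      rw [abs_mul, abs_of_nonneg (hp0 k)]
      calc π k x ω * |f i (θ k ω)| ≤ π k x ω * C :=
            mul_le_mul_of_nonneg_left (hfbC i _) (hp0 k)
        _ = C * π k x ω := mul_comm _ _
    have hsummableAbs : Summable (fun k => |π k x ω * f i (θ k ω)|) :=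
      Summable.of_nonneg_of_le (fun k => abs_nonneg _) habs_le (hsummable.mul_left C)
    have hsummable2 : Summable (fun k => π k x ω * f i (θ k ω)) :=
      hsummableAbs.of_abs
    -- tail splitting
    have hsplit := Summable.sum_add_tsum_nat_add (f := fun k => π k x ω * f i (θ k ω)) m hsummable2
    have hsplitp := Summable.sum_add_tsum_nat_add (f := fun k => π k x ω) m hsummable
    rw [hp1] at hsplitp
    have hpartial : ∑ k ∈ Finset.range m, π k x ω
        = 1 - ∏ k ∈ Finset.range m, (1 - V k x ω) := by
      have h1 : ∑ k ∈ Finset.range m, π k x ω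
          = ∑ k ∈ Finset.range m, V k x ω * ∏ l ∈ Finset.range k, (1 - V l x ω) :=
        Finset.sum_congr rfl fun k _ => hπ k x ω
      rw [h1]
      exact thetaDDP_aux_sum_stick m (fun k => V k x ω)
    -- tail bound
    have htailple : (∑' k, π (k + m) x ω) = 1 - ∑ k ∈ Finset.range m, π k x ω := by
      linarith
    have htailb : |∑' k, π (k + m) x ω * f i (θ (k + m) ω)|
        ≤ C * (1 - ∑ k ∈ Finset.range m, π k x ω) := by
      have hsummtail : Summable (fun k => π (k + m) x ω * f i (θ (k + m) ω)) :=
        (summable_nat_add_iff m).2 hsummable2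
      have hsummtailAbs : Summable (fun k => |π (k + m) x ω * f i (θ (k + m) ω)|) :=
        (summable_nat_add_iff m).2 hsummableAbs
      have hsummtailp : Summable (fun k => C * π (k + m) x ω) :=
        ((summable_nat_add_iff m).2 hsummable).mul_left C
      have h1 : |∑' k, π (k + m) x ω * f i (θ (k + m) ω)|
          ≤ ∑' k, |π (k + m) x ω * f i (θ (k + m) ω)| := by
        have h0 := norm_tsum_le_tsum_norm (f := fun k => π (k + m) x ω * f i (θ (k + m) ω))
          (by simpa only [Real.norm_eq_abs] using hsummtailAbs)
        simpa only [Real.norm_eq_abs] using h0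
      refine h1.trans ?_
      have h2 : ∑' k, |π (k + m) x ω * f i (θ (k + m) ω)| ≤ ∑' k, C * π (k + m) x ω :=
        Summable.tsum_le_tsum (fun k => habs_le (k + m)) hsummtailAbs hsummtailp
      refine h2.trans ?_
      rw [tsum_mul_left, htailple]
    -- product bound
    have hVprod : ∏ k ∈ Finset.range m, (1 - V k x ω)
        ≤ ε₀ / (8 * C) + m * δ₂ := by
      have hIccV : ∀ k : ℕ, (1 - V k x ω) ∈ Set.Icc (0:ℝ) 1 := fun k =>
        ⟨by linarith [(hV01 k x ω).2], by linarith [(hV01 k x ω).1]⟩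
      have hIccv : ∀ k : ℕ, (1 - v k x) ∈ Set.Icc (0:ℝ) 1 := fun k =>
        ⟨by linarith [(hv01 k x).2], by linarith [(hv01 k x).1]⟩
      have key := thetaDDP_aux_prod_sub m (fun k => 1 - V k x ω) (fun k => 1 - v k x)
        (fun k _ => hIccV k) (fun k _ => hIccv k)
      have hterm : ∀ k ∈ Finset.range m, |(1 - V k x ω) - (1 - v k x)| ≤ δ₂ := by
        intro k hk
        rw [show (1 - V k x ω) - (1 - v k x) = -(V k x ω - v k x) by ring, abs_neg]
        exact (hVclose k (Finset.mem_range.1 hk) x hx).le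
      have h2' : ∑ _k ∈ Finset.range m, δ₂ = (m:ℝ) * δ₂ := by
        rw [Finset.sum_const, Finset.card_range, nsmul_eq_mul]
      have h3 := key.trans ((Finset.sum_le_sum hterm).trans (le_of_eq h2'))
      have h4 := htail x hx
      have h5 := abs_sub_le_iff.1 h3
      linarith [h5.1]
    -- main estimate
    have hterm1 : |∑ k ∈ Finset.range m, (π k x ω * f i (θ k ω) - c k * f i (tt k))|
        ≤ m * (m * δ₂ * C) + ρ := by
      refine (Finset.abs_sum_le_sum_abs _ _).trans ?_
      have hbd : ∀ k ∈ Finset.range m, |π k x ω * f i (θ k ω) - c k * f i (tt k)|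
          ≤ m * δ₂ * C + c k * ρ := by
        intro k hk
        have hkm := Finset.mem_range.1 hk
        have h1 : π k x ω * f i (θ k ω) - c k * f i (tt k)
            = (π k x ω - c k) * f i (θ k ω) + c k * (f i (θ k ω) - f i (tt k)) := by ring
        rw [h1]
        refine (abs_add_le _ _).trans ?_
        have h2 : |(π k x ω - c k) * f i (θ k ω)| ≤ m * δ₂ * C := by
          rw [abs_mul]
          refine mul_le_mul (hpc k hkm) (hfbC i _) (abs_nonneg _) ?_
          positivity
        have h3 : |c k * (f i (θ k ω) - f i (tt k))| ≤ c k * ρ := by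
          rw [abs_mul, abs_of_nonneg (hc0 k)]
          refine mul_le_mul_of_nonneg_left ?_ (hc0 k)
          exact (hθU k hkm i).le
        linarith
      refine (Finset.sum_le_sum hbd).trans ?_
      rw [Finset.sum_add_distrib, Finset.sum_const, Finset.card_range, nsmul_eq_mul,
        ← Finset.sum_mul]
      have h4 : (∑ k ∈ Finset.range m, c k) * ρ ≤ 1 * ρ :=
        mul_le_mul_of_nonneg_right hcsumle hρpos.le
      nlinarith [h4]
    -- put the pieces together
    have hdec : (∑' k, π k x ω * f i (θ k ω)) - ∫ t, f i t ∂(P0 x)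
        = (∑ k ∈ Finset.range m, (π k x ω * f i (θ k ω) - c k * f i (tt k)))
          + (∑' k, π (k + m) x ω * f i (θ (k + m) ω))
          + ((∑ k ∈ Finset.range m, c k * f i (tt k)) - ∫ t, f i t ∂(P0 x)) := by
      have h1 : ∑' k, π k x ω * f i (θ k ω)
          = ∑ k ∈ Finset.range m, π k x ω * f i (θ k ω)
            + ∑' k, π (k + m) x ω * f i (θ (k + m) ω) := hsplit.symm
      rw [h1, Finset.sum_sub_distrib]
      ring
    rw [hdec]
    have happ := happrox x hx i
    have habs1 := hterm1
    have habs2 : |∑' k, π (k + m) x ω * f i (θ (k + m) ω)|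
        ≤ C * (ε₀ / (8 * C) + m * δ₂) := by
      refine htailb.trans ?_
      have h1 : 1 - ∑ k ∈ Finset.range m, π k x ω
          = ∏ k ∈ Finset.range m, (1 - V k x ω) := by
        rw [hpartial]; ring
      rw [h1]
      exact mul_le_mul_of_nonneg_left hVprod hC0.le
    have hCδ : C * (m * (m * δ₂) + m * δ₂) ≤ ε₀ / 8 := by
      have hDpos : (0:ℝ) < (m:ℝ) * (m+1) + m + 1 := by positivity
      have hδ₂mul : ε₀ / 8 = δ₂ * C * ((m:ℝ) * (m+1) + m + 1) := by
        rw [hδ₂def]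
        field_simp
      have hL : C * ((m:ℝ) * ((m:ℝ) * δ₂) + (m:ℝ) * δ₂) = δ₂ * C * ((m:ℝ) * m + m) := by
        ring
      rw [hδ₂mul, hL]
      have hfac : (m:ℝ) * m + m ≤ (m:ℝ) * (m+1) + m + 1 := by nlinarith
      exact mul_le_mul_of_nonneg_left hfac (by positivity)
    calc |∑ k ∈ Finset.range m, (π k x ω * f i (θ k ω) - c k * f i (tt k))
          + (∑' k, π (k + m) x ω * f i (θ (k + m) ω))
          + ((∑ k ∈ Finset.range m, c k * f i (tt k)) - ∫ t, f i t ∂(P0 x))|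
        ≤ |∑ k ∈ Finset.range m, (π k x ω * f i (θ k ω) - c k * f i (tt k))
          + (∑' k, π (k + m) x ω * f i (θ (k + m) ω))|
          + |(∑ k ∈ Finset.range m, c k * f i (tt k)) - ∫ t, f i t ∂(P0 x)| := abs_add_le _ _
      _ ≤ |∑ k ∈ Finset.range m, (π k x ω * f i (θ k ω) - c k * f i (tt k))|
          + |∑' k, π (k + m) x ω * f i (θ (k + m) ω)|
          + |(∑ k ∈ Finset.range m, c k * f i (tt k)) - ∫ t, f i t ∂(P0 x)| := by
          have := abs_add_le (∑ k ∈ Finset.range m, (π k x ω * f i (θ k ω) - c k * f i (tt k)))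
            (∑' k, π (k + m) x ω * f i (θ (k + m) ω))
          linarith
      _ ≤ (m * (m * δ₂ * C) + ρ) + C * (ε₀ / (8 * C) + m * δ₂) + ε₀ / 2 := by
          refine add_le_add (add_le_add habs1 habs2) happ
      _ < ε i := by
          have h1 : C * (ε₀ / (8 * C)) = ε₀ / 8 := by
            field_simp
          have h2 : m * (m * δ₂ * C) + C * (ε₀ / (8 * C) + m * δ₂)
              = C * (m * (m * δ₂) + m * δ₂) + C * (ε₀ / (8 * C)) := by ring
          have h3 := hε₀lei i
          have h4 : ρ = ε₀ / 8 := hρdef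
          linarith [hCδ, h1, h2, h3, hε₀pos]
  -- conclusion
  have hfinal : P (((Φ ⁻¹' Sset) ∩ (Ψ ⁻¹' Tset)) \ Z) = P ((Φ ⁻¹' Sset) ∩ (Ψ ⁻¹' Tset)) :=
    measure_diff_null hZ0
  calc (0 : ENNReal) < P (Φ ⁻¹' Sset) * P (Ψ ⁻¹' Tset) := ENNReal.mul_pos hPS.ne' hPT.ne'
    _ = P ((Φ ⁻¹' Sset) ∩ (Ψ ⁻¹' Tset)) := hcross.symm
    _ = P (((Φ ⁻¹' Sset) ∩ (Ψ ⁻¹' Tset)) \ Z) := hfinal.symm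
    _ ≤ P {ω | ∀ i, ∀ x ∈ K, |∫ t, f i t ∂(G x ω) - ∫ t, f i t ∂(P0 x)| < ε i} :=
        measure_mono hsubE
end

section
/- Let X and Θ be Polish spaces with complete metrics, and let P : X → P(Θ) be any function. Let f_1,…,f_n : Θ → ℝ be bounded Borel-measurable functions and define F_i(x) = ∫_Θ f_i dP_x. Let K ⊂ X be compact and suppose F_1,…,F_n are continuous on K. Then for every ε > 0 there exists a function P̄ : K → P(Θ) such that: (a) |∫_Θ f_i dP_x − ∫_Θ f_i dP̄_x| < ε for every x ∈ K and every i ∈ {1,…,n}; (b) for every Borel set B ⊂ Θ, the map x ↦ P̄_x(B) is Lipschitz continuous on K; (c) the family {P̄_x : x ∈ K} is tight, i.e., for every ε' > 0 there is a compact K_Θ ⊂ Θ with P̄_x(K_Θ) > 1 − ε' for all x ∈ K. -/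
open MeasureTheory Filter Topology TopologicalSpace

lemma tight_aux {Θ : Type*} [MetricSpace Θ] [SeparableSpace Θ] [CompleteSpace Θ]
    [MeasurableSpace Θ] [BorelSpace Θ] (μ : Measure Θ)
    [IsProbabilityMeasure μ] {ε : ℝ} (hε : 0 < ε) :
    ∃ C : Set Θ, IsCompact C ∧ 1 - ε < (μ C).toReal := by
  rcases isEmpty_or_nonempty Θ with hΘ | hΘ
  · have h0 : μ Set.univ = 1 := measure_univ
    rw [Set.univ_eq_empty_iff.mpr hΘ] at h0
    simp at h0
  obtain ⟨u, hu⟩ := TopologicalSpace.exists_dense_seq Θ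
  have key : ∀ k : ℕ, ∃ N : ℕ,
      μ (⋃ j ∈ Finset.range (N + 1), Metric.closedBall (u j) (1 / (k + 1)))ᶜ
        ≤ ENNReal.ofReal (ε / 4) * (1 / 2) ^ k := by
    intro k
    set r : ℝ := 1 / (k + 1) with hr
    have hrpos : 0 < r := by positivity
    set s : ℕ → Set Θ := fun m => ⋃ j ∈ Finset.range (m + 1), Metric.closedBall (u j) r with hs
    have hsm : ∀ m, MeasurableSet (s m) := fun m =>
      (Finset.range (m + 1)).measurableSet_biUnion fun j _ => measurableSet_closedBall
    have hmono : Monotone s := fun a b hab =>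
      Set.biUnion_subset_biUnion_left (Finset.coe_subset.2 (Finset.range_subset_range.2 (by omega)))
    have huniv : (⋃ m, s m) = Set.univ := by
      ext x
      simp only [Set.mem_iUnion, Set.mem_univ, iff_true]
      obtain ⟨j, hj⟩ := Metric.denseRange_iff.1 hu x r hrpos
      exact ⟨j, Set.mem_biUnion (Finset.self_mem_range_succ j) (Metric.mem_closedBall.2 hj.le)⟩
    have hanti : Antitone fun m => (s m)ᶜ := fun a b hab => Set.compl_subset_compl.2 (hmono hab)
    have hiInter : (⋂ m, (s m)ᶜ) = ∅ := by
      rw [← Set.compl_iUnion, huniv, Set.compl_univ]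
    have htend : Tendsto (fun m => μ (s m)ᶜ) atTop (𝓝 0) := by
      have := MeasureTheory.tendsto_measure_iInter_atTop (μ := μ)
        (s := fun m => (s m)ᶜ) (fun m => ((hsm m).compl).nullMeasurableSet) hanti
        ⟨0, measure_ne_top μ _⟩
      rw [hiInter] at this
      simpa [Function.comp_def] using this
    have hpos : (0 : ENNReal) < ENNReal.ofReal (ε / 4) * (1 / 2) ^ k := by
      refine ENNReal.mul_pos ?_ ?_
      · simp only [ne_eq, ENNReal.ofReal_eq_zero, not_le]
        linarith
      · exact pow_ne_zero _ (by simp)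
    obtain ⟨N, hN⟩ := (htend.eventually_lt_const hpos).exists
    exact ⟨N, hN.le⟩
  choose N hN using key
  set C : Set Θ :=
    ⋂ k, (⋃ j ∈ Finset.range (N k + 1), Metric.closedBall (u j) (1 / (k + 1))) with hC
  have hCclosed : IsClosed C := by
    refine isClosed_iInter fun k => ?_
    refine Set.Finite.isClosed_biUnion (Finset.finite_toSet _) fun j _ => Metric.isClosed_closedBall
  have hCtb : TotallyBounded C := by
    rw [Metric.totallyBounded_iff]
    intro δ hδ
    obtain ⟨k, hk⟩ := exists_nat_gt (1 / δ)
    refine ⟨u '' (Finset.range (N k + 1) : Set ℕ), (Set.toFinite _).image u, ?_⟩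
    intro x hx
    have hx' := Set.mem_iInter.1 hx k
    simp only [Set.mem_iUnion, exists_prop] at hx'
    obtain ⟨j, hj, hjx⟩ := hx'
    have h1 : (1 : ℝ) / (k + 1) < δ := by
      rw [div_lt_iff₀ (by positivity)]
      rw [div_lt_iff₀ hδ] at hk
      nlinarith
    refine Set.mem_biUnion ⟨j, by simpa using hj, rfl⟩ ?_
    exact Metric.mem_ball.2 (lt_of_le_of_lt (Metric.mem_closedBall.1 hjx) h1)
  have hCcompact : IsCompact C := TotallyBounded.isCompact_of_isClosed hCtb hCclosed
  refine ⟨C, hCcompact, ?_⟩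
  have hcompl : μ Cᶜ ≤ ENNReal.ofReal (ε / 2) := by
    have h1 : μ Cᶜ ≤ ∑' k, μ (⋃ j ∈ Finset.range (N k + 1),
        Metric.closedBall (u j) (1 / (k + 1)))ᶜ := by
      rw [hC, Set.compl_iInter]
      exact measure_iUnion_le _
    have h2 : ∑' k : ℕ, μ (⋃ j ∈ Finset.range (N k + 1),
        Metric.closedBall (u j) (1 / (k + 1)))ᶜ
        ≤ ∑' k : ℕ, ENNReal.ofReal (ε / 4) * (1 / 2) ^ k := ENNReal.tsum_le_tsum hN
    have h3 : ∑' k : ℕ, ENNReal.ofReal (ε / 4) * (1 / 2) ^ k = ENNReal.ofReal (ε / 2) := by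
      rw [ENNReal.tsum_mul_left, ENNReal.tsum_geometric]
      have hh : ((1 : ENNReal) - 1 / 2)⁻¹ = 2 := by
        rw [one_div, ENNReal.one_sub_inv_two, inv_inv]
      rw [hh, show (2 : ENNReal) = ENNReal.ofReal 2 by simp,
        ← ENNReal.ofReal_mul (by linarith)]
      congr 1; ring
    calc μ Cᶜ ≤ _ := h1
      _ ≤ _ := h2
      _ = _ := h3
  have hCm : MeasurableSet C := hCclosed.measurableSet
  have hsum : μ C + μ Cᶜ = 1 := by
    rw [measure_add_measure_compl hCm]; exact measure_univ
  have h4 : (μ Cᶜ).toReal ≤ ε / 2 := ENNReal.toReal_le_of_le_ofReal (by linarith) hcompl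
  have h5 : (μ C).toReal + (μ Cᶜ).toReal = 1 := by
    rw [← ENNReal.toReal_add (measure_ne_top μ _) (measure_ne_top μ _), hsum]
    simp
  linarith

/-- **Approximation lemma (Lemma 3 of the appendix).**
Given a family `P : X → P(Θ)` of probability measures on a Polish space `Θ`, bounded
Borel-measurable functions `f₁,…,f_n` whose integrals `F_i(x) = ∫ f_i dP_x` are
continuous on a compact `K ⊆ X`, for every `ε > 0` there is a family `P̄` of probability
measures such that: (a) all integrals against the `f_i` are within `ε` on `K`;
(b) `x ↦ P̄_x(B)` is Lipschitz on `K` for every Borel `B`; and (c) the family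
`{P̄_x : x ∈ K}` is tight. -/
theorem approximation_lemma
    {X Θ : Type*} [MetricSpace X] [SeparableSpace X] [CompleteSpace X]
    [MetricSpace Θ] [SeparableSpace Θ] [CompleteSpace Θ]
    [MeasurableSpace Θ] [BorelSpace Θ]
    (Pm : X → Measure Θ) (hPm : ∀ x, IsProbabilityMeasure (Pm x))
    (n : ℕ) (f : Fin n → Θ → ℝ)
    (hfm : ∀ i, Measurable (f i)) (hfb : ∀ i, ∃ C, ∀ t, |f i t| ≤ C)
    (K : Set X) (hK : IsCompact K)
    (hF : ∀ i, ContinuousOn (fun x => ∫ t, f i t ∂(Pm x)) K)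
    (ε : ℝ) (hε : 0 < ε) :
    ∃ Pbar : X → Measure Θ,
      (∀ x ∈ K, IsProbabilityMeasure (Pbar x)) ∧
      (∀ x ∈ K, ∀ i, |∫ t, f i t ∂(Pm x) - ∫ t, f i t ∂(Pbar x)| < ε) ∧
      (∀ B : Set Θ, MeasurableSet B →
        ∃ L : NNReal, LipschitzOnWith L (fun x => (Pbar x B).toReal) K) ∧
      (∀ ε' : ℝ, 0 < ε' →
        ∃ KΘ : Set Θ, IsCompact KΘ ∧ ∀ x ∈ K, 1 - ε' < (Pbar x KΘ).toReal) := by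
  rcases K.eq_empty_or_nonempty with hKe | hKne
  · exact ⟨Pm, by simp [hKe], by simp [hKe],
      fun B _ => ⟨1, hKe ▸ lipschitzOnWith_empty _ _⟩,
      fun ε' _ => ⟨∅, isCompact_empty, by simp [hKe]⟩⟩
  -- the vector of integral functionals
  set F : X → (Fin n → ℝ) := fun x i => ∫ t, f i t ∂(Pm x) with hFdef
  have hFc : ContinuousOn F K := continuousOn_pi.2 hF
  obtain ⟨δ, hδpos, hδ⟩ := Metric.uniformContinuousOn_iff.1
    (hK.uniformContinuousOn_of_continuous hFc) (ε / 2) (by linarith)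
  -- finite subcover by balls of radius δ/2
  have hcover : K ⊆ ⋃ x ∈ K, Metric.ball x (δ / 2) := fun x hx =>
    Set.mem_biUnion hx (Metric.mem_ball_self (by positivity))
  obtain ⟨s, hsK, hsfin, hscov⟩ :=
    hK.elim_finite_subcover_image (fun x _ => Metric.isOpen_ball) hcover
  classical
  set t : Finset X := hsfin.toFinset with htdef
  have htK : ∀ c ∈ t, c ∈ K := fun c hc => hsK (hsfin.mem_toFinset.1 hc)
  -- partition of unity
  set ψ : X → X → ℝ := fun c x => max (δ - dist x c) 0 with hψdef
  set S : X → ℝ := fun x => ∑ c ∈ t, ψ c x with hSdef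
  set φ : X → X → ℝ := fun c x => ψ c x / S x with hφdef
  have hψ0 : ∀ c x, 0 ≤ ψ c x := fun c x => le_max_right _ _
  have hψδ : ∀ c x, ψ c x ≤ δ := fun c x =>
    max_le (by linarith [dist_nonneg (x := x) (y := c)]) hδpos.le
  have hψlip : ∀ c x y, |ψ c x - ψ c y| ≤ dist x y := by
    intro c x y
    calc |ψ c x - ψ c y| ≤ |(δ - dist x c) - (δ - dist y c)| := abs_max_sub_max_le_abs _ _ _
      _ = |dist y c - dist x c| := by ring_nf
      _ ≤ dist y x := abs_dist_sub_le _ _ _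
      _ = dist x y := dist_comm _ _
  have hS0 : ∀ x, 0 ≤ S x := fun x => Finset.sum_nonneg fun c _ => hψ0 c x
  have hSub : ∀ x, S x ≤ t.card * δ := by
    intro x
    calc S x ≤ ∑ c ∈ t, δ := Finset.sum_le_sum fun c _ => hψδ c x
      _ = t.card * δ := by rw [Finset.sum_const, nsmul_eq_mul]
  have hSlip : ∀ x y, |S x - S y| ≤ t.card * dist x y := by
    intro x y
    calc |S x - S y| = |∑ c ∈ t, (ψ c x - ψ c y)| := by rw [Finset.sum_sub_distrib]
      _ ≤ ∑ c ∈ t, |ψ c x - ψ c y| := Finset.abs_sum_le_sum_abs _ _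
      _ ≤ ∑ c ∈ t, dist x y := Finset.sum_le_sum fun c _ => hψlip c x y
      _ = t.card * dist x y := by rw [Finset.sum_const, nsmul_eq_mul]
  have hSK : ∀ x ∈ K, δ / 2 ≤ S x := by
    intro x hx
    obtain ⟨c, hcs, hcb⟩ := Set.mem_iUnion₂.1 (hscov hx)
    have hct : c ∈ t := hsfin.mem_toFinset.2 hcs
    have h1 : δ / 2 ≤ ψ c x := by
      have := Metric.mem_ball.1 hcb
      exact le_max_of_le_left (by linarith)
    exact h1.trans (Finset.single_le_sum (fun c _ => hψ0 c x) hct)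
  have hφ0 : ∀ c x, 0 ≤ φ c x := fun c x => div_nonneg (hψ0 c x) (hS0 x)
  have hφsum : ∀ x ∈ K, ∑ c ∈ t, φ c x = 1 := by
    intro x hx
    have hSx : S x ≠ 0 := ne_of_gt (by linarith [hSK x hx])
    simp only [hφdef]
    rw [← Finset.sum_div, div_self hSx]
  -- Lipschitz bound for the weights
  have hφlip : ∀ c, ∀ x ∈ K, ∀ y ∈ K, |φ c x - φ c y| ≤ (8 * t.card / δ) * dist x y := by
    intro c x hx y hy
    have hp : δ / 2 ≤ S x := hSK x hx
    have hq : δ / 2 ≤ S y := hSK y hy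
    have hppos : 0 < S x := by linarith
    have hqpos : 0 < S y := by linarith
    have key : φ c x - φ c y
        = ((ψ c x - ψ c y) * S y + ψ c y * (S y - S x)) / (S x * S y) := by
      rw [hφdef]
      show ψ c x / S x - ψ c y / S y = _
      rw [div_sub_div _ _ (ne_of_gt hppos) (ne_of_gt hqpos)]
      congr 1
      ring
    have h1 : |(ψ c x - ψ c y) * S y + ψ c y * (S y - S x)|
        ≤ dist x y * (t.card * δ) + δ * (t.card * dist x y) := by
      have e1 : |ψ c x - ψ c y| ≤ dist x y := hψlip c x y
      have e2 : |S y - S x| ≤ t.card * dist x y := by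
        rw [abs_sub_comm]; exact hSlip x y
      calc |(ψ c x - ψ c y) * S y + ψ c y * (S y - S x)|
          ≤ |(ψ c x - ψ c y) * S y| + |ψ c y * (S y - S x)| := abs_add_le _ _
        _ = |ψ c x - ψ c y| * S y + ψ c y * |S y - S x| := by
            rw [abs_mul, abs_mul, abs_of_nonneg (hS0 y), abs_of_nonneg (hψ0 c y)]
        _ ≤ dist x y * (t.card * δ) + δ * (t.card * dist x y) :=
            add_le_add (mul_le_mul e1 (hSub y) (hS0 y) dist_nonneg)
              (mul_le_mul (hψδ c y) e2 (abs_nonneg _) hδpos.le)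
    have h2 : δ / 2 * (δ / 2) ≤ S x * S y :=
      mul_le_mul hp hq (by positivity) (by linarith)
    calc |φ c x - φ c y|
        = |(ψ c x - ψ c y) * S y + ψ c y * (S y - S x)| / (S x * S y) := by
          rw [key, abs_div, abs_of_pos (mul_pos hppos hqpos)]
      _ ≤ (dist x y * (t.card * δ) + δ * (t.card * dist x y)) / (δ / 2 * (δ / 2)) :=
          div_le_div₀ (by positivity) h1 (by positivity) h2
      _ = (8 * t.card / δ) * dist x y := by field_simp; ring
  -- the approximating family
  set Pbar : X → Measure Θ := fun x => ∑ c ∈ t, ENNReal.ofReal (φ c x) • Pm c with hPbar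
  have happly : ∀ x (A : Set Θ), Pbar x A = ∑ c ∈ t, ENNReal.ofReal (φ c x) * Pm c A := by
    intro x A
    rw [hPbar]
    simp [Measure.coe_finset_sum, Finset.sum_apply, Measure.smul_apply, smul_eq_mul]
  have htoReal : ∀ x (A : Set Θ), (Pbar x A).toReal = ∑ c ∈ t, φ c x * (Pm c A).toReal := by
    intro x A
    rw [happly, ENNReal.toReal_sum]
    · refine Finset.sum_congr rfl fun c _ => ?_
      rw [ENNReal.toReal_mul, ENNReal.toReal_ofReal (hφ0 c x)]
    · intro c _
      haveI := hPm c
      exact ENNReal.mul_ne_top ENNReal.ofReal_ne_top (measure_ne_top (Pm c) A)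
  have hInt : ∀ i c, Integrable (f i) (Pm c) := by
    intro i c
    haveI := hPm c
    obtain ⟨C, hC⟩ := hfb i
    exact ⟨(hfm i).aestronglyMeasurable,
      HasFiniteIntegral.of_bounded (C := C) (ae_of_all _ fun th => by
        simpa [Real.norm_eq_abs] using hC th)⟩
  have hIntegral : ∀ i x, ∫ th, f i th ∂(Pbar x) = ∑ c ∈ t, φ c x * ∫ th, f i th ∂(Pm c) := by
    intro i x
    rw [hPbar]
    rw [integral_finset_sum_measure (fun c _ => (hInt i c).smul_measure ENNReal.ofReal_ne_top)]
    refine Finset.sum_congr rfl fun c _ => ?_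
    rw [integral_smul_measure, ENNReal.toReal_ofReal (hφ0 c x), smul_eq_mul]
  refine ⟨Pbar, ?_, ?_, ?_, ?_⟩
  -- (0) probability measures
  · intro x hx
    constructor
    rw [happly]
    have e : ∀ c ∈ t, ENNReal.ofReal (φ c x) * Pm c Set.univ = ENNReal.ofReal (φ c x) := by
      intro c _
      haveI := hPm c
      simp
    rw [Finset.sum_congr rfl e, ← ENNReal.ofReal_sum_of_nonneg (fun c _ => hφ0 c x),
      hφsum x hx, ENNReal.ofReal_one]
  -- (a) integrals are close
  · intro x hx i
    have hterm : ∀ c ∈ t, φ c x * |F x i - F c i| ≤ φ c x * (ε / 2) := by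
      intro c hc
      by_cases hdc : dist x c < δ
      · refine mul_le_mul_of_nonneg_left ?_ (hφ0 c x)
        have h1 : dist (F x i) (F c i) ≤ dist (F x) (F c) := dist_le_pi_dist _ _ _
        have h2 : dist (F x) (F c) < ε / 2 := hδ x hx c (htK c hc) hdc
        rw [Real.dist_eq] at h1
        linarith
      · have hψz : ψ c x = 0 := by
          rw [hψdef]
          exact max_eq_right (by push_neg at hdc; linarith)
        have : φ c x = 0 := by rw [hφdef]; simp [hψz]
        simp [this]
    have hrw : F x i - ∑ c ∈ t, φ c x * F c i = ∑ c ∈ t, φ c x * (F x i - F c i) := by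
      simp only [mul_sub]
      rw [Finset.sum_sub_distrib, ← Finset.sum_mul, hφsum x hx, one_mul]
    have hFxi : (∫ th, f i th ∂(Pm x)) = F x i := rfl
    calc |∫ th, f i th ∂(Pm x) - ∫ th, f i th ∂(Pbar x)|
        = |∑ c ∈ t, φ c x * (F x i - F c i)| := by
          rw [hIntegral i x, hFxi, ← hrw]
      _ ≤ ∑ c ∈ t, |φ c x * (F x i - F c i)| := Finset.abs_sum_le_sum_abs _ _
      _ = ∑ c ∈ t, φ c x * |F x i - F c i| := by
          refine Finset.sum_congr rfl fun c _ => ?_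
          rw [abs_mul, abs_of_nonneg (hφ0 c x)]
      _ ≤ ∑ c ∈ t, φ c x * (ε / 2) := Finset.sum_le_sum hterm
      _ = ε / 2 := by rw [← Finset.sum_mul, hφsum x hx, one_mul]
      _ < ε := by linarith
  -- (b) Lipschitz in x
  · intro B _
    refine ⟨Real.toNNReal (t.card * (8 * t.card / δ)), ?_⟩
    rw [lipschitzOnWith_iff_dist_le_mul]
    intro x hx y hy
    have hcoe : (Real.toNNReal (t.card * (8 * t.card / δ)) : ℝ)
        = t.card * (8 * t.card / δ) := Real.coe_toNNReal _ (by positivity)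
    rw [hcoe, Real.dist_eq, htoReal, htoReal]
    have hterm : ∀ c ∈ t, |(φ c x - φ c y) * (Pm c B).toReal|
        ≤ (8 * t.card / δ) * dist x y := by
      intro c _
      haveI := hPm c
      have ha1 : (Pm c B).toReal ≤ 1 := by
        have := prob_le_one (μ := Pm c) (s := B)
        calc (Pm c B).toReal ≤ (1 : ENNReal).toReal :=
              ENNReal.toReal_mono ENNReal.one_ne_top this
          _ = 1 := by simp
      rw [abs_mul, abs_of_nonneg ENNReal.toReal_nonneg]
      calc |φ c x - φ c y| * (Pm c B).toReal
          ≤ ((8 * t.card / δ) * dist x y) * 1 :=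
            mul_le_mul (hφlip c x hx y hy) ha1 ENNReal.toReal_nonneg
              (by positivity)
        _ = (8 * t.card / δ) * dist x y := mul_one _
    calc |∑ c ∈ t, φ c x * (Pm c B).toReal - ∑ c ∈ t, φ c y * (Pm c B).toReal|
        = |∑ c ∈ t, (φ c x - φ c y) * (Pm c B).toReal| := by
          rw [← Finset.sum_sub_distrib]
          congr 1
          refine Finset.sum_congr rfl fun c _ => ?_
          ring
      _ ≤ ∑ c ∈ t, |(φ c x - φ c y) * (Pm c B).toReal| := Finset.abs_sum_le_sum_abs _ _
      _ ≤ ∑ c ∈ t, (8 * t.card / δ) * dist x y := Finset.sum_le_sum hterm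
      _ = t.card * (8 * t.card / δ) * dist x y := by
          rw [Finset.sum_const, nsmul_eq_mul]
          ring
  -- (c) tightness
  · intro ε' hε'
    have hchoice : ∀ c : X, ∃ C : Set Θ, IsCompact C ∧ 1 - ε' / 2 < ((Pm c) C).toReal := by
      intro c
      haveI := hPm c
      exact tight_aux (Pm c) (by linarith)
    choose Ct hCt1 hCt2 using hchoice
    refine ⟨⋃ c ∈ t, Ct c, Set.Finite.isCompact_biUnion t.finite_toSet (fun c _ => hCt1 c), ?_⟩
    intro x hx
    have hterm : ∀ c ∈ t, φ c x * (1 - ε' / 2) ≤ φ c x * (Pm c (⋃ c ∈ t, Ct c)).toReal := by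
      intro c hc
      haveI := hPm c
      refine mul_le_mul_of_nonneg_left ?_ (hφ0 c x)
      have hsub : Ct c ⊆ ⋃ c ∈ t, Ct c := Set.subset_biUnion_of_mem hc
      have : (Pm c (Ct c)).toReal ≤ (Pm c (⋃ c ∈ t, Ct c)).toReal :=
        ENNReal.toReal_mono (measure_ne_top _ _) (measure_mono hsub)
      linarith [hCt2 c]
    have hsum : ∑ c ∈ t, φ c x * (1 - ε' / 2) = 1 - ε' / 2 := by
      rw [← Finset.sum_mul, hφsum x hx, one_mul]
    have : 1 - ε' / 2 ≤ (Pbar x (⋃ c ∈ t, Ct c)).toReal := by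
      rw [htoReal, ← hsum]
      exact Finset.sum_le_sum hterm
    linarith
end

section
/- Let X, Y, Γ, Θ be Polish spaces and let ψ : Y × Γ × Θ → [0,∞) be continuous. Let P : X → P(Θ) be weakly continuous and define ρ(y,γ,x) = ∫_Θ ψ(y,γ,θ) dP_x(θ). Let (y₀,γ₀) ∈ Y × Γ and suppose that for every ε > 0 there exist an open neighborhood U_{y₀} ⊂ Y of y₀, an open neighborhood U_{γ₀} ⊂ Γ of γ₀, and a compact K_Θ ⊂ Θ such that sup { ψ(y,γ,θ) : (y,γ,θ) ∈ U_{y₀} × U_{γ₀} × (Θ∖K_Θ) } < ε. Then ρ is continuous at every point of U_{y₀} × U_{γ₀} × X (for the neighborhoods corresponding to any fixed ε). -/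
open MeasureTheory Filter Topology Metric
open scoped ENNReal NNReal

lemma tight_of_weak_conv {Θ : Type*} [MetricSpace Θ] [CompleteSpace Θ]
    [SecondCountableTopology Θ] [MeasurableSpace Θ] [BorelSpace Θ]
    (μ : ℕ → Measure Θ) (ν : Measure Θ) (hμ : ∀ n, IsProbabilityMeasure (μ n))
    (hν : IsProbabilityMeasure ν)
    (hw : ∀ f : Θ → ℝ, Continuous f → (∃ C, ∀ t, |f t| ≤ C) →
      Tendsto (fun n => ∫ t, f t ∂(μ n)) atTop (𝓝 (∫ t, f t ∂ν)))
    {δ : ℝ} (hδ : 0 < δ) :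
    ∃ K : Set Θ, IsCompact K ∧ ∀ n, (μ n Kᶜ).toReal ≤ δ := by
  haveI := hν
  have hne : Nonempty Θ := by
    by_contra h
    rw [not_nonempty_iff] at h
    have h1 : ν Set.univ = 1 := measure_univ
    rw [Set.univ_eq_empty_iff.2 h, measure_empty] at h1
    exact zero_ne_one h1
  obtain ⟨θs, hθs⟩ := TopologicalSpace.exists_dense_seq Θ
  set r : ℕ → ℝ := fun k => 1 / (k + 1) with hr
  have hrpos : ∀ k, 0 < r k := fun k => by positivity
  set S : ℕ → ℕ → Set Θ := fun k m => ⋃ i ∈ Finset.range (m + 1), Metric.ball (θs i) (r k)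
    with hS
  have hSne : ∀ k m, (S k m).Nonempty := fun k m =>
    ⟨θs 0, Set.mem_biUnion (Finset.mem_range.2 (Nat.succ_pos m)) (Metric.mem_ball_self (hrpos k))⟩
  have hSopen : ∀ k m, IsOpen (S k m) := fun k m =>
    isOpen_biUnion fun i _ => Metric.isOpen_ball
  have hSmono : ∀ k, Monotone (S k) := fun k m m' hmm' =>
    Set.biUnion_subset_biUnion_left (Finset.range_subset_range.2 (by omega))
  have hSunion : ∀ k, (⋃ m, S k m) = Set.univ := by
    intro k
    refine Set.eq_univ_of_forall fun t => ?_
    obtain ⟨i, hi⟩ := hθs.exists_dist_lt t (hrpos k)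
    refine Set.mem_iUnion.2 ⟨i, Set.mem_biUnion (Finset.self_mem_range_succ i) ?_⟩
    rwa [Metric.mem_ball]
  set E : ℕ → ℕ → Set Θ := fun k m => {t | Metric.infDist t (S k m) ≤ r k} with hE
  have hEclosed : ∀ k m, IsClosed (E k m) :=
    fun k m => isClosed_le (Metric.continuous_infDist_pt _) continuous_const
  have hSsubE : ∀ k m, S k m ⊆ E k m := fun k m t ht => by
    simp only [hE, Set.mem_setOf_eq, Metric.infDist_zero_of_mem ht]
    exact (hrpos k).le
  have hEmono : ∀ k m m', m ≤ m' → E k m ⊆ E k m' := fun k m m' hmm' t ht =>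
    le_trans (Metric.infDist_le_infDist_of_subset (hSmono k hmm') (hSne k m)) ht
  set f : ℕ → ℕ → Θ → ℝ := fun k m t => max 0 (1 - Metric.infDist t (S k m) / r k) with hf
  have hfcont : ∀ k m, Continuous (f k m) := fun k m =>
    continuous_const.max (continuous_const.sub ((Metric.continuous_infDist_pt _).div_const _))
  have hf01 : ∀ k m t, f k m t ∈ Set.Icc (0:ℝ) 1 := by
    intro k m t
    refine ⟨le_max_left _ _, max_le zero_le_one ?_⟩
    have : 0 ≤ Metric.infDist t (S k m) / r k :=
      div_nonneg Metric.infDist_nonneg (hrpos k).le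
    linarith
  have hfint : ∀ k m (ρ : Measure Θ), IsProbabilityMeasure ρ → Integrable (f k m) ρ := by
    intro k m ρ hρ
    haveI := hρ
    refine Integrable.mono' (integrable_const 1) ((hfcont k m).aestronglyMeasurable) ?_
    filter_upwards with t
    rw [Real.norm_eq_abs, abs_of_nonneg (hf01 k m t).1]
    exact (hf01 k m t).2
  have key1 : ∀ k m (ρ : Measure Θ), IsProbabilityMeasure ρ →
      (ρ (S k m)).toReal ≤ ∫ t, f k m t ∂ρ := by
    intro k m ρ hρ
    haveI := hρ
    have heq : (ρ (S k m)).toReal = ∫ t, Set.indicator (S k m) (fun _ => (1:ℝ)) t ∂ρ := by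
      rw [integral_indicator_const (1:ℝ) ((hSopen k m).measurableSet)]
      simp
      rfl
    rw [heq]
    refine integral_mono ((integrable_const 1).indicator (hSopen k m).measurableSet)
      (hfint k m ρ hρ) fun t => ?_
    by_cases ht : t ∈ S k m
    · rw [Set.indicator_of_mem ht]
      have h0 : Metric.infDist t (S k m) = 0 := Metric.infDist_zero_of_mem ht
      simp [hf, h0]
    · rw [Set.indicator_of_notMem ht]
      exact (hf01 k m t).1
  have key2 : ∀ k m (ρ : Measure Θ), IsProbabilityMeasure ρ →
      ∫ t, f k m t ∂ρ ≤ (ρ (E k m)).toReal := by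
    intro k m ρ hρ
    haveI := hρ
    have heq : (ρ (E k m)).toReal = ∫ t, Set.indicator (E k m) (fun _ => (1:ℝ)) t ∂ρ := by
      rw [integral_indicator_const (1:ℝ) ((hEclosed k m).measurableSet)]
      simp
      rfl
    rw [heq]
    refine integral_mono (hfint k m ρ hρ)
      ((integrable_const 1).indicator (hEclosed k m).measurableSet) fun t => ?_
    by_cases ht : t ∈ E k m
    · rw [Set.indicator_of_mem ht]
      exact (hf01 k m t).2
    · rw [Set.indicator_of_notMem ht]
      have hgt : r k < Metric.infDist t (S k m) := by
        simpa [hE, not_le] using ht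
      have h1 : (1:ℝ) ≤ Metric.infDist t (S k m) / r k :=
        (one_le_div (hrpos k)).2 hgt.le
      simp only [hf]
      rw [max_eq_left (by linarith)]
  have hmeas_tendsto : ∀ k (ρ : Measure Θ), IsProbabilityMeasure ρ →
      Tendsto (fun m => (ρ (S k m)).toReal) atTop (𝓝 1) := by
    intro k ρ hρ
    haveI := hρ
    have h1 : Tendsto (fun m => ρ (S k m)) atTop (𝓝 (ρ (⋃ m, S k m))) :=
      tendsto_measure_iUnion_atTop (hSmono k)
    rw [hSunion k, measure_univ] at h1
    have h2 := (ENNReal.tendsto_toReal (by norm_num : (1:ℝ≥0∞) ≠ ⊤)).comp h1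
    exact h2
  set d : ℕ → ℝ := fun k => δ / 2 / 2 ^ k with hd
  have hdpos : ∀ k, 0 < d k := fun k => by positivity
  have claim : ∀ k, ∃ M, ∀ n, μ n (E k M)ᶜ ≤ ENNReal.ofReal (d k) := by
    intro k
    obtain ⟨m₀, hm₀⟩ := ((hmeas_tendsto k ν hν).eventually
      (eventually_gt_nhds (by linarith [hdpos k] : 1 - d k / 2 < 1))).exists
    have hν_int : 1 - d k < ∫ t, f k m₀ t ∂ν := by
      have := key1 k m₀ ν hν
      have hh := hdpos k
      linarith
    have hlim : Tendsto (fun n => ∫ t, f k m₀ t ∂(μ n)) atTop (𝓝 (∫ t, f k m₀ t ∂ν)) :=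
      hw _ (hfcont k m₀) ⟨1, fun t => by
        rw [abs_of_nonneg (hf01 k m₀ t).1]; exact (hf01 k m₀ t).2⟩
    obtain ⟨N, hN⟩ := eventually_atTop.1 (hlim.eventually (eventually_gt_nhds hν_int))
    have hch : ∀ n, ∃ m, 1 - d k < (μ n (S k m)).toReal := fun n =>
      ((hmeas_tendsto k (μ n) (hμ n)).eventually
        (eventually_gt_nhds (by linarith [hdpos k] : 1 - d k < 1))).exists
    choose mf hmf using hch
    set M := max m₀ ((Finset.range N).sup mf) with hM
    refine ⟨M, fun n => ?_⟩
    haveI := hμ n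
    have hbig : 1 - d k < (μ n (E k M)).toReal := by
      rcases lt_or_ge n N with hn | hn
      · refine lt_of_lt_of_le (hmf n) (ENNReal.toReal_mono (measure_ne_top _ _)
          (measure_mono ?_))
        exact (hSsubE k (mf n)).trans (hEmono k _ _
          (le_trans (Finset.le_sup (Finset.mem_range.2 hn)) (le_max_right _ _)))
      · have h1 := hN n hn
        have h2 := key2 k m₀ (μ n) (hμ n)
        refine lt_of_lt_of_le (lt_of_lt_of_le h1 h2) (ENNReal.toReal_mono (measure_ne_top _ _)
          (measure_mono (hEmono k _ _ (le_max_left _ _))))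
    rw [prob_compl_eq_one_sub (hEclosed k M).measurableSet]
    have hle1 : μ n (E k M) ≤ 1 := prob_le_one
    have hne' : (1 - μ n (E k M)) ≠ ⊤ :=
      ne_top_of_le_ne_top ENNReal.one_ne_top tsub_le_self
    rw [← ENNReal.ofReal_toReal hne']
    apply ENNReal.ofReal_le_ofReal
    rw [ENNReal.toReal_sub_of_le hle1 ENNReal.one_ne_top, ENNReal.toReal_one]
    linarith
  choose Mf hMf using claim
  refine ⟨⋂ k, E k (Mf k), ?_, ?_⟩
  · apply TotallyBounded.isCompact_of_isClosed
    · rw [Metric.totallyBounded_iff]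
      intro ε' hε'
      obtain ⟨k, hk⟩ := exists_nat_gt (3 / ε')
      refine ⟨θs '' ↑(Finset.range (Mf k + 1)),
        (Finset.range (Mf k + 1)).finite_toSet.image θs, ?_⟩
      intro t ht
      have ht' : t ∈ E k (Mf k) := Set.mem_iInter.1 ht k
      have h2 : Metric.infDist t (S k (Mf k)) < 2 * r k :=
        lt_of_le_of_lt ht' (by linarith [hrpos k])
      obtain ⟨s, hs, hts⟩ := (Metric.infDist_lt_iff (hSne k (Mf k))).1 h2
      obtain ⟨i, hi, hsi⟩ := Set.mem_iUnion₂.1 hs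
      refine Set.mem_iUnion₂.2 ⟨θs i, Set.mem_image_of_mem θs (by simpa using hi), ?_⟩
      rw [Metric.mem_ball]
      have htri : dist t (θs i) ≤ dist t s + dist s (θs i) := dist_triangle _ _ _
      have h3 : dist s (θs i) < r k := Metric.mem_ball.1 hsi
      have h4 : 3 * r k < ε' := by
        have hk1 : (3:ℝ) / ε' < (k:ℝ) + 1 := hk.trans (lt_add_one _)
        rw [div_lt_iff₀ hε'] at hk1
        have hkpos : (0:ℝ) < (k:ℝ) + 1 := by positivity
        rw [hr]
        rw [mul_one_div, div_lt_iff₀ hkpos]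
        nlinarith
      linarith
    · exact isClosed_iInter fun k => hEclosed k (Mf k)
  · intro n
    have h1 : μ n (⋂ k, E k (Mf k))ᶜ ≤ ∑' k, μ n (E k (Mf k))ᶜ := by
      rw [Set.compl_iInter]
      exact measure_iUnion_le _
    have h2 : ∑' k, μ n (E k (Mf k))ᶜ ≤ ∑' k, ENNReal.ofReal (d k) :=
      ENNReal.tsum_le_tsum fun k => hMf k n
    have h3 : ∑' k, ENNReal.ofReal (d k) = ENNReal.ofReal δ := by
      rw [← ENNReal.ofReal_tsum_of_nonneg (fun k => (hdpos k).le) (summable_geometric_two' δ)]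
      rw [tsum_geometric_two' δ]
    have h4 := le_trans h1 (h2.trans_eq h3)
    calc (μ n (⋂ k, E k (Mf k))ᶜ).toReal
        ≤ (ENNReal.ofReal δ).toReal := ENNReal.toReal_mono ENNReal.ofReal_ne_top h4
      _ = δ := ENNReal.toReal_ofReal hδ.le

lemma bounded_of_compact_decay {Θ : Type*} [TopologicalSpace Θ] (h : Θ → ℝ)
    (hc : Continuous h) (h0 : ∀ t, 0 ≤ h t) {K : Set Θ} (hK : IsCompact K)
    {ε : ℝ} (hdec : ∀ t ∉ K, h t < ε) : ∃ C, ∀ t, |h t| ≤ C := by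
  rcases K.eq_empty_or_nonempty with hKe | hKne
  · exact ⟨ε, fun t => by
      rw [abs_of_nonneg (h0 t)]
      exact (hdec t (by simp [hKe])).le⟩
  · obtain ⟨z, hz, hmax⟩ := hK.exists_isMaxOn hKne hc.continuousOn
    refine ⟨max (h z) ε, fun t => ?_⟩
    rw [abs_of_nonneg (h0 t)]
    by_cases ht : t ∈ K
    · exact le_max_of_le_left (hmax ht)
    · exact le_max_of_le_right (hdec t ht).le

/-- **Continuity of the mixture density (Lemma 1).**
Let `ψ : Y × Γ × Θ → [0,∞)` be a continuous kernel, `P : X → P(Θ)` weakly continuous and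
`ρ(y,γ,x) = ∫ ψ(y,γ,θ) dP_x(θ)`.  Assume that for every `ε > 0` there are open
neighborhoods `U_{y₀} ∋ y₀`, `U_{γ₀} ∋ γ₀` and a compact `K_Θ ⊆ Θ` with
`ψ < ε` on `U_{y₀} × U_{γ₀} × K_Θᶜ`.  Then, for any fixed `ε` and any such witnessing
neighborhoods, `ρ` is continuous at every point of `U_{y₀} × U_{γ₀} × X`. -/
theorem mixture_density_continuity
    {X Y Γ Θ : Type*} [TopologicalSpace X] [PolishSpace X]
    [TopologicalSpace Y] [PolishSpace Y] [TopologicalSpace Γ] [PolishSpace Γ]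
    [TopologicalSpace Θ] [PolishSpace Θ] [MeasurableSpace Θ] [BorelSpace Θ]
    (ψ : Y → Γ → Θ → ℝ) (hψ0 : ∀ y γ t, 0 ≤ ψ y γ t)
    (hψc : Continuous fun p : Y × Γ × Θ => ψ p.1 p.2.1 p.2.2)
    (Pm : X → Measure Θ) (hPprob : ∀ x, IsProbabilityMeasure (Pm x))
    (hPw : ∀ f : Θ → ℝ, Continuous f → (∃ C, ∀ t, |f t| ≤ C) →
      Continuous fun x => ∫ t, f t ∂(Pm x))
    (y₀ : Y) (γ₀ : Γ)
    (hdecay : ∀ ε : ℝ, 0 < ε → ∃ (Uy : Set Y) (Ug : Set Γ) (KΘ : Set Θ),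
      IsOpen Uy ∧ y₀ ∈ Uy ∧ IsOpen Ug ∧ γ₀ ∈ Ug ∧ IsCompact KΘ ∧
      ∀ y ∈ Uy, ∀ γ ∈ Ug, ∀ t ∉ KΘ, ψ y γ t < ε) :
    ∀ ε : ℝ, 0 < ε → ∀ (Uy : Set Y) (Ug : Set Γ) (KΘ : Set Θ),
      IsOpen Uy → y₀ ∈ Uy → IsOpen Ug → γ₀ ∈ Ug → IsCompact KΘ →
      (∀ y ∈ Uy, ∀ γ ∈ Ug, ∀ t ∉ KΘ, ψ y γ t < ε) →
      ∀ y ∈ Uy, ∀ γ ∈ Ug, ∀ x : X,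
        ContinuousAt (fun p : Y × Γ × X => ∫ t, ψ p.1 p.2.1 t ∂(Pm p.2.2)) (y, γ, x) := by
  intro ε hε Uy Ug KΘ hUyo hyUy hUgo hγUg hKΘ hsm y hy γ hγ x
  letI := TopologicalSpace.upgradeIsCompletelyMetrizable Θ
  have hψyγ : ∀ (a : Y) (b : Γ), Continuous (ψ a b) := fun a b =>
    hψc.comp (continuous_const.prodMk (continuous_const.prodMk continuous_id))
  rw [ContinuousAt, tendsto_iff_seq_tendsto]
  intro u hu
  have huy : Tendsto (fun n => (u n).1) atTop (𝓝 y) :=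
    (continuous_fst.tendsto _).comp hu
  have huγ : Tendsto (fun n => (u n).2.1) atTop (𝓝 γ) :=
    ((continuous_fst.comp continuous_snd).tendsto _).comp hu
  have hux : Tendsto (fun n => (u n).2.2) atTop (𝓝 x) :=
    ((continuous_snd.comp continuous_snd).tendsto _).comp hu
  have hwconv : ∀ f : Θ → ℝ, Continuous f → (∃ C, ∀ t, |f t| ≤ C) →
      Tendsto (fun n => ∫ t, f t ∂(Pm ((u n).2.2))) atTop (𝓝 (∫ t, f t ∂(Pm x))) :=
    fun f hf hb => ((hPw f hf hb).tendsto x).comp hux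
  rw [Metric.tendsto_atTop]
  intro η hη
  rw [← eventually_atTop]
  -- tightness
  have hδpos : 0 < η / (3 * (2 * ε + 1)) := by positivity
  set δ := η / (3 * (2 * ε + 1)) with hδdef
  obtain ⟨K, hKcomp, hKb⟩ := tight_of_weak_conv (fun n => Pm ((u n).2.2)) (Pm x)
    (fun n => hPprob _) (hPprob x) hwconv hδpos
  set K₂ := K ∪ KΘ with hK₂def
  have hK₂ : IsCompact K₂ := hKcomp.union hKΘ
  -- bound for the limit function
  have hgb : ∃ C, ∀ t, |ψ y γ t| ≤ C :=
    bounded_of_compact_decay _ (hψyγ y γ) (hψ0 y γ) hKΘ (hsm y hy γ hγ)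
  -- weak convergence term
  have htm2 : Tendsto (fun n => ∫ t, ψ y γ t ∂(Pm ((u n).2.2))) atTop
      (𝓝 (∫ t, ψ y γ t ∂(Pm x))) := hwconv _ (hψyγ y γ) hgb
  have h2ev : ∀ᶠ n in atTop,
      dist (∫ t, ψ y γ t ∂(Pm ((u n).2.2))) (∫ t, ψ y γ t ∂(Pm x)) < η / 3 :=
    htm2 (Metric.ball_mem_nhds _ (by positivity))
  -- tube lemma for uniform closeness on K₂
  have hWopen : IsOpen {q : (Y × Γ) × Θ | |ψ q.1.1 q.1.2 q.2 - ψ y γ q.2| < η / 3} := by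
    have hc : Continuous fun q : (Y × Γ) × Θ => |ψ q.1.1 q.1.2 q.2 - ψ y γ q.2| := by
      apply Continuous.abs
      apply Continuous.sub
      · exact hψc.comp (((continuous_fst.comp continuous_fst).prodMk
          ((continuous_snd.comp continuous_fst).prodMk continuous_snd)))
      · exact (hψyγ y γ).comp continuous_snd
    exact isOpen_lt hc continuous_const
  have hsub : (({(y, γ)} : Set (Y × Γ)) ×ˢ K₂) ⊆
      {q : (Y × Γ) × Θ | |ψ q.1.1 q.1.2 q.2 - ψ y γ q.2| < η / 3} := by
    rintro ⟨⟨a, b⟩, t⟩ ⟨ha, -⟩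
    have : (a, b) = (y, γ) := ha
    rw [Prod.mk.injEq] at this
    obtain ⟨rfl, rfl⟩ := this
    simp only [Set.mem_setOf_eq, sub_self, abs_zero]
    positivity
  obtain ⟨V₁, V₂, hV₁o, hV₂o, hyγV₁, hK₂V₂, hVsub⟩ :=
    generalized_tube_lemma isCompact_singleton hK₂ hWopen hsub
  have hev1 : ∀ᶠ n in atTop, ((u n).1, (u n).2.1) ∈ V₁ :=
    (huy.prodMk_nhds huγ) (hV₁o.mem_nhds (hyγV₁ rfl))
  have hevy : ∀ᶠ n in atTop, (u n).1 ∈ Uy := huy (hUyo.mem_nhds hy)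
  have hevγ : ∀ᶠ n in atTop, (u n).2.1 ∈ Ug := huγ (hUgo.mem_nhds hγ)
  filter_upwards [hev1, hevy, hevγ, h2ev] with n h1 h2 h3 h4
  haveI := hPprob ((u n).2.2)
  set μn := Pm ((u n).2.2) with hμndef
  have hgnb : ∃ C, ∀ t, |ψ (u n).1 (u n).2.1 t| ≤ C :=
    bounded_of_compact_decay _ (hψyγ _ _) (hψ0 _ _) hKΘ (hsm _ h2 _ h3)
  have hgint : Integrable (ψ y γ) μn := by
    obtain ⟨C, hC⟩ := hgb
    refine Integrable.mono' (integrable_const C) ((hψyγ y γ).aestronglyMeasurable) ?_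
    filter_upwards with t using (by rw [Real.norm_eq_abs]; exact hC t)
  have hgnint : Integrable (ψ (u n).1 (u n).2.1) μn := by
    obtain ⟨C, hC⟩ := hgnb
    refine Integrable.mono' (integrable_const C) ((hψyγ _ _).aestronglyMeasurable) ?_
    filter_upwards with t using (by rw [Real.norm_eq_abs]; exact hC t)
  have hK₂measc : MeasurableSet K₂ᶜ := hK₂.isClosed.measurableSet.compl
  -- pointwise bound
  have hpt : ∀ t, |ψ (u n).1 (u n).2.1 t - ψ y γ t| ≤
      η / 3 + Set.indicator K₂ᶜ (fun _ => 2 * ε) t := by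
    intro t
    by_cases ht : t ∈ K₂
    · rw [Set.indicator_of_notMem (by simpa using ht)]
      have hmem : (((u n).1, (u n).2.1), t) ∈ V₁ ×ˢ V₂ := ⟨h1, hK₂V₂ ht⟩
      have := hVsub hmem
      simp only [Set.mem_setOf_eq] at this
      linarith
    · rw [Set.indicator_of_mem (Set.mem_compl ht)]
      have htK : t ∉ KΘ := fun hh => ht (Set.mem_union_right _ hh)
      have e1 : ψ (u n).1 (u n).2.1 t < ε := hsm _ h2 _ h3 t htK
      have e2 : ψ y γ t < ε := hsm y hy γ hγ t htK
      have f1 := hψ0 (u n).1 (u n).2.1 t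
      have f2 := hψ0 y γ t
      have : |ψ (u n).1 (u n).2.1 t - ψ y γ t| ≤ 2 * ε :=
        abs_le.2 ⟨by linarith, by linarith⟩
      linarith
  -- integral bound for the first term
  have hibound : ∫ t, |ψ (u n).1 (u n).2.1 t - ψ y γ t| ∂μn ≤ η / 3 + 2 * ε * δ := by
    have hint1 : Integrable (fun t => |ψ (u n).1 (u n).2.1 t - ψ y γ t|) μn :=
      (hgnint.sub hgint).abs
    have hint2 : Integrable (fun t => η / 3 + Set.indicator K₂ᶜ (fun _ => 2 * ε) t) μn :=
      (integrable_const _).add ((integrable_const _).indicator hK₂measc)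
    have step1 := integral_mono hint1 hint2 hpt
    have step2 : ∫ t, (η / 3 + Set.indicator K₂ᶜ (fun _ => 2 * ε) t) ∂μn
        = η / 3 + 2 * ε * (μn K₂ᶜ).toReal := by
      rw [integral_add (integrable_const _) ((integrable_const _).indicator hK₂measc),
        integral_const, integral_indicator_const _ hK₂measc]
      simp [measure_univ, mul_comm]
      exact Or.inl rfl
    have step3 : (μn K₂ᶜ).toReal ≤ δ := by
      refine le_trans (ENNReal.toReal_mono (measure_ne_top _ _) (measure_mono ?_)) (hKb n)
      exact Set.compl_subset_compl.2 Set.subset_union_left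
    calc ∫ t, |ψ (u n).1 (u n).2.1 t - ψ y γ t| ∂μn
        ≤ η / 3 + 2 * ε * (μn K₂ᶜ).toReal := step1.trans_eq step2
      _ ≤ η / 3 + 2 * ε * δ := by
          have h2ε : (0:ℝ) ≤ 2 * ε := by linarith
          nlinarith
  have hεδ : 2 * ε * δ < η / 3 := by
    have hδeq : δ * (3 * (2 * ε + 1)) = η := by
      rw [hδdef]
      field_simp
    nlinarith
  have h5 : |(∫ t, ψ (u n).1 (u n).2.1 t ∂μn) - ∫ t, ψ y γ t ∂μn| ≤
      ∫ t, |ψ (u n).1 (u n).2.1 t - ψ y γ t| ∂μn := by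
    rw [← integral_sub hgnint hgint]
    simpa [Real.norm_eq_abs] using
      norm_integral_le_integral_norm (fun t => ψ (u n).1 (u n).2.1 t - ψ y γ t) (μ := μn)
  rw [Real.dist_eq] at h4 ⊢
  have hsplit : |(∫ t, ψ (u n).1 (u n).2.1 t ∂μn) - ∫ t, ψ y γ t ∂(Pm x)| ≤
      |(∫ t, ψ (u n).1 (u n).2.1 t ∂μn) - ∫ t, ψ y γ t ∂μn| +
      |(∫ t, ψ y γ t ∂μn) - ∫ t, ψ y γ t ∂(Pm x)| := abs_sub_le _ _ _
  simp only [Function.comp_apply]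
  calc |(∫ t, ψ (u n).1 (u n).2.1 t ∂μn) - ∫ t, ψ y γ t ∂(Pm x)|
      ≤ |(∫ t, ψ (u n).1 (u n).2.1 t ∂μn) - ∫ t, ψ y γ t ∂μn| +
        |(∫ t, ψ y γ t ∂μn) - ∫ t, ψ y γ t ∂(Pm x)| := hsplit
    _ < (η / 3 + 2 * ε * δ) + η / 3 := by
        have := h5.trans hibound
        linarith
    _ < η := by linarith
end

section
/- Let X, Y, Γ, Θ be Polish spaces. Suppose π_i : X → [0,∞) (i ∈ ℕ) are continuous with ∑_{i=1}^∞ π_i(x) = 1 for all x ∈ X, θ_i : X → Θ are continuous, and ψ : Y × Γ × Θ → [0,∞) is continuous. Let (y₀,γ₀) ∈ Y × Γ and suppose there exist open neighborhoods U_{y₀} ∋ y₀ and U_{γ₀} ∋ γ₀ such that sup { ψ(y,γ,θ) : (y,γ,θ) ∈ U_{y₀} × U_{γ₀} × Θ } < ∞. Then the function q(y,γ,x) = ∑_{i=1}^∞ π_i(x) ψ(y,γ,θ_i(x)) is continuous at every point of U_{y₀} × U_{γ₀} × X. -/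
open MeasureTheory Filter Topology

/-- **Continuity of the mixture density induced by a continuous parameter DDP
(pathwise content of Lemma 2).**  If the weights `π i : X → [0,∞)` are continuous with
`∑' i, π i x = 1`, the atoms `θ i : X → Θ` are continuous, `ψ` is a continuous
nonnegative kernel, and `ψ` is bounded on `U_{y₀} × U_{γ₀} × Θ` for some open
neighborhoods `U_{y₀} ∋ y₀`, `U_{γ₀} ∋ γ₀`, then
`q(y,γ,x) = ∑' i, π i x * ψ(y,γ,θ i x)` is continuous at every point of
`U_{y₀} × U_{γ₀} × X`. -/
theorem ddp_mixture_density_continuity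
    {X Y Γ Θ : Type*} [TopologicalSpace X] [PolishSpace X]
    [TopologicalSpace Y] [PolishSpace Y] [TopologicalSpace Γ] [PolishSpace Γ]
    [TopologicalSpace Θ] [PolishSpace Θ]
    (π : ℕ → X → ℝ) (θ : ℕ → X → Θ)
    (hπcont : ∀ i, Continuous (π i)) (hπ0 : ∀ i x, 0 ≤ π i x)
    (hπ1 : ∀ x, ∑' i, π i x = 1)
    (hθcont : ∀ i, Continuous (θ i))
    (ψ : Y → Γ → Θ → ℝ) (hψ0 : ∀ y γ t, 0 ≤ ψ y γ t)
    (hψc : Continuous fun p : Y × Γ × Θ => ψ p.1 p.2.1 p.2.2)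
    (y₀ : Y) (γ₀ : Γ) (Uy : Set Y) (Ug : Set Γ)
    (hUy : IsOpen Uy) (hy₀ : y₀ ∈ Uy) (hUg : IsOpen Ug) (hγ₀ : γ₀ ∈ Ug)
    (hbdd : ∃ C : ℝ, ∀ y ∈ Uy, ∀ γ ∈ Ug, ∀ t : Θ, ψ y γ t ≤ C) :
    ∀ y ∈ Uy, ∀ γ ∈ Ug, ∀ x : X,
      ContinuousAt (fun p : Y × Γ × X =>
        ∑' i, π i p.2.2 * ψ p.1 p.2.1 (θ i p.2.2)) (y, γ, x) := by
  intro y hy γ hγ x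
  obtain ⟨C, hC⟩ := hbdd
  set C' : ℝ := max C 1 with hC'def
  have hC'pos : (0:ℝ) < C' := lt_of_lt_of_le one_pos (le_max_right _ _)
  have hψC' : ∀ y ∈ Uy, ∀ γ ∈ Ug, ∀ t, ψ y γ t ≤ C' :=
    fun y hy γ hγ t => (hC y hy γ hγ t).trans (le_max_left _ _)
  have hπsum : ∀ x' : X, Summable fun i => π i x' := by
    intro x'
    by_contra h
    have h1 := hπ1 x'
    rw [tsum_eq_zero_of_not_summable h] at h1
    norm_num at h1
  set f : ℕ → Y × Γ × X → ℝ := fun i p => π i p.2.2 * ψ p.1 p.2.1 (θ i p.2.2) with hf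
  have hf0 : ∀ i p, 0 ≤ f i p := fun i p => mul_nonneg (hπ0 _ _) (hψ0 _ _ _)
  have hfle : ∀ i, ∀ p : Y × Γ × X, p.1 ∈ Uy → p.2.1 ∈ Ug → f i p ≤ C' * π i p.2.2 := by
    intro i p hp1 hp2
    rw [mul_comm]
    exact mul_le_mul_of_nonneg_left (hψC' _ hp1 _ hp2 _) (hπ0 _ _)
  have hfsum : ∀ p : Y × Γ × X, p.1 ∈ Uy → p.2.1 ∈ Ug → Summable fun i => f i p :=
    fun p hp1 hp2 => Summable.of_nonneg_of_le (fun i => hf0 i p) (fun i => hfle i p hp1 hp2)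
      ((hπsum p.2.2).mul_left C')
  have hfcont : ∀ i, Continuous (f i) := fun i =>
    ((hπcont i).comp (continuous_snd.comp continuous_snd)).mul
      (hψc.comp (continuous_fst.prodMk ((continuous_fst.comp continuous_snd).prodMk
        ((hθcont i).comp (continuous_snd.comp continuous_snd)))))
  rw [ContinuousAt, Metric.tendsto_nhds]
  intro ε hε
  set δ : ℝ := ε / (3 * C') with hδdef
  have hδpos : 0 < δ := div_pos hε (by positivity)
  have hC'δ : C' * δ = ε / 3 := by
    rw [hδdef]; field_simp
  -- choose a finite set with small tail at x
  obtain ⟨s, hs⟩ : ∃ s : Finset ℕ, (∑' i : {i // i ∉ s}, π i x) < δ := by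
    have := (tendsto_order.1 (tendsto_tsum_compl_atTop_zero (fun i => π i x))).2 δ hδpos
    exact this.exists
  -- the tail of the weights
  set T : X → ℝ := fun x' => 1 - ∑ i ∈ s, π i x' with hT
  have hTeq : ∀ x' : X, T x' = ∑' i : {i // i ∉ s}, π i x' := by
    intro x'
    have := Summable.sum_add_tsum_compl (s := s) (hπsum x')
    rw [hπ1 x'] at this
    have h2 : (∑' (i : ↑(↑s : Set ℕ)ᶜ), π (↑i) x') = ∑' i : {i // i ∉ s}, π i x' := rfl
    rw [h2] at this
    rw [hT]
    dsimp only
    linarith [this]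
  have hTcont : Continuous T := by
    apply continuous_const.sub
    exact continuous_finset_sum _ (fun i _ => hπcont i)
  have hTx : T x < δ := by rw [hTeq]; exact hs
  -- finite partial sum
  set F : Y × Γ × X → ℝ := fun p => ∑ i ∈ s, f i p with hF
  have hFcont : Continuous F := continuous_finset_sum _ (fun i _ => hfcont i)
  -- tail bound for q - F
  have hqF : ∀ p : Y × Γ × X, p.1 ∈ Uy → p.2.1 ∈ Ug →
      (∑' i, f i p) - F p ≤ C' * T p.2.2 ∧ 0 ≤ (∑' i, f i p) - F p := by
    intro p hp1 hp2
    have hsum := hfsum p hp1 hp2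
    have hcompl := Summable.sum_add_tsum_compl (s := s) hsum
    have htail : (∑' i, f i p) - F p = ∑' i : {i // i ∉ s}, f i p := by
      have h2 : (∑' (i : ↑(↑s : Set ℕ)ᶜ), f (↑i) p) = ∑' i : {i // i ∉ s}, f i p := rfl
      rw [h2] at hcompl
      rw [hF]; dsimp only; linarith [hcompl]
    constructor
    · rw [htail, hTeq]
      calc (∑' i : {i // i ∉ s}, f i p) ≤ ∑' i : {i // i ∉ s}, C' * π (↑i) p.2.2 := by
            apply Summable.tsum_le_tsum
            · exact fun i => hfle i p hp1 hp2
            · exact hsum.subtype _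
            · exact ((hπsum p.2.2).mul_left C').subtype _
        _ = C' * ∑' i : {i // i ∉ s}, π (↑i) p.2.2 := tsum_mul_left
    · rw [htail]
      exact tsum_nonneg (fun i => hf0 _ _)
  -- eventually statements
  have h1 : ∀ᶠ p : Y × Γ × X in 𝓝 (y, γ, x), p.1 ∈ Uy :=
    (continuous_fst.tendsto _).eventually (hUy.eventually_mem hy)
  have h2 : ∀ᶠ p : Y × Γ × X in 𝓝 (y, γ, x), p.2.1 ∈ Ug :=
    ((continuous_fst.comp continuous_snd).tendsto _).eventually (hUg.eventually_mem hγ)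
  have h3 : ∀ᶠ p : Y × Γ × X in 𝓝 (y, γ, x), T p.2.2 < δ :=
    (((hTcont.comp (continuous_snd.comp continuous_snd)).tendsto _).eventually_lt_const hTx)
  have h4 : ∀ᶠ p : Y × Γ × X in 𝓝 (y, γ, x), dist (F p) (F (y, γ, x)) < ε / 3 :=
    Metric.tendsto_nhds.mp (hFcont.continuousAt (x := (y, γ, x))) (ε / 3) (by positivity)
  filter_upwards [h1, h2, h3, h4] with p hp1 hp2 hp3 hp4
  have hp0 := hqF (y, γ, x) hy hγ
  have hpp := hqF p hp1 hp2
  have hd1 : dist (∑' i, f i p) (F p) < ε / 3 := by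
    rw [Real.dist_eq, abs_of_nonneg (by linarith [hpp.2])]
    calc (∑' i, f i p) - F p ≤ C' * T p.2.2 := hpp.1
      _ < C' * δ := by exact mul_lt_mul_of_pos_left hp3 hC'pos
      _ = ε / 3 := hC'δ
  have hd3 : dist (F (y, γ, x)) (∑' i, f i (y, γ, x)) < ε / 3 := by
    rw [dist_comm, Real.dist_eq, abs_of_nonneg (by linarith [hp0.2])]
    calc (∑' i, f i (y, γ, x)) - F (y, γ, x) ≤ C' * T x := hp0.1
      _ < C' * δ := mul_lt_mul_of_pos_left hTx hC'pos
      _ = ε / 3 := hC'δ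
  calc dist (∑' i, f i p) (∑' i, f i (y, γ, x))
      ≤ dist (∑' i, f i p) (F p) + dist (F p) (F (y, γ, x))
        + dist (F (y, γ, x)) (∑' i, f i (y, γ, x)) := dist_triangle4 _ _ _ _
    _ < ε / 3 + ε / 3 + ε / 3 := by linarith
    _ = ε := by ring
end

section
/- Let X, Y, Γ, Θ be Polish spaces, let ν_Y be a locally finite Borel measure on Y, and let ψ : Y × Γ × Θ → [0,∞) be continuous with ∫_Y ψ(y,γ,θ) dν_Y(y) = 1 for every (γ,θ) ∈ Γ × Θ. Let P : X → P(Θ) be weakly continuous and define, for each (γ,x) ∈ Γ × X, the probability measure M^P_{γ,x} on Y by M^P_{γ,x}(B) = ∫_B ∫_Θ ψ(y,γ,θ) dP_x(θ) dν_Y(y). Then the induced mixture is uniformly continuous: for every (γ₀,x₀) ∈ Γ × X, lim_{(γ,x)→(γ₀,x₀)} ‖M^P_{γ,x} − M^P_{γ₀,x₀}‖_TV = 0. -/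
open MeasureTheory Filter Topology
open scoped ENNReal NNReal

section MyEnv
variable {E : Type*} [PseudoMetricSpace E] [Nonempty E]

noncomputable def myEnv (ρ : E → ℝ) (m : ℕ) (p : E) : ℝ :=
  ⨅ q : E, (ρ q + m * dist p q)

variable {ρ : E → ℝ}



lemma myEnv_bdd (h0 : ∀ q, 0 ≤ ρ q) (m : ℕ) (p : E) : BddBelow (Set.range fun q : E => ρ q + m * dist p q) :=
  ⟨0, by rintro r ⟨q, rfl⟩; have h := h0 q; have := dist_nonneg (x := p) (y := q); positivity⟩

lemma myEnv_nonneg (h0 : ∀ q, 0 ≤ ρ q) (m : ℕ) (p : E) : 0 ≤ myEnv ρ m p :=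
  le_ciInf fun q => by have h := h0 q; have := dist_nonneg (x := p) (y := q); positivity

lemma myEnv_le (h0 : ∀ q, 0 ≤ ρ q) (m : ℕ) (p : E) : myEnv ρ m p ≤ ρ p := by
  simpa [myEnv] using ciInf_le (myEnv_bdd h0 m p) p

lemma myEnv_lip (h0 : ∀ q, 0 ≤ ρ q) (m : ℕ) (p p' : E) : myEnv ρ m p ≤ myEnv ρ m p' + m * dist p p' := by
  rw [← sub_le_iff_le_add]
  refine le_ciInf fun q => ?_
  have h1 : myEnv ρ m p ≤ ρ q + m * dist p q := ciInf_le (myEnv_bdd h0 m p) q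
  have h2 : dist p q ≤ dist p p' + dist p' q := dist_triangle _ _ _
  have hm : (0:ℝ) ≤ m := Nat.cast_nonneg m
  nlinarith

lemma myEnv_mono (h0 : ∀ q, 0 ≤ ρ q) (p : E) : Monotone fun m : ℕ => myEnv ρ m p := by
  intro m m' h
  refine ciInf_mono (myEnv_bdd h0 m p) fun q => ?_
  have : (m:ℝ) ≤ m' := Nat.cast_le.2 h
  have := dist_nonneg (x := p) (y := q)
  nlinarith

lemma myEnv_continuous (h0 : ∀ q, 0 ≤ ρ q) (m : ℕ) : Continuous (myEnv ρ m) := by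
  have : LipschitzWith m (myEnv ρ m) := by
    refine LipschitzWith.of_dist_le_mul fun p p' => ?_
    rw [Real.dist_eq, abs_sub_le_iff]
    have h1 := myEnv_lip h0 m p p'
    have h2 := myEnv_lip h0 m p' p
    rw [dist_comm p' p] at h2
    constructor <;> [skip; skip] <;> simp only [NNReal.coe_natCast] <;> linarith
  exact this.continuous

lemma myEnv_approx (h0 : ∀ q, 0 ≤ ρ q) (hρ : Continuous ρ) {c : ℝ} (hc : ∀ q, ρ q ≤ c) (p : E) {ε : ℝ}
    (hε : 0 < ε) : ∃ m : ℕ, ρ p - ε ≤ myEnv ρ m p := by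
  have hev : ∀ᶠ q in 𝓝 p, ρ p - ε < ρ q :=
    (hρ.continuousAt (x := p)).eventually_const_lt (by linarith)
  obtain ⟨δ, hδ, hb⟩ := Metric.eventually_nhds_iff.1 hev
  obtain ⟨m, hm⟩ : ∃ m : ℕ, c ≤ m * δ := by
    refine ⟨⌈c / δ⌉₊, ?_⟩
    have := Nat.le_ceil (c / δ)
    rw [div_le_iff₀ hδ] at this
    linarith
  refine ⟨m, le_ciInf fun q => ?_⟩
  by_cases h : dist q p < δ
  · have := hb h
    have hm0 : (0:ℝ) ≤ m := Nat.cast_nonneg m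
    have := dist_nonneg (x := p) (y := q)
    nlinarith
  · push_neg at h
    have h0q := h0 q
    have hcp := hc p
    have : (m:ℝ) * δ ≤ m * dist p q := by
      have hm0 : (0:ℝ) ≤ m := Nat.cast_nonneg m
      rw [dist_comm p q]; nlinarith
    linarith

end MyEnv

/-- **Total-variation continuity of the induced mixture (Theorem 9).**
Let `ν_Y` be a locally finite Borel measure on `Y` and `ψ` a continuous nonnegative
kernel with `∫ ψ(y,γ,θ) dν_Y(y) = 1` for all `(γ,θ)`.  If `P : X → P(Θ)` is weakly
continuous, then the induced mixture `M_{γ,x} = ν_Y.withDensity (y ↦ ∫ ψ(y,γ,θ) dP_x)`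
is continuous in total variation: for every `(γ₀,x₀)` and `ε > 0`, eventually for
`(γ,x)` near `(γ₀,x₀)` we have `sup_B |M_{γ,x}(B) − M_{γ₀,x₀}(B)| < ε`. -/
theorem mixture_total_variation_continuity
    {X Y Γ Θ : Type*} [TopologicalSpace X] [PolishSpace X]
    [TopologicalSpace Y] [PolishSpace Y] [MeasurableSpace Y] [BorelSpace Y]
    [TopologicalSpace Γ] [PolishSpace Γ]
    [TopologicalSpace Θ] [PolishSpace Θ] [MeasurableSpace Θ] [BorelSpace Θ]
    (νY : Measure Y) [IsLocallyFiniteMeasure νY]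
    (ψ : Y → Γ → Θ → ℝ) (hψ0 : ∀ y γ t, 0 ≤ ψ y γ t)
    (hψc : Continuous fun p : Y × Γ × Θ => ψ p.1 p.2.1 p.2.2)
    (hψint : ∀ γ t, ∫ y, ψ y γ t ∂νY = 1)
    (Pm : X → Measure Θ) (hPprob : ∀ x, IsProbabilityMeasure (Pm x))
    (hPw : ∀ f : Θ → ℝ, Continuous f → (∃ C, ∀ t, |f t| ≤ C) →
      Continuous fun x => ∫ t, f t ∂(Pm x))
    (M : Γ → X → Measure Y)
    (hM : ∀ γ x, M γ x =
      νY.withDensity fun y => ENNReal.ofReal (∫ t, ψ y γ t ∂(Pm x)))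
    (γ₀ : Γ) (x₀ : X) (ε : ℝ) (hε : 0 < ε) :
    ∀ᶠ p : Γ × X in 𝓝 (γ₀, x₀), ∀ B : Set Y, MeasurableSet B →
      |(M p.1 p.2 B).toReal - (M γ₀ x₀ B).toReal| < ε := by
  letI := TopologicalSpace.upgradeIsCompletelyMetrizable Γ
  letI := TopologicalSpace.upgradeIsCompletelyMetrizable Θ
  have hΘ : Nonempty Θ := by
    by_contra h
    have h1 := (hPprob x₀).measure_univ
    rw [Set.univ_eq_empty_iff.2 (not_nonempty_iff.1 h), measure_empty] at h1
    exact zero_ne_one h1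
  haveI := hΘ
  haveI : Nonempty Γ := ⟨γ₀⟩
  -- continuity of slices
  have hc1 : ∀ γ, Continuous fun q : Y × Θ => ψ q.1 γ q.2 :=
    fun γ => hψc.comp (continuous_fst.prodMk (continuous_const.prodMk continuous_snd))
  have hc2 : ∀ y, Continuous fun q : Γ × Θ => ψ y q.1 q.2 :=
    fun y => hψc.comp (continuous_const.prodMk continuous_id)
  have hc3 : ∀ y γ, Continuous fun t : Θ => ψ y γ t :=
    fun y γ => hψc.comp (continuous_const.prodMk (continuous_const.prodMk continuous_id))
  set G : Γ → X → Y → ℝ≥0∞ :=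
    fun γ x y => ∫⁻ t, ENNReal.ofReal (ψ y γ t) ∂(Pm x) with hG
  have hGmeas : ∀ γ x, Measurable (G γ x) := by
    intro γ x
    haveI := hPprob x
    exact Measurable.lintegral_prod_right (f := fun y t => ENNReal.ofReal (ψ y γ t))
      (ENNReal.measurable_ofReal.comp (hc1 γ).measurable)
  have hone : ∀ γ t, ∫⁻ y, ENNReal.ofReal (ψ y γ t) ∂νY = 1 := by
    intro γ t
    have hint : Integrable (fun y => ψ y γ t) νY := integrable_of_integral_eq_one (hψint γ t)
    rw [← ofReal_integral_eq_lintegral_ofReal hint (Eventually.of_forall fun y => hψ0 y γ t),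
      hψint γ t, ENNReal.ofReal_one]
  have hGint : ∀ γ x, ∫⁻ y, G γ x y ∂νY = 1 := by
    intro γ x
    haveI := hPprob x
    show ∫⁻ y, ∫⁻ t, ENNReal.ofReal (ψ y γ t) ∂(Pm x) ∂νY = 1
    rw [lintegral_lintegral_swap (f := fun y t => ENNReal.ofReal (ψ y γ t))
      (show AEMeasurable (Function.uncurry fun y t => ENNReal.ofReal (ψ y γ t))
          (νY.prod (Pm x)) from
        ((ENNReal.measurable_ofReal.comp (hc1 γ).measurable)).aemeasurable)]
    simp only [hone]
    simp
  have hGfin : ∀ γ x, ∀ᵐ y ∂νY, G γ x y < ∞ := fun γ x =>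
    ae_lt_top (hGmeas γ x) (by rw [hGint]; exact ENNReal.one_ne_top)
  have hMG : ∀ γ x, M γ x = νY.withDensity (G γ x) := by
    intro γ x
    haveI := hPprob x
    rw [hM]
    refine withDensity_congr_ae ?_
    filter_upwards [hGfin γ x] with y hy
    have hint : Integrable (fun t => ψ y γ t) (Pm x) := by
      refine ⟨(hc3 y γ).aestronglyMeasurable, ?_⟩
      rw [hasFiniteIntegral_iff_ofReal (Eventually.of_forall fun t => hψ0 y γ t)]
      exact hy
    exact ofReal_integral_eq_lintegral_ofReal hint (Eventually.of_forall fun t => hψ0 y γ t)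
  have hMB : ∀ γ x {B : Set Y}, MeasurableSet B → M γ x B = ∫⁻ y in B, G γ x y ∂νY := by
    intro γ x B hB; rw [hMG, withDensity_apply _ hB]
  have hMuniv : ∀ γ x, M γ x Set.univ = 1 := by
    intro γ x; rw [hMB γ x MeasurableSet.univ, Measure.restrict_univ, hGint]
  have hfinS : ∀ γ x (S : Set Y), M γ x S ≠ ∞ := by
    intro γ x S
    exact ((measure_mono (Set.subset_univ S)).trans_lt
      (by rw [hMuniv]; exact ENNReal.one_lt_top)).ne
  set d : Γ × X → ℝ≥0∞ := fun p => ∫⁻ y, (G γ₀ x₀ y - G p.1 p.2 y) ∂νY with hd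
  have hdfin : ∀ p, d p ≠ ∞ := by
    intro p
    refine ne_top_of_le_ne_top (by rw [hGint]; exact ENNReal.one_ne_top)
      (lintegral_mono fun y => tsub_le_self)
  have hclaim : ∀ p : Γ × X, ∀ B : Set Y, MeasurableSet B →
      M γ₀ x₀ B - M p.1 p.2 B ≤ d p := by
    intro p B hB
    rw [hMB _ _ hB, hMB _ _ hB]
    exact (lintegral_sub_le _ _ (hGmeas p.1 p.2)).trans (setLIntegral_le_lintegral _ _)
  have habs : ∀ p : Γ × X, ∀ B : Set Y, MeasurableSet B →
      |(M p.1 p.2 B).toReal - (M γ₀ x₀ B).toReal| ≤ (d p).toReal := by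
    intro p B hB
    have key : ∀ {a b : ℝ≥0∞}, a ≠ ∞ → b ≠ ∞ → b - a ≤ d p →
        b.toReal - a.toReal ≤ (d p).toReal := by
      intro a b ha hb h
      rcases le_total b a with hba | hab
      · have h1 : b.toReal ≤ a.toReal := ENNReal.toReal_mono ha hba
        have h2 : (0:ℝ) ≤ (d p).toReal := ENNReal.toReal_nonneg
        linarith
      · have h3 := ENNReal.toReal_mono (hdfin p) h
        rwa [ENNReal.toReal_sub_of_le hab hb] at h3
    rw [abs_sub_le_iff]
    constructor
    · have e1 : (M p.1 p.2 B).toReal + (M p.1 p.2 Bᶜ).toReal = 1 := by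
        rw [← ENNReal.toReal_add (hfinS _ _ _) (hfinS _ _ _),
          measure_add_measure_compl hB, hMuniv, ENNReal.toReal_one]
      have e2 : (M γ₀ x₀ B).toReal + (M γ₀ x₀ Bᶜ).toReal = 1 := by
        rw [← ENNReal.toReal_add (hfinS _ _ _) (hfinS _ _ _),
          measure_add_measure_compl hB, hMuniv, ENNReal.toReal_one]
      have h2' := key (hfinS p.1 p.2 Bᶜ) (hfinS γ₀ x₀ Bᶜ) (hclaim p Bᶜ hB.compl)
      linarith
    · exact key (hfinS p.1 p.2 B) (hfinS γ₀ x₀ B) (hclaim p B hB)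
  -- key pointwise liminf
  have hlim : ∀ y : Y, ∀ a : ℝ≥0∞, a < G γ₀ x₀ y →
      ∀ᶠ p : Γ × X in 𝓝 (γ₀, x₀), a < G p.1 p.2 y := by
    intro y a ha
    haveI := hPprob x₀
    have hsupc : (⨆ c : ℕ, ∫⁻ t, ENNReal.ofReal (min (ψ y γ₀ t) c) ∂(Pm x₀))
        = G γ₀ x₀ y := by
      rw [← lintegral_iSup]
      · refine lintegral_congr fun t => ?_
        refine le_antisymm (iSup_le fun c => ENNReal.ofReal_le_ofReal (min_le_left _ _)) ?_
        refine le_iSup_of_le ⌈ψ y γ₀ t⌉₊ ?_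
        rw [min_eq_left (Nat.le_ceil _)]
      · intro c
        exact ENNReal.measurable_ofReal.comp (((hc3 y γ₀).min continuous_const).measurable)
      · intro c c' h t
        exact ENNReal.ofReal_le_ofReal (min_le_min le_rfl (Nat.cast_le.2 h))
    rw [← hsupc, lt_iSup_iff] at ha
    obtain ⟨c, hac⟩ := ha
    set ρ : Γ × Θ → ℝ := fun q => min (ψ y q.1 q.2) c with hρdef
    have hρ0 : ∀ q, 0 ≤ ρ q := fun q => le_min (hψ0 _ _ _) (Nat.cast_nonneg c)
    have hρc : ∀ q, ρ q ≤ c := fun q => min_le_right _ _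
    have hρcont : Continuous ρ := (hc2 y).min continuous_const
    have hsupm : (⨆ m : ℕ, ∫⁻ t, ENNReal.ofReal (myEnv ρ m (γ₀, t)) ∂(Pm x₀))
        = ∫⁻ t, ENNReal.ofReal (ρ (γ₀, t)) ∂(Pm x₀) := by
      rw [← lintegral_iSup]
      · refine lintegral_congr fun t => ?_
        refine le_antisymm (iSup_le fun m => ENNReal.ofReal_le_ofReal (myEnv_le hρ0 m _)) ?_
        refine le_of_forall_lt fun w hw => ?_
        have hwtop : w ≠ ∞ := hw.ne_top
        have hwt : w.toReal < ρ (γ₀, t) := ENNReal.toReal_lt_of_lt_ofReal hw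
        have hεr : 0 < (ρ (γ₀, t) - w.toReal) / 2 := by
          have := ENNReal.toReal_nonneg (a := w); linarith
        obtain ⟨m, hm⟩ := myEnv_approx hρ0 hρcont hρc (γ₀, t) hεr
        refine lt_of_lt_of_le ?_ (le_iSup
          (fun m => ENNReal.ofReal (myEnv ρ m (γ₀, t))) m)
        rw [← ENNReal.ofReal_toReal hwtop]
        refine (ENNReal.ofReal_lt_ofReal_iff ?_).2 ?_
        · have := ENNReal.toReal_nonneg (a := w); linarith
        · linarith
      · intro m
        exact ENNReal.measurable_ofReal.comp
          (((myEnv_continuous hρ0 m).comp (continuous_const.prodMk continuous_id)).measurable)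
      · intro m m' h t
        exact ENNReal.ofReal_le_ofReal (myEnv_mono hρ0 _ h)
    rw [show (fun t => ENNReal.ofReal (min (ψ y γ₀ t) (c:ℝ)))
        = fun t => ENNReal.ofReal (ρ (γ₀, t)) from rfl, ← hsupm, lt_iSup_iff] at hac
    obtain ⟨m, ham⟩ := hac
    obtain ⟨b, hab, hbm⟩ := exists_between ham
    set F : Θ → ℝ := fun t => myEnv ρ m (γ₀, t) with hF
    have hFcont : Continuous F :=
      (myEnv_continuous hρ0 m).comp (continuous_const.prodMk continuous_id)
    have hF0 : ∀ t, 0 ≤ F t := fun t => myEnv_nonneg hρ0 m _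
    have hFc : ∀ t, F t ≤ c := fun t => (myEnv_le hρ0 m _).trans (hρc _)
    have hFbd : ∀ t, |F t| ≤ c := fun t => abs_le.2 ⟨by have h1 := hF0 t; linarith, hFc t⟩
    have hcx : Continuous fun x => ∫ t, F t ∂(Pm x) := hPw F hFcont ⟨c, hFbd⟩
    have hFint : ∀ x, ∫⁻ t, ENNReal.ofReal (F t) ∂(Pm x)
        = ENNReal.ofReal (∫ t, F t ∂(Pm x)) := by
      intro x
      haveI := hPprob x
      have hFi : Integrable F (Pm x) := by
        refine Integrable.mono' (integrable_const (c:ℝ)) hFcont.aestronglyMeasurable ?_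
        exact Eventually.of_forall fun t => by rw [Real.norm_eq_abs]; exact hFbd t
      rw [ofReal_integral_eq_lintegral_ofReal hFi (Eventually.of_forall hF0)]
    have hxev : ∀ᶠ x in 𝓝 x₀, b < ∫⁻ t, ENNReal.ofReal (F t) ∂(Pm x) := by
      have ht : Tendsto (fun x => ∫⁻ t, ENNReal.ofReal (F t) ∂(Pm x)) (𝓝 x₀)
          (𝓝 (∫⁻ t, ENNReal.ofReal (F t) ∂(Pm x₀))) := by
        simp_rw [hFint]
        exact (ENNReal.continuous_ofReal.tendsto _).comp (hcx.tendsto x₀)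
      exact ht.eventually_const_lt hbm
    have hafin : a ≠ ∞ := ne_top_of_lt hab
    have hbfin : b ≠ ∞ := ne_top_of_lt hbm
    have hba : (0:ℝ≥0∞) < b - a := tsub_pos_of_lt hab
    set e := min (b - a) 1 with he
    have he0 : e ≠ 0 := (lt_min hba zero_lt_one).ne'
    have hefin : e ≠ ∞ := ((min_le_right _ _).trans_lt ENNReal.one_lt_top).ne
    have het : 0 < e.toReal := ENNReal.toReal_pos he0 hefin
    set δ : ℝ := e.toReal / (2 * ((m:ℝ) + 1)) with hδdef
    have hδ : 0 < δ := by positivity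
    have hmδ : ENNReal.ofReal ((m:ℝ) * δ) < b - a := by
      have hm0 : (0:ℝ) ≤ m := Nat.cast_nonneg m
      have h1 : (m:ℝ) * δ ≤ e.toReal / 2 := by
        rw [hδdef, ← mul_div_assoc]
        rw [div_le_div_iff₀ (by positivity) (by norm_num : (0:ℝ) < 2)]
        nlinarith [het.le]
      calc ENNReal.ofReal ((m:ℝ) * δ) ≤ ENNReal.ofReal (e.toReal / 2) :=
            ENNReal.ofReal_le_ofReal h1
        _ < ENNReal.ofReal e.toReal := (ENNReal.ofReal_lt_ofReal_iff het).2 (by linarith)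
        _ = e := ENNReal.ofReal_toReal hefin
        _ ≤ b - a := min_le_left _ _
    have hγev : ∀ᶠ γ in 𝓝 γ₀, dist γ γ₀ < δ := by
      filter_upwards [Metric.ball_mem_nhds γ₀ hδ] with γ hγ using hγ
    rw [nhds_prod_eq]
    filter_upwards [hγev.prod_mk hxev] with p hp
    obtain ⟨hp1, hp2⟩ := hp
    haveI := hPprob p.2
    set u := ENNReal.ofReal ((m:ℝ) * δ) with hu
    have hpt : ∀ t, ENNReal.ofReal (F t) - u ≤ ENNReal.ofReal (ψ y p.1 t) := by
      intro t
      have hm0 : (0:ℝ) ≤ m := Nat.cast_nonneg m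
      have h1 : F t - (m:ℝ) * δ ≤ myEnv ρ m (p.1, t) := by
        have hlp := myEnv_lip hρ0 m (γ₀, t) (p.1, t)
        have hdist : dist ((γ₀, t) : Γ × Θ) ((p.1, t) : Γ × Θ) = dist γ₀ p.1 := by
          rw [Prod.dist_eq]
          simp [dist_nonneg]
        rw [hdist] at hlp
        have hd' : dist γ₀ p.1 < δ := by rw [dist_comm]; exact hp1
        nlinarith
      have h2 : myEnv ρ m (p.1, t) ≤ ψ y p.1 t :=
        (myEnv_le hρ0 m _).trans (min_le_left _ _)
      calc ENNReal.ofReal (F t) - u = ENNReal.ofReal (F t - (m:ℝ) * δ) :=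
            (ENNReal.ofReal_sub _ (by positivity)).symm
        _ ≤ ENNReal.ofReal (ψ y p.1 t) := ENNReal.ofReal_le_ofReal (h1.trans h2)
    have hstep1 : ∫⁻ t, ENNReal.ofReal (F t) ∂(Pm p.2) - u ≤ G p.1 p.2 y := by
      calc ∫⁻ t, ENNReal.ofReal (F t) ∂(Pm p.2) - u
          = ∫⁻ t, ENNReal.ofReal (F t) ∂(Pm p.2) - ∫⁻ _, u ∂(Pm p.2) := by
            rw [lintegral_const, measure_univ, mul_one]
        _ ≤ ∫⁻ t, (ENNReal.ofReal (F t) - u) ∂(Pm p.2) :=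
            lintegral_sub_le _ _ measurable_const
        _ ≤ ∫⁻ t, ENNReal.ofReal (ψ y p.1 t) ∂(Pm p.2) := lintegral_mono hpt
    refine lt_of_lt_of_le ?_ hstep1
    rw [lt_tsub_iff_right]
    calc a + u < a + (b - a) := ENNReal.add_lt_add_left hafin hmδ
      _ = b := by rw [add_tsub_cancel_of_le hab.le]
      _ < _ := hp2
  -- main convergence
  have htend : Tendsto d (𝓝 (γ₀, x₀)) (𝓝 0) := by
    have hkey := tendsto_lintegral_filter_of_dominated_convergence (μ := νY)
      (l := 𝓝 (γ₀, x₀)) (F := fun p y => G γ₀ x₀ y - G p.1 p.2 y) (f := fun _ => 0)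
      (G γ₀ x₀) (Eventually.of_forall fun p => (hGmeas γ₀ x₀).sub (hGmeas p.1 p.2))
      (Eventually.of_forall fun p => Eventually.of_forall fun y => tsub_le_self)
      (by rw [hGint]; exact ENNReal.one_ne_top) ?_
    · simpa using hkey
    · filter_upwards [hGfin γ₀ x₀] with y hy
      rw [ENNReal.tendsto_nhds_zero]
      intro ε' hε'
      rcases le_or_gt (G γ₀ x₀ y) ε' with h | h
      · exact Eventually.of_forall fun p => le_trans tsub_le_self h
      · have hpos : G γ₀ x₀ y ≠ 0 := by
          intro h0'
          rw [h0'] at h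
          exact (not_lt.2 (zero_le (a := ε'))) h
        have ha : G γ₀ x₀ y - ε' < G γ₀ x₀ y :=
          ENNReal.sub_lt_self hy.ne hpos (ne_of_gt hε')
        filter_upwards [hlim y _ ha] with p hp
        rw [tsub_le_iff_right]
        have h2 := hp.le
        rw [tsub_le_iff_right] at h2
        rwa [add_comm]
  have hev := htend.eventually_lt_const (show (0:ℝ≥0∞) < ENNReal.ofReal ε from
    ENNReal.ofReal_pos.2 hε)
  filter_upwards [hev] with p hp B hB
  calc |(M p.1 p.2 B).toReal - (M γ₀ x₀ B).toReal| ≤ (d p).toReal := habs p B hB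
    _ < ε := ENNReal.toReal_lt_of_lt_ofReal hp
end

section
/- Let X, Y, Γ, Θ be Polish spaces, let ν_Y be a locally finite Borel measure on Y, and let ψ : Y × Γ × Θ → [0,∞) be continuous with ∫_Y ψ(y,γ,θ) dν_Y(y) = 1 for every (γ,θ). Suppose π_i : X → [0,∞) (i ∈ ℕ) are continuous with ∑_{i=1}^∞ π_i(x) = 1 for all x ∈ X and θ_i : X → Θ are continuous, and set G_x = ∑_{i=1}^∞ π_i(x) δ_{θ_i(x)}. Define M_{γ,x}(B) = ∫_B ∫_Θ ψ(y,γ,θ) dG_x(θ) dν_Y(y) for Borel B ⊂ Y. Then for every (γ₀,x₀) ∈ Γ × X, lim_{(γ,x)→(γ₀,x₀)} ‖M_{γ,x} − M_{γ₀,x₀}‖_TV = 0. -/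
open MeasureTheory Filter Topology

/-- Scheffé-type lemma along a countably generated filter: if nonnegative integrable
functions converge pointwise with convergent integrals, they converge in `L¹`. -/
lemma scheffe_aux {α ι : Type*} [MeasurableSpace α] {μ : Measure α} {l : Filter ι}
    [l.IsCountablyGenerated]
    (f : ι → α → ℝ) (g : α → ℝ)
    (hf_meas : ∀ i, AEStronglyMeasurable (f i) μ)
    (hgi : Integrable g μ)
    (hf0 : ∀ i x, 0 ≤ f i x) (hg0 : ∀ x, 0 ≤ g x)
    (hfi : ∀ i, Integrable (f i) μ)
    (hlim : ∀ x, Tendsto (fun i => f i x) l (𝓝 (g x)))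
    (hint : Tendsto (fun i => ∫ x, f i x ∂μ) l (𝓝 (∫ x, g x ∂μ))) :
    Tendsto (fun i => ∫ x, |f i x - g x| ∂μ) l (𝓝 0) := by
  have hmin_meas : ∀ i, AEStronglyMeasurable (fun x => min (f i x) (g x)) μ :=
    fun i => (hf_meas i).inf hgi.aestronglyMeasurable
  have hmin_int : ∀ i, Integrable (fun x => min (f i x) (g x)) μ := by
    intro i
    refine Integrable.mono hgi (hmin_meas i) ?_
    filter_upwards with x
    rw [Real.norm_eq_abs, Real.norm_eq_abs, abs_of_nonneg (le_min (hf0 i x) (hg0 x)),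
      abs_of_nonneg (hg0 x)]
    exact min_le_right _ _
  have hmin_tendsto : Tendsto (fun i => ∫ x, min (f i x) (g x) ∂μ) l (𝓝 (∫ x, g x ∂μ)) := by
    refine tendsto_integral_filter_of_dominated_convergence g
      (Eventually.of_forall hmin_meas) (Eventually.of_forall fun i => ?_) hgi
      (Eventually.of_forall fun x => ?_)
    · filter_upwards with x
      rw [Real.norm_eq_abs, abs_of_nonneg (le_min (hf0 i x) (hg0 x))]
      exact min_le_right _ _
    · have : Tendsto (fun i => min (f i x) (g x)) l (𝓝 (min (g x) (g x))) :=
        (hlim x).min tendsto_const_nhds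
      simpa using this
  have key : ∀ i, ∫ x, |f i x - g x| ∂μ
      = ∫ x, f i x ∂μ + ∫ x, g x ∂μ - 2 * ∫ x, min (f i x) (g x) ∂μ := by
    intro i
    have h1 : ∀ x, |f i x - g x| = f i x + g x - 2 * min (f i x) (g x) := by
      intro x
      rcases le_total (f i x) (g x) with h | h
      · rw [abs_of_nonpos (by linarith), min_eq_left h]; ring
      · rw [abs_of_nonneg (by linarith), min_eq_right h]; ring
    calc ∫ x, |f i x - g x| ∂μ
        = ∫ x, (f i x + g x - 2 * min (f i x) (g x)) ∂μ :=
          integral_congr_ae (Eventually.of_forall h1)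
      _ = ∫ x, f i x ∂μ + ∫ x, g x ∂μ - 2 * ∫ x, min (f i x) (g x) ∂μ := by
          have hs := integral_sub (μ := μ) (f := fun x => f i x + g x)
            (g := fun x => 2 * min (f i x) (g x)) ((hfi i).add hgi) ((hmin_int i).const_mul 2)
          rw [hs, integral_add (hfi i) hgi, MeasureTheory.integral_const_mul]
  have h2 := (hint.add (tendsto_const_nhds (α := ι) (x := ∫ x, g x ∂μ))).sub
    (hmin_tendsto.const_mul 2)
  have h3 : (∫ x, g x ∂μ + ∫ x, g x ∂μ - 2 * ∫ x, g x ∂μ) = 0 := by ring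
  rw [h3] at h2
  exact h2.congr fun i => (key i).symm

/-- **Total-variation continuity of the mixture induced by a continuous parameter DDP
(pathwise content of the Corollary to Theorem 9).**  With continuous weights `π i`
summing to one, continuous atoms `θ i`, `G_x = ∑' i, π i x • δ_{θ i x}`, a locally finite
Borel measure `ν_Y` on `Y` and a continuous nonnegative kernel `ψ` with
`∫ ψ(y,γ,θ) dν_Y(y) = 1`, the induced mixture
`M_{γ,x} = ν_Y.withDensity (y ↦ ∫ ψ(y,γ,θ) dG_x)` is continuous in total variation
at every `(γ₀,x₀)`. -/
theorem ddp_mixture_total_variation_continuity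
    {X Y Γ Θ : Type*} [TopologicalSpace X] [PolishSpace X]
    [TopologicalSpace Y] [PolishSpace Y] [MeasurableSpace Y] [BorelSpace Y]
    [TopologicalSpace Γ] [PolishSpace Γ]
    [TopologicalSpace Θ] [PolishSpace Θ] [MeasurableSpace Θ] [BorelSpace Θ]
    (νY : Measure Y) [IsLocallyFiniteMeasure νY]
    (ψ : Y → Γ → Θ → ℝ) (hψ0 : ∀ y γ t, 0 ≤ ψ y γ t)
    (hψc : Continuous fun p : Y × Γ × Θ => ψ p.1 p.2.1 p.2.2)
    (hψint : ∀ γ t, ∫ y, ψ y γ t ∂νY = 1)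
    (π : ℕ → X → ℝ) (θ : ℕ → X → Θ)
    (hπcont : ∀ i, Continuous (π i)) (hπ0 : ∀ i x, 0 ≤ π i x)
    (hπ1 : ∀ x, ∑' i, π i x = 1)
    (hθcont : ∀ i, Continuous (θ i))
    (G : X → Measure Θ)
    (hG : ∀ x, G x = Measure.sum (fun i => ENNReal.ofReal (π i x) • Measure.dirac (θ i x)))
    (M : Γ → X → Measure Y)
    (hM : ∀ γ x, M γ x =
      νY.withDensity fun y => ENNReal.ofReal (∫ t, ψ y γ t ∂(G x)))
    (γ₀ : Γ) (x₀ : X) (ε : ℝ) (hε : 0 < ε) :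
    ∀ᶠ p : Γ × X in 𝓝 (γ₀, x₀), ∀ B : Set Y, MeasurableSet B →
      |(M p.1 p.2 B).toReal - (M γ₀ x₀ B).toReal| < ε := by
  classical
  set p₀ : Γ × X := (γ₀, x₀) with hp₀
  -- the elementary densities
  set f : ℕ → Γ × X → Y → ℝ := fun i p y => π i p.2 * ψ y p.1 (θ i p.2) with hf
  -- continuity/measurability facts
  have hψcy : ∀ γ t, Continuous fun y => ψ y γ t := fun γ t =>
    hψc.comp (continuous_id.prodMk (continuous_const : Continuous fun _ : Y => ((γ, t) : Γ × Θ)))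
  have hψct : ∀ y γ, Continuous fun t => ψ y γ t := fun y γ =>
    hψc.comp (continuous_const.prodMk (continuous_const.prodMk continuous_id))
  have hfc : ∀ i p, Continuous (f i p) := fun i p => continuous_const.mul (hψcy p.1 (θ i p.2))
  have hf0 : ∀ i p y, 0 ≤ f i p y := fun i p y => mul_nonneg (hπ0 i p.2) (hψ0 y p.1 (θ i p.2))
  -- integrability of the kernel slices
  have hψI : ∀ γ t, Integrable (fun y => ψ y γ t) νY := by
    intro γ t
    by_contra h
    have h0 := integral_undef h
    rw [hψint γ t] at h0
    norm_num at h0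
  have hlint : ∀ γ t, ∫⁻ y, ENNReal.ofReal (ψ y γ t) ∂νY = 1 := by
    intro γ t
    rw [← ofReal_integral_eq_lintegral_ofReal (hψI γ t)
      (Eventually.of_forall fun y => hψ0 y γ t), hψint γ t, ENNReal.ofReal_one]
  have hfI : ∀ i p, Integrable (f i p) νY := fun i p => (hψI p.1 (θ i p.2)).const_mul _
  have hfint : ∀ i p, ∫ y, f i p y ∂νY = π i p.2 := by
    intro i p
    simp only [hf]
    rw [MeasureTheory.integral_const_mul, hψint p.1 (θ i p.2), mul_one]
  -- summability of the weights
  have hπsum : ∀ x, Summable fun i => π i x := by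
    intro x
    by_contra h
    have := tsum_eq_zero_of_not_summable h
    rw [hπ1 x] at this
    norm_num at this
  -- key representation of the mixture measure
  have hrep : ∀ p : Γ × X, ∀ B : Set Y, MeasurableSet B →
      M p.1 p.2 B = ∑' i, ENNReal.ofReal (∫ y in B, f i p y ∂νY) := by
    intro p B hB
    set F : Y → ENNReal := fun y => ∑' i, ENNReal.ofReal (f i p y) with hF
    have hFim : ∀ i, Measurable fun y => ENNReal.ofReal (f i p y) :=
      fun i => (hfc i p).measurable.ennreal_ofReal
    have hFmeas : Measurable F := Measurable.ennreal_tsum hFim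
    have hGl : ∀ y, ∫⁻ t, ENNReal.ofReal (ψ y p.1 t) ∂(G p.2) = F y := by
      intro y
      rw [hG p.2, lintegral_sum_measure]
      refine tsum_congr fun i => ?_
      rw [lintegral_smul_measure, lintegral_dirac' _ ((hψct y p.1).measurable.ennreal_ofReal),
        smul_eq_mul, ← ENNReal.ofReal_mul (hπ0 i p.2)]
    have hterm : ∀ i, ∫⁻ y, ENNReal.ofReal (f i p y) ∂νY = ENNReal.ofReal (π i p.2) := by
      intro i
      calc ∫⁻ y, ENNReal.ofReal (f i p y) ∂νY
          = ∫⁻ y, ENNReal.ofReal (π i p.2) * ENNReal.ofReal (ψ y p.1 (θ i p.2)) ∂νY := by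
            refine lintegral_congr fun y => ?_
            rw [← ENNReal.ofReal_mul (hπ0 i p.2)]
        _ = ENNReal.ofReal (π i p.2) * ∫⁻ y, ENNReal.ofReal (ψ y p.1 (θ i p.2)) ∂νY :=
            lintegral_const_mul _ ((hψcy p.1 (θ i p.2)).measurable.ennreal_ofReal)
        _ = ENNReal.ofReal (π i p.2) := by rw [hlint, mul_one]
    have hFint : ∫⁻ y, F y ∂νY = 1 := by
      rw [hF, lintegral_tsum fun i => (hFim i).aemeasurable, tsum_congr hterm,
        ← ENNReal.ofReal_tsum_of_nonneg (fun i => hπ0 i p.2) (hπsum p.2), hπ1,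
        ENNReal.ofReal_one]
    have hFae : ∀ᵐ y ∂νY, F y < ⊤ :=
      ae_lt_top hFmeas (by rw [hFint]; exact ENNReal.one_ne_top)
    have hdens : (fun y => ENNReal.ofReal (∫ t, ψ y p.1 t ∂(G p.2))) =ᵐ[νY] F := by
      filter_upwards [hFae] with y hy
      have hIt : Integrable (fun t => ψ y p.1 t) (G p.2) := by
        constructor
        · exact (hψct y p.1).aestronglyMeasurable
        · rw [hasFiniteIntegral_iff_ofReal (Eventually.of_forall (hψ0 y p.1)), hGl y]
          exact hy
      rw [ofReal_integral_eq_lintegral_ofReal hIt (Eventually.of_forall (hψ0 y p.1)), hGl y]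
    have hMF : M p.1 p.2 = νY.withDensity F := by
      rw [hM p.1 p.2]; exact withDensity_congr_ae hdens
    rw [hMF, withDensity_apply _ hB, hF,
      lintegral_tsum fun i => ((hFim i).aemeasurable.restrict)]
    refine tsum_congr fun i => ?_
    rw [ofReal_integral_eq_lintegral_ofReal ((hfI i p).restrict)
      (Eventually.of_forall fun y => hf0 i p y)]
  -- nonnegativity and bounds on set integrals
  have hset0 : ∀ (i : ℕ) (p : Γ × X) (B : Set Y), 0 ≤ ∫ y in B, f i p y ∂νY :=
    fun i p B => integral_nonneg fun y => hf0 i p y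
  have hsetle : ∀ (i : ℕ) (p : Γ × X) (B : Set Y), ∫ y in B, f i p y ∂νY ≤ π i p.2 :=
    fun i p B => (setIntegral_le_integral (hfI i p)
      (Eventually.of_forall fun y => hf0 i p y)).trans_eq (hfint i p)
  have hsumA : ∀ (p : Γ × X) (B : Set Y), Summable fun i => ∫ y in B, f i p y ∂νY :=
    fun p B => Summable.of_nonneg_of_le (fun i => hset0 i p B) (fun i => hsetle i p B)
      (hπsum p.2)
  -- real-valued representation
  have hMre : ∀ p : Γ × X, ∀ B : Set Y, MeasurableSet B →
      (M p.1 p.2 B).toReal = ∑' i, ∫ y in B, f i p y ∂νY := by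
    intro p B hB
    rw [hrep p B hB, ENNReal.tsum_toReal_eq fun i => ENNReal.ofReal_ne_top]
    exact tsum_congr fun i => ENNReal.toReal_ofReal (hset0 i p B)
  -- the L¹ distances
  set d : ℕ → Γ × X → ℝ := fun i p => ∫ y, |f i p y - f i p₀ y| ∂νY with hd
  have hd0 : ∀ i p, 0 ≤ d i p := fun i p => integral_nonneg fun y => abs_nonneg _
  have hdle : ∀ i p, d i p ≤ π i p.2 + π i x₀ := by
    intro i p
    have h1 : ∀ y, |f i p y - f i p₀ y| ≤ f i p y + f i p₀ y := fun y =>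
      (abs_sub _ _).trans (by
        rw [abs_of_nonneg (hf0 i p y), abs_of_nonneg (hf0 i p₀ y)])
    calc d i p ≤ ∫ y, (f i p y + f i p₀ y) ∂νY :=
          integral_mono ((hfI i p).sub (hfI i p₀)).abs ((hfI i p).add (hfI i p₀)) h1
      _ = π i p.2 + π i x₀ := by
          rw [integral_add (hfI i p) (hfI i p₀), hfint i p, hfint i p₀]
  have hdsum : ∀ p, Summable fun i => d i p := fun p =>
    Summable.of_nonneg_of_le (fun i => hd0 i p) (fun i => hdle i p)
      ((hπsum p.2).add (hπsum x₀))
  -- key estimate: TV difference bounded by ∑' d i p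
  have hkey : ∀ p : Γ × X, ∀ B : Set Y, MeasurableSet B →
      |(M p.1 p.2 B).toReal - (M γ₀ x₀ B).toReal| ≤ ∑' i, d i p := by
    intro p B hB
    have h0 : (M γ₀ x₀ B).toReal = ∑' i, ∫ y in B, f i p₀ y ∂νY := hMre p₀ B hB
    rw [hMre p B hB, h0, ← Summable.tsum_sub (hsumA p B) (hsumA p₀ B)]
    have habs : ∀ i, |(∫ y in B, f i p y ∂νY) - ∫ y in B, f i p₀ y ∂νY| ≤ d i p := by
      intro i
      rw [← integral_sub ((hfI i p).restrict) ((hfI i p₀).restrict)]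
      calc |∫ y in B, (f i p y - f i p₀ y) ∂νY|
          ≤ ∫ y in B, |f i p y - f i p₀ y| ∂νY := by
            simpa [Real.norm_eq_abs] using
              norm_integral_le_integral_norm (μ := νY.restrict B)
                (fun y => f i p y - f i p₀ y)
        _ ≤ d i p := setIntegral_le_integral ((hfI i p).sub (hfI i p₀)).abs
            (Eventually.of_forall fun y => abs_nonneg _)
    have hsumabs : Summable fun i =>
        |(∫ y in B, f i p y ∂νY) - ∫ y in B, f i p₀ y ∂νY| :=
      Summable.of_nonneg_of_le (fun i => abs_nonneg _) habs (hdsum p)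
    calc |∑' i, ((∫ y in B, f i p y ∂νY) - ∫ y in B, f i p₀ y ∂νY)|
        ≤ ∑' i, |(∫ y in B, f i p y ∂νY) - ∫ y in B, f i p₀ y ∂νY| := by
          simpa [Real.norm_eq_abs] using norm_tsum_le_tsum_norm
            (f := fun i => (∫ y in B, f i p y ∂νY) - ∫ y in B, f i p₀ y ∂νY)
            (by simpa [Real.norm_eq_abs] using hsumabs)
      _ ≤ ∑' i, d i p := Summable.tsum_le_tsum habs hsumabs (hdsum p)
  -- each d i tends to 0
  have hdtendsto : ∀ i, Tendsto (d i) (𝓝 p₀) (𝓝 0) := by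
    intro i
    have hcont : ∀ y, Continuous fun p : Γ × X => f i p y := fun y =>
      ((hπcont i).comp continuous_snd).mul
        (hψc.comp (continuous_const.prodMk
          (continuous_fst.prodMk ((hθcont i).comp continuous_snd))))
    refine scheffe_aux (fun p => f i p) (f i p₀)
      (fun p => (hfc i p).aestronglyMeasurable) (hfI i p₀)
      (fun p y => hf0 i p y) (fun y => hf0 i p₀ y) (fun p => hfI i p)
      (fun y => (hcont y).tendsto p₀) ?_
    have : Tendsto (fun p : Γ × X => π i p.2) (𝓝 p₀) (𝓝 (π i x₀)) :=
      ((hπcont i).comp continuous_snd).tendsto p₀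
    simp only [hfint]
    exact this
  -- choose the truncation level
  have hpartial : Tendsto (fun N => ∑ i ∈ Finset.range N, π i x₀) atTop (𝓝 1) := by
    have := (hπsum x₀).hasSum.tendsto_sum_nat
    rwa [hπ1 x₀] at this
  obtain ⟨N, hN⟩ := (hpartial.eventually (eventually_gt_nhds
    (by linarith : 1 - ε / 8 < 1))).exists
  set S₀ : ℝ := ∑ i ∈ Finset.range N, π i x₀ with hS₀
  -- eventual estimates
  have hScont : Continuous fun p : Γ × X => ∑ i ∈ Finset.range N, π i p.2 :=
    continuous_finset_sum _ fun i _ => (hπcont i).comp continuous_snd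
  have hE1 : ∀ᶠ p : Γ × X in 𝓝 p₀, S₀ - ε / 8 < ∑ i ∈ Finset.range N, π i p.2 :=
    (hScont.tendsto p₀).eventually (eventually_gt_nhds (by linarith))
  have hE2 : ∀ᶠ p : Γ × X in 𝓝 p₀, ∀ i ∈ Finset.range N, d i p < ε / (4 * (N + 1)) := by
    rw [eventually_all_finset]
    intro i _
    exact (hdtendsto i).eventually (eventually_lt_nhds
      (by positivity : (0:ℝ) < ε / (4 * (N + 1))))
  filter_upwards [hE1, hE2] with p h1 h2
  intro B hB
  refine lt_of_le_of_lt (hkey p B hB) ?_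
  -- estimate ∑' d i p
  have htail_eq : ∀ x : X, ∑' i, π (i + N) x = 1 - ∑ i ∈ Finset.range N, π i x := by
    intro x
    have := Summable.sum_add_tsum_nat_add (f := fun i => π i x) N (hπsum x)
    rw [hπ1 x] at this
    linarith
  have hsplit := Summable.sum_add_tsum_nat_add (f := fun i => d i p) N (hdsum p)
  have hdshift : Summable fun i => d (i + N) p := (summable_nat_add_iff N).2 (hdsum p)
  have hπshift : ∀ x : X, Summable fun i => π (i + N) x :=
    fun x => (summable_nat_add_iff N).2 (hπsum x)
  have htail_le : ∑' i, d (i + N) p ≤ (1 - ∑ i ∈ Finset.range N, π i p.2) + (1 - S₀) := by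
    calc ∑' i, d (i + N) p ≤ ∑' i, (π (i + N) p.2 + π (i + N) x₀) :=
          Summable.tsum_le_tsum (fun i => hdle (i + N) p) hdshift
            ((hπshift p.2).add (hπshift x₀))
      _ = (∑' i, π (i + N) p.2) + ∑' i, π (i + N) x₀ :=
          Summable.tsum_add (hπshift p.2) (hπshift x₀)
      _ = (1 - ∑ i ∈ Finset.range N, π i p.2) + (1 - S₀) := by
          rw [htail_eq p.2, htail_eq x₀]
  have hhead_le : ∑ i ∈ Finset.range N, d i p ≤ ε / 4 := by
    calc ∑ i ∈ Finset.range N, d i p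
        ≤ ∑ _i ∈ Finset.range N, ε / (4 * (N + 1)) :=
          Finset.sum_le_sum fun i hi => (h2 i hi).le
      _ = N * (ε / (4 * (N + 1))) := by
          rw [Finset.sum_const, Finset.card_range, nsmul_eq_mul]
      _ = ε * ((N : ℝ) / (4 * (N + 1))) := by ring
      _ ≤ ε * (1 / 4) := by
          refine mul_le_mul_of_nonneg_left ?_ hε.le
          rw [div_le_div_iff₀ (by positivity) (by norm_num : (0:ℝ) < 4)]
          nlinarith [Nat.cast_nonneg (α := ℝ) N]
      _ = ε / 4 := by ring
  have hfin : ∑' i, d i p < ε := by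
    rw [← hsplit]
    have : (1 - ∑ i ∈ Finset.range N, π i p.2) + (1 - S₀) < ε / 4 + ε / 8 := by
      have hA : 1 - S₀ < ε / 8 := by simp only [hS₀]; linarith
      have hB' : 1 - ∑ i ∈ Finset.range N, π i p.2 < ε / 4 := by linarith
      linarith
    linarith [htail_le, hhead_le]
  exact hfin
end

section
/- Let X, Y, Γ, Θ be Polish spaces and let ψ : Y × Γ × Θ → [0,∞) be continuous. Suppose that for every (y₀,γ₀) ∈ Y × Γ and every ε > 0 there exist open neighborhoods U_{y₀} ∋ y₀, U_{γ₀} ∋ γ₀ and a compact K ⊂ Θ with ψ(y,γ,θ) < ε for all (y,γ,θ) ∈ U_{y₀} × U_{γ₀} × (Θ∖K). Then for every compact K_{YΓ} ⊂ Y × Γ and every ε > 0 there exist an open set U ⊇ K_{YΓ} and δ > 0 such that for all (y,γ), (y',γ') ∈ U with d_{Y×Γ}((y,γ),(y',γ')) < δ, and for every weakly continuous P : X → P(Θ), sup_{x∈X} | ∫_Θ ψ(y',γ',θ) dP_x(θ) − ∫_Θ ψ(y,γ,θ) dP_x(θ) | < ε. -/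
open MeasureTheory Filter Topology TopologicalSpace

/-- **Uniform equicontinuity of the mixture density (Lemma 4, part 1).**
Let `ψ : Y × Γ × Θ → [0,∞)` be a continuous kernel which, near every point of `Y × Γ`,
decays at infinity in `θ`.  Then for every compact `K ⊆ Y × Γ` and every `ε > 0` there
are an open `U ⊇ K` and `δ > 0` such that for all pairs of points of `U` at distance
less than `δ` and every weakly continuous family of probability measures
`P : X → P(Θ)`, the mixture densities differ by less than `ε` uniformly in `x ∈ X`. -/
theorem mixture_density_uniform_equicontinuity
    {X Y Γ Θ : Type*} [TopologicalSpace X] [PolishSpace X]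
    [MetricSpace Y] [SeparableSpace Y] [CompleteSpace Y]
    [MetricSpace Γ] [SeparableSpace Γ] [CompleteSpace Γ]
    [TopologicalSpace Θ] [PolishSpace Θ] [MeasurableSpace Θ] [BorelSpace Θ]
    (ψ : Y → Γ → Θ → ℝ) (hψ0 : ∀ y γ t, 0 ≤ ψ y γ t)
    (hψc : Continuous fun p : Y × Γ × Θ => ψ p.1 p.2.1 p.2.2)
    (hdecay : ∀ (y₀ : Y) (γ₀ : Γ) (ε : ℝ), 0 < ε →
      ∃ (Uy : Set Y) (Ug : Set Γ) (KΘ : Set Θ),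
        IsOpen Uy ∧ y₀ ∈ Uy ∧ IsOpen Ug ∧ γ₀ ∈ Ug ∧ IsCompact KΘ ∧
        ∀ y ∈ Uy, ∀ γ ∈ Ug, ∀ t ∉ KΘ, ψ y γ t < ε)
    (K : Set (Y × Γ)) (hK : IsCompact K) (ε : ℝ) (hε : 0 < ε) :
    ∃ (U : Set (Y × Γ)) (δ : ℝ), IsOpen U ∧ K ⊆ U ∧ 0 < δ ∧
      ∀ p ∈ U, ∀ p' ∈ U, dist p p' < δ →
        ∀ Pm : X → Measure Θ, (∀ x, IsProbabilityMeasure (Pm x)) →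
          (∀ f : Θ → ℝ, Continuous f → (∃ C, ∀ t, |f t| ≤ C) →
            Continuous fun x => ∫ t, f t ∂(Pm x)) →
          ∀ x : X,
            |∫ t, ψ (p'.1) (p'.2) t ∂(Pm x) - ∫ t, ψ (p.1) (p.2) t ∂(Pm x)| < ε := by
  have hε8 : 0 < ε / 8 := by linarith
  -- the uncurried kernel on `(Y × Γ) × Θ`
  have hΦ : Continuous fun q : (Y × Γ) × Θ => ψ q.1.1 q.1.2 q.2 :=
    hψc.comp ((continuous_fst.comp continuous_fst).prodMk
      ((continuous_snd.comp continuous_fst).prodMk continuous_snd))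
  -- Step 1: decay rectangles around every point
  have h1 : ∀ k : Y × Γ, ∃ R : Set (Y × Γ), ∃ C : Set Θ,
      IsOpen R ∧ k ∈ R ∧ IsCompact C ∧ ∀ p ∈ R, ∀ t ∉ C, ψ p.1 p.2 t < ε / 8 := by
    intro k
    obtain ⟨Uy, Ug, C, hUy, hky, hUg, hkg, hC, hd⟩ := hdecay k.1 k.2 (ε / 8) hε8
    exact ⟨Uy ×ˢ Ug, C, hUy.prod hUg, ⟨hky, hkg⟩, hC,
      fun p hp t ht => hd p.1 hp.1 p.2 hp.2 t ht⟩
  choose R C hRo hRk hCc hRd using h1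
  -- Step 2: uniform continuity near each point, over its compact set
  have h2 : ∀ k : Y × Γ, ∃ r : ℝ, 0 < r ∧
      ∀ p : Y × Γ, dist p k < 2 * r → ∀ t ∈ C k,
        |ψ p.1 p.2 t - ψ k.1 k.2 t| < ε / 8 := by
    intro k
    set n : Set ((Y × Γ) × Θ) :=
      {q | |ψ q.1.1 q.1.2 q.2 - ψ k.1 k.2 q.2| < ε / 8} with hn
    have hcont : Continuous fun q : (Y × Γ) × Θ =>
        |ψ q.1.1 q.1.2 q.2 - ψ k.1 k.2 q.2| := by
      apply Continuous.abs
      exact hΦ.sub (hΦ.comp (continuous_const.prodMk continuous_snd))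
    have hno : IsOpen n := isOpen_lt hcont continuous_const
    have hsub : ({k} : Set (Y × Γ)) ×ˢ C k ⊆ n := by
      rintro ⟨p, t⟩ ⟨hp, ht⟩
      simp only [Set.mem_singleton_iff] at hp
      subst hp
      simp [hn, hε8]
    obtain ⟨u, v, huo, _, hku, hCv, huv⟩ :=
      generalized_tube_lemma isCompact_singleton (hCc k) hno hsub
    obtain ⟨r, hr, hball⟩ := Metric.isOpen_iff.mp huo k (hku rfl)
    refine ⟨r / 2, by linarith, fun p hp t ht => ?_⟩
    have hpu : p ∈ u := hball (by rw [Metric.mem_ball]; linarith)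
    exact huv (Set.mk_mem_prod hpu (hCv ht))
  choose r hr hr2 using h2
  -- Step 3: bound of the kernel at each point over its compact set
  have h3 : ∀ k : Y × Γ, ∃ M : ℝ, 0 ≤ M ∧ ∀ t ∈ C k, ψ k.1 k.2 t ≤ M := by
    intro k
    have hcont : Continuous fun t : Θ => ψ k.1 k.2 t :=
      hΦ.comp (continuous_const.prodMk continuous_id)
    obtain ⟨M, hM⟩ := ((hCc k).image hcont).bddAbove
    exact ⟨max M 0, le_max_right _ _,
      fun t ht => le_trans (hM ⟨t, ht, rfl⟩) (le_max_left _ _)⟩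
  choose M hM0 hM using h3
  -- the covering neighborhoods
  have hVnhds : ∀ k ∈ K, Metric.ball k (r k) ∩ R k ∈ 𝓝 k := by
    intro k _
    exact Filter.inter_mem (Metric.ball_mem_nhds k (hr k)) ((hRo k).mem_nhds (hRk k))
  obtain ⟨s, hsK, hscov⟩ := hK.elim_nhds_subcover (fun k => Metric.ball k (r k) ∩ R k) hVnhds
  rcases s.eq_empty_or_nonempty with hs0 | hsne
  · -- then K is empty
    refine ⟨∅, 1, isOpen_empty, ?_, one_pos, ?_⟩
    · intro p hp
      have := hscov hp
      simp [hs0] at this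
    · intro p hp
      simp at hp
  · -- main case
    refine ⟨⋃ k ∈ s, Metric.ball k (r k) ∩ R k, s.inf' hsne r,
      isOpen_biUnion fun k _ => Metric.isOpen_ball.inter (hRo k), hscov,
      (Finset.lt_inf'_iff hsne).mpr fun k _ => hr k, ?_⟩
    intro p hp p' hp' hdist Pm hPm _ x
    haveI := hPm x
    simp only [Set.mem_iUnion] at hp hp'
    obtain ⟨k, hk, hpb, hpR⟩ := hp
    obtain ⟨k', hk', hpb', hpR'⟩ := hp'
    have hδk : s.inf' hsne r ≤ r k := Finset.inf'_le _ hk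
    have hδk' : s.inf' hsne r ≤ r k' := Finset.inf'_le _ hk'
    rw [Metric.mem_ball] at hpb hpb'
    have hrk := hr k
    have hrk' := hr k'
    -- both points are within 2 r k of k and 2 r k' of k'
    have hpk : dist p k < 2 * r k := by linarith
    have hp'k : dist p' k < 2 * r k :=
      lt_of_le_of_lt (dist_triangle p' p k) (by rw [dist_comm p' p]; linarith)
    have hpk' : dist p k' < 2 * r k' :=
      lt_of_le_of_lt (dist_triangle p p' k') (by linarith)
    have hp'k' : dist p' k' < 2 * r k' := by linarith
    -- pointwise estimate
    have key : ∀ t : Θ, |ψ p'.1 p'.2 t - ψ p.1 p.2 t| ≤ ε / 4 := by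
      intro t
      by_cases htk : t ∈ C k
      · have h1' := hr2 k p hpk t htk
        have h2' := hr2 k p' hp'k t htk
        rw [abs_sub_lt_iff] at h1' h2'
        rw [abs_sub_le_iff]
        constructor <;> linarith
      · by_cases htk' : t ∈ C k'
        · have h1' := hr2 k' p hpk' t htk'
          have h2' := hr2 k' p' hp'k' t htk'
          rw [abs_sub_lt_iff] at h1' h2'
          rw [abs_sub_le_iff]
          constructor <;> linarith
        · have h1' := hRd k p hpR t htk
          have h2' := hRd k' p' hpR' t htk'
          have h3' := hψ0 p.1 p.2 t
          have h4' := hψ0 p'.1 p'.2 t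
          rw [abs_sub_le_iff]
          constructor <;> linarith
    -- integrability of both integrands
    have hbound : ∀ (q : Y × Γ) (kq : Y × Γ), dist q kq < 2 * r kq → q ∈ R kq →
        ∀ t : Θ, ‖ψ q.1 q.2 t‖ ≤ M kq + ε / 8 := by
      intro q kq hqk hqR t
      rw [Real.norm_eq_abs, abs_of_nonneg (hψ0 _ _ _)]
      by_cases ht : t ∈ C kq
      · have := hr2 kq q hqk t ht
        rw [abs_sub_lt_iff] at this
        have := hM kq t ht
        linarith
      · have := hRd kq q hqR t ht
        have := hM0 kq
        linarith
    have hint : ∀ (q : Y × Γ) (kq : Y × Γ), dist q kq < 2 * r kq → q ∈ R kq →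
        Integrable (fun t => ψ q.1 q.2 t) (Pm x) := by
      intro q kq hqk hqR
      refine ⟨(hΦ.comp (continuous_const.prodMk continuous_id)).aestronglyMeasurable, ?_⟩
      exact HasFiniteIntegral.of_bounded
        (C := M kq + ε / 8) (Filter.Eventually.of_forall (hbound q kq hqk hqR))
    have hintp := hint p k hpk hpR
    have hintp' := hint p' k' hp'k' hpR'
    -- conclude
    have hdiff : (∫ t, ψ p'.1 p'.2 t ∂(Pm x)) - (∫ t, ψ p.1 p.2 t ∂(Pm x))
        = ∫ t, (ψ p'.1 p'.2 t - ψ p.1 p.2 t) ∂(Pm x) := (integral_sub hintp' hintp).symm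
    rw [hdiff, ← Real.norm_eq_abs]
    calc ‖∫ t, (ψ p'.1 p'.2 t - ψ p.1 p.2 t) ∂(Pm x)‖
        ≤ ε / 4 * ((Pm x) Set.univ).toReal :=
          norm_integral_le_of_norm_le_const
            (Filter.Eventually.of_forall fun t => by
              rw [Real.norm_eq_abs]; exact key t)
      _ < ε := by
          simp [measure_univ]
          linarith
end
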